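/- arXiv:2601.02742 — 9 statements merged into one kernel-verified Lean document; each statement's English description precedes it below -/
import Mathlib

section
/- Let n ≥ 4 and let R be an algebraic curvature tensor. Define D := R − g∧Ric + (1/4)(g∧g)Scal. Then R can be recovered from D by R = D − (1/(n−3)) g∧(c D) + (1/(2(n−2)(n−3))) (g∧g)·(c² D), where (c D)_{jl} = Σ_i D_{ijil} and c² D = Σ_{i,j} D_{ijij}. -/
open Finset

namespace DD

noncomputable section

/-- Components of the metric in an orthonormal basis. -/
def gE (n : ℕ) (i j : Fin n) : ℝ := if i = j then 1 else 0

/-- Ricci contraction of a (0,4)-tensor given by components. -/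
def ricci {n : ℕ} (R : Fin n → Fin n → Fin n → Fin n → ℝ) (j l : Fin n) : ℝ :=
  ∑ i, R i j i l

/-- Scalar curvature. -/
def scal {n : ℕ} (R : Fin n → Fin n → Fin n → Fin n → ℝ) : ℝ :=
  ∑ j, ricci R j j

/-- Kulkarni–Nomizu product of two symmetric bilinear forms (components). -/
def KN {n : ℕ} (a b : Fin n → Fin n → ℝ) (i j k l : Fin n) : ℝ :=
  a i k * b j l - a i l * b j k + a j l * b i k - a j k * b i l

/-- The double dual (Ruse–Lanczos expression) D = R − g∧Ric + (1/4)(g∧g)·Scal. -/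
def dd {n : ℕ} (R : Fin n → Fin n → Fin n → Fin n → ℝ) (i j k l : Fin n) : ℝ :=
  R i j k l - KN (gE n) (ricci R) i j k l
    + (1/2 : ℝ) * (gE n i k * gE n j l - gE n i l * gE n j k) * scal R

/-- Composition product of (2,2) double forms: composition of the induced
endomorphisms of Λ²V (with the convention 𝓡(e_i∧e_j) = Σ_{k<l} R_{ijkl} e_k∧e_l). -/
def comp {n : ℕ} (S T : Fin n → Fin n → Fin n → Fin n → ℝ) (i j k l : Fin n) : ℝ :=
  (1/2 : ℝ) * ∑ p, ∑ q, S i j p q * T p q k l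

/-- Generalized Kronecker delta with 4 upper and 4 lower indices:
the determinant of the 4×4 matrix of Kronecker deltas. -/
def gkdelta {n : ℕ} (u v : Fin 4 → Fin n) : ℝ :=
  Matrix.det (Matrix.of fun a b : Fin 4 => if u a = v b then (1 : ℝ) else 0)

/-- Levi–Civita symbol in dimension 4. -/
def eps (i j k l : Fin 4) : ℝ :=
  Matrix.det (Matrix.of fun a b : Fin 4 => if ![i,j,k,l] a = b then (1 : ℝ) else 0)

lemma sum_gE_diag {n : ℕ} (c : ℝ) : ∑ m : Fin n, gE n m m * c = n * c := by
  simp [gE, Finset.sum_const, mul_comm]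

lemma sum_gE_l {n : ℕ} (f : Fin n → ℝ) (l : Fin n) : ∑ m, gE n m l * f m = f l := by
  simp [gE, ite_mul, Finset.sum_ite_eq']

lemma sum_gE_r {n : ℕ} (f : Fin n → ℝ) (l : Fin n) : ∑ m, gE n l m * f m = f l := by
  simp [gE, ite_mul, Finset.sum_ite_eq]

lemma ricci_dd {n : ℕ} (R : Fin n → Fin n → Fin n → Fin n → ℝ) (j l : Fin n) :
    (∑ m, dd R m j m l) = -((n:ℝ)-3) * ricci R j l + (((n:ℝ)-3)/2) * scal R * gE n j l := by
  have key : ∀ m, dd R m j m l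
      = R m j m l - gE n m m * ricci R j l + gE n m l * ricci R j m
        - gE n j l * ricci R m m + gE n j m * ricci R m l
        + gE n m m * (gE n j l * scal R / 2) - gE n m l * (gE n j m * scal R / 2) := by
    intro m; simp only [dd, KN]; ring
  rw [Finset.sum_congr rfl (fun m _ => key m)]
  simp only [Finset.sum_sub_distrib, Finset.sum_add_distrib, sum_gE_diag, sum_gE_l,
    ← Finset.mul_sum]
  rw [sum_gE_r (fun m => ricci R m l) j]
  have h1 : (∑ m, R m j m l) = ricci R j l := rfl
  have h2 : (∑ m, ricci R m m) = scal R := rfl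
  rw [h1, h2]
  ring

lemma scal_dd {n : ℕ} (R : Fin n → Fin n → Fin n → Fin n → ℝ) :
    (∑ a, ∑ b, dd R a b a b) = ((n:ℝ)-3)*((n:ℝ)-2)/2 * scal R := by
  rw [Finset.sum_comm]
  simp only [ricci_dd]
  simp only [Finset.sum_add_distrib, ← Finset.mul_sum]
  have h2 : (∑ m, ricci R m m) = scal R := rfl
  rw [h2, show (∑ i : Fin n, gE n i i) = (n:ℝ) from by simp [gE]]
  ring

/-- R is recovered from its double dual D by
R = D − (1/(n−3)) g∧(cD) + (1/(2(n−2)(n−3))) (g∧g)·(c²D). -/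
theorem recover_R_from_double_dual {n : ℕ} (hn : 4 ≤ n)
    (R : Fin n → Fin n → Fin n → Fin n → ℝ)
    (hA : ∀ i j k l, R i j k l = - R j i k l)
    (hA' : ∀ i j k l, R i j k l = - R i j l k)
    (hP : ∀ i j k l, R i j k l = R k l i j)
    (hB : ∀ i j k l, R i j k l + R j k i l + R k i j l = 0) :
    ∀ i j k l : Fin n,
      R i j k l
        = dd R i j k l
          - (1 / ((n : ℝ) - 3)) * KN (gE n) (fun a b => ∑ m, dd R m a m b) i j k l
          + (1 / (2 * ((n : ℝ) - 2) * ((n : ℝ) - 3))) * (∑ a, ∑ b, dd R a b a b)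
              * KN (gE n) (gE n) i j k l := by
  intro i j k l
  have h4 : (4:ℝ) ≤ (n:ℝ) := by exact_mod_cast hn
  have h3 : (n:ℝ) - 3 ≠ 0 := by linarith
  have h2 : (n:ℝ) - 2 ≠ 0 := by linarith
  rw [scal_dd]
  simp only [KN]
  simp only [ricci_dd]
  simp only [dd, KN]
  field_simp
  ring

end
end DD
end

section
/- Let n ≥ 5 and let R be an algebraic curvature tensor on an n-dimensional inner product space. If the sectional-curvature-type function s₂(P) := 2 Σ over orthonormal pairs in the orthogonal complement of the 2-plane P of sectional curvatures (equivalently s₂(e₁,e₂) = Scal − 2Ric(e₁,e₁) − 2Ric(e₂,e₂) + 2K(e₁,e₂)) vanishes for all 2-planes P, then R = 0. -/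
open Finset

namespace DD

noncomputable section

section Helpers
variable {n : ℕ}

lemma inner_single' (i j : Fin n) :
    (inner ℝ (EuclideanSpace.single i (1:ℝ)) (EuclideanSpace.single j (1:ℝ)) : ℝ)
      = if i = j then 1 else 0 := by
  simp [EuclideanSpace.inner_single_left, EuclideanSpace.single_apply, eq_comm]

lemma c2' : (Real.sqrt 2)⁻¹ * (Real.sqrt 2)⁻¹ = 1/2 := by
  rw [← mul_inv, Real.mul_self_sqrt (by norm_num : (0:ℝ) ≤ 2)]; norm_num

lemma inner_comb_self (a b : Fin n) (hab : a ≠ b) :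
    (inner ℝ ((Real.sqrt 2)⁻¹ • (EuclideanSpace.single a (1:ℝ) + EuclideanSpace.single b 1))
      ((Real.sqrt 2)⁻¹ • (EuclideanSpace.single a (1:ℝ) + EuclideanSpace.single b 1)) : ℝ) = 1 := by
  rw [real_inner_smul_left, real_inner_smul_right, inner_add_left, inner_add_right,
    inner_add_right]
  simp only [inner_single', hab, hab.symm, eq_self_iff_true, ↓reduceIte]
  linear_combination 2 * (c2' : (Real.sqrt 2)⁻¹ * (Real.sqrt 2)⁻¹ = 1/2)

lemma inner_comb_single (a b c : Fin n) (hac : a ≠ c) (hbc : b ≠ c) :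
    (inner ℝ ((Real.sqrt 2)⁻¹ • (EuclideanSpace.single a (1:ℝ) + EuclideanSpace.single b 1))
      (EuclideanSpace.single c (1:ℝ)) : ℝ) = 0 := by
  simp [real_inner_smul_left, inner_add_left, inner_single', hac, hbc, hac.symm, hbc.symm]

lemma inner_comb_comb (a b c d : Fin n) (h1 : a ≠ c) (h2 : a ≠ d) (h3 : b ≠ c) (h4 : b ≠ d) :
    (inner ℝ ((Real.sqrt 2)⁻¹ • (EuclideanSpace.single a (1:ℝ) + EuclideanSpace.single b 1))
      ((Real.sqrt 2)⁻¹ • (EuclideanSpace.single c (1:ℝ) + EuclideanSpace.single d 1)) : ℝ) = 0 := by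
  simp [real_inner_smul_left, real_inner_smul_right, inner_add_left, inner_add_right,
    inner_single', h1, h2, h3, h4, h1.symm, h2.symm, h3.symm, h4.symm]

end Helpers


noncomputable def rc {n : ℕ} (R : EuclideanSpace ℝ (Fin n) →ₗ[ℝ] EuclideanSpace ℝ (Fin n) →ₗ[ℝ]
         EuclideanSpace ℝ (Fin n) →ₗ[ℝ] EuclideanSpace ℝ (Fin n) →ₗ[ℝ] ℝ)
    (i j k l : Fin n) : ℝ :=
  R (EuclideanSpace.single i 1) (EuclideanSpace.single j 1)
    (EuclideanSpace.single k 1) (EuclideanSpace.single l 1)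

noncomputable def RIC {n : ℕ} (R : EuclideanSpace ℝ (Fin n) →ₗ[ℝ] EuclideanSpace ℝ (Fin n) →ₗ[ℝ]
         EuclideanSpace ℝ (Fin n) →ₗ[ℝ] EuclideanSpace ℝ (Fin n) →ₗ[ℝ] ℝ)
    (j l : Fin n) : ℝ := ∑ i, rc R i j i l

noncomputable def SS {n : ℕ} (R : EuclideanSpace ℝ (Fin n) →ₗ[ℝ] EuclideanSpace ℝ (Fin n) →ₗ[ℝ]
         EuclideanSpace ℝ (Fin n) →ₗ[ℝ] EuclideanSpace ℝ (Fin n) →ₗ[ℝ] ℝ) : ℝ :=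
  ∑ j, RIC R j j

theorem comps (n : ℕ) (hn : 5 ≤ n)
    (R : EuclideanSpace ℝ (Fin n) →ₗ[ℝ] EuclideanSpace ℝ (Fin n) →ₗ[ℝ]
         EuclideanSpace ℝ (Fin n) →ₗ[ℝ] EuclideanSpace ℝ (Fin n) →ₗ[ℝ] ℝ)
    (hA : ∀ x y z w, R x y z w = - R y x z w)
    (hA' : ∀ x y z w, R x y z w = - R x y w z)
    (hP : ∀ x y z w, R x y z w = R z w x y)
    (hB : ∀ x y z w, R x y z w + R y z x w + R z x y w = 0)
    (h2 : ∀ x y : EuclideanSpace ℝ (Fin n),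
      (inner ℝ x x : ℝ) = 1 → (inner ℝ y y : ℝ) = 1 → (inner ℝ x y : ℝ) = 0 →
        (∑ i, ∑ j, R (EuclideanSpace.single i 1) (EuclideanSpace.single j 1)
            (EuclideanSpace.single i 1) (EuclideanSpace.single j 1))
          - 2 * (∑ i, R (EuclideanSpace.single i 1) x (EuclideanSpace.single i 1) x)
          - 2 * (∑ i, R (EuclideanSpace.single i 1) y (EuclideanSpace.single i 1) y)
          + 2 * R x y x y = 0) :
    ∀ i j k l, rc R i j k l = 0 := by
  have hn' : (5:ℝ) ≤ (n:ℝ) := by exact_mod_cast hn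
  have hfold : ∀ i j k l : Fin n,
      R (EuclideanSpace.single i 1) (EuclideanSpace.single j 1)
        (EuclideanSpace.single k 1) (EuclideanSpace.single l 1) = rc R i j k l :=
    fun _ _ _ _ => rfl
  -- component symmetries
  have sA : ∀ i j k l, rc R i j k l = - rc R j i k l := fun i j k l => hA _ _ _ _
  have sA' : ∀ i j k l, rc R i j k l = - rc R i j l k := fun i j k l => hA' _ _ _ _
  have sP : ∀ i j k l, rc R i j k l = rc R k l i j := fun i j k l => hP _ _ _ _
  have sB : ∀ i j k l, rc R i j k l + rc R j k i l + rc R k i j l = 0 :=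
    fun i j k l => hB _ _ _ _
  have sPP : ∀ i j k l, rc R i j k l = rc R j i l k := by
    intro i j k l; rw [sA i j k l, sA' j i k l]; ring
  have r_diag1 : ∀ i k l, rc R i i k l = 0 := by
    intro i k l; have := sA i i k l; linarith
  have r_diag2 : ∀ i j k, rc R i j k k = 0 := by
    intro i j k; have := sA' i j k k; linarith
  have ricsym : ∀ a b, RIC R a b = RIC R b a := by
    intro a b
    exact Finset.sum_congr rfl fun i _ => sP i a i b
  have hSS : (∑ i, ∑ j, rc R i j i j) = SS R := Finset.sum_comm
  have hy : ∀ a : Fin n, (∑ i, rc R i a i a) = RIC R a a := fun _ => rfl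
  -- stage A
  have hdiag : ∀ a b : Fin n, a ≠ b →
      SS R - 2 * RIC R a a - 2 * RIC R b b + 2 * rc R a b a b = 0 := by
    intro a b hab
    have H := h2 (EuclideanSpace.single a 1) (EuclideanSpace.single b 1)
      (by simp [inner_single']) (by simp [inner_single']) (by simp [inner_single', hab, Ne.symm hab])
    simp only [hfold] at H
    rw [hSS, hy a, hy b] at H
    linarith
  have rowsum : ∀ a : Fin n, ∑ b, rc R a b a b = RIC R a a := by
    intro a
    exact Finset.sum_congr rfl fun b _ => sPP a b a b
  have S_eq : SS R = ∑ a, RIC R a a := rfl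
  have key1 : ∀ a : Fin n, ((n:ℝ) - 3) * SS R = 2 * ((n:ℝ) - 3) * RIC R a a := by
    intro a
    have hsum : ∑ b ∈ univ.erase a,
        (SS R - 2 * RIC R a a - 2 * RIC R b b + 2 * rc R a b a b) = 0 :=
      Finset.sum_eq_zero fun b hb => hdiag a b (Finset.ne_of_mem_erase hb).symm
    have e1 : ∑ _b ∈ univ.erase a, (SS R - 2 * RIC R a a)
        = ((n:ℝ)-1) * (SS R - 2 * RIC R a a) := by
      rw [Finset.sum_const, Finset.card_erase_of_mem (Finset.mem_univ a), Finset.card_univ,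
        Fintype.card_fin, nsmul_eq_mul, Nat.cast_sub (by omega : 1 ≤ n), Nat.cast_one]
    have e2 : ∑ b ∈ univ.erase a, RIC R b b = SS R - RIC R a a := by
      rw [Finset.sum_erase_eq_sub (Finset.mem_univ a), ← S_eq]
    have e3 : ∑ b ∈ univ.erase a, rc R a b a b = RIC R a a := by
      rw [Finset.sum_erase_eq_sub (Finset.mem_univ a), rowsum, r_diag1, sub_zero]
    have split : ∑ b ∈ univ.erase a,
        (SS R - 2 * RIC R a a - 2 * RIC R b b + 2 * rc R a b a b)
        = (∑ _b ∈ univ.erase a, (SS R - 2 * RIC R a a))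
          - 2 * (∑ b ∈ univ.erase a, RIC R b b)
          + 2 * (∑ b ∈ univ.erase a, rc R a b a b) := by
      rw [Finset.sum_add_distrib, Finset.sum_sub_distrib, ← Finset.mul_sum, ← Finset.mul_sum]
    rw [split, e1, e2, e3] at hsum
    linarith
  have hRdiag : ∀ a, RIC R a a = SS R / 2 := by
    intro a
    have h3 : ((n:ℝ) - 3) ≠ 0 := by intro h; linarith
    have hk := key1 a
    have h4 : ((n:ℝ) - 3) * SS R = ((n:ℝ) - 3) * (2 * RIC R a a) := by linarith
    have := mul_left_cancel₀ h3 h4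
    linarith
  have hS0 : SS R = 0 := by
    have h1 : SS R = (n:ℝ) * (SS R / 2) := by
      refine S_eq.trans ?_
      rw [Finset.sum_congr rfl (fun a _ => hRdiag a), Finset.sum_const, Finset.card_univ,
        Fintype.card_fin, nsmul_eq_mul]
    have hz : SS R * ((n:ℝ) - 2) = 0 := by linear_combination (-2 : ℝ) * h1
    rcases mul_eq_zero.mp hz with h | h
    · exact h
    · exfalso; linarith
  have Rdiag0 : ∀ a, RIC R a a = 0 := by intro a; rw [hRdiag a, hS0]; norm_num
  have flat1 : ∀ a b, rc R a b a b = 0 := by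
    intro a b
    by_cases hab : a = b
    · subst hab; exact r_diag1 _ _ _
    · have := hdiag a b hab
      rw [hS0, Rdiag0, Rdiag0] at this
      linarith
  -- expansion machinery
  set k : ℝ := (Real.sqrt 2)⁻¹ with hk
  have ck : k * k = 1/2 := by rw [hk]; exact c2'
  have expand2L : ∀ (u w p q : EuclideanSpace ℝ (Fin n)),
      R u (k•(p+q)) w (k•(p+q)) = k*k*(R u p w p + R u p w q + R u q w p + R u q w q) := by
    intro u w p q
    simp only [map_add, map_smul, LinearMap.add_apply, LinearMap.smul_apply, smul_eq_mul]
    ring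
  have expand2R : ∀ (p q s : EuclideanSpace ℝ (Fin n)),
      R (k•(p+q)) s (k•(p+q)) s = k*k*(R p s p s + R p s q s + R q s p s + R q s q s) := by
    intro p q s
    simp only [map_add, map_smul, LinearMap.add_apply, LinearMap.smul_apply, smul_eq_mul]
    ring
  have expand4 : ∀ (p q s t : EuclideanSpace ℝ (Fin n)),
      R (k•(p+q)) (k•(s+t)) (k•(p+q)) (k•(s+t)) = k*k*(k*k)*(
        R p s p s + R p s p t + R p s q s + R p s q t +
        R p t p s + R p t p t + R p t q s + R p t q t +
        R q s p s + R q s p t + R q s q s + R q s q t +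
        R q t p s + R q t p t + R q t q s + R q t q t) := by
    intro p q s t
    simp only [map_add, map_smul, LinearMap.add_apply, LinearMap.smul_apply, smul_eq_mul]
    ring
  have sumexp : ∀ a b : Fin n,
      (∑ i, R (EuclideanSpace.single i 1)
          (k•(EuclideanSpace.single a 1 + EuclideanSpace.single b 1))
          (EuclideanSpace.single i 1)
          (k•(EuclideanSpace.single a 1 + EuclideanSpace.single b 1)))
        = k*k*(RIC R a a + RIC R a b + RIC R b a + RIC R b b) := by
    intro a b
    simp only [RIC, rc]
    rw [← Finset.sum_add_distrib, ← Finset.sum_add_distrib, ← Finset.sum_add_distrib,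
      Finset.mul_sum]
    exact Finset.sum_congr rfl fun i _ => expand2L _ _ _ _
  -- stage B
  have hd2 : ∀ a b c : Fin n, a ≠ b → a ≠ c → b ≠ c → RIC R a b = rc R a c b c := by
    intro a b c hab hac hbc
    have H := h2 (k • (EuclideanSpace.single a 1 + EuclideanSpace.single b 1))
      (EuclideanSpace.single c 1)
      (by rw [hk]; exact inner_comb_self a b hab) (by simp [inner_single'])
      (by rw [hk]; exact inner_comb_single a b c hac hbc)
    rw [sumexp a b, expand2R] at H
    simp only [hfold] at H
    rw [hSS, hy c, hS0, Rdiag0, Rdiag0, Rdiag0, flat1 a c, flat1 b c,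
      ← sP a c b c, ricsym b a, ck] at H
    linarith
  have ricoff : ∀ a b : Fin n, a ≠ b → RIC R a b = 0 := by
    intro a b hab
    have h1 : ∀ i, i ≠ a → i ≠ b → rc R i a i b = RIC R a b := by
      intro i hia hib
      rw [sPP i a i b]
      exact (hd2 a b i hab hia.symm hib.symm).symm
    have hbmem : b ∈ univ.erase a := Finset.mem_erase.mpr ⟨hab.symm, Finset.mem_univ b⟩
    have eA : ∑ i ∈ univ.erase a, rc R i a i b = RIC R a b - rc R a a a b := by
      rw [Finset.sum_erase_eq_sub (Finset.mem_univ a)]; rfl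
    have eB : ∑ i ∈ (univ.erase a).erase b, rc R i a i b
        = RIC R a b - rc R a a a b - rc R b a b b := by
      rw [Finset.sum_erase_eq_sub hbmem, eA]
    have eC : ∑ i ∈ (univ.erase a).erase b, rc R i a i b = ((n:ℝ) - 2) * RIC R a b := by
      rw [Finset.sum_congr rfl (fun i hi => h1 i
        (Finset.ne_of_mem_erase (Finset.mem_of_mem_erase hi))
        (Finset.ne_of_mem_erase hi))]
      rw [Finset.sum_const, Finset.card_erase_of_mem hbmem,
        Finset.card_erase_of_mem (Finset.mem_univ a), Finset.card_univ, Fintype.card_fin,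
        nsmul_eq_mul, Nat.cast_sub (by omega : 1 ≤ n - 1), Nat.cast_sub (by omega : 1 ≤ n),
        Nat.cast_one]
      ring
    rw [eC, r_diag1, r_diag2] at eB
    have hz : RIC R a b * ((n:ℝ) - 3) = 0 := by linear_combination eB
    rcases mul_eq_zero.mp hz with h | h
    · exact h
    · exfalso; linarith
  have flat3 : ∀ a b c : Fin n, a ≠ b → a ≠ c → b ≠ c → rc R a c b c = 0 := by
    intro a b c hab hac hbc
    rw [← hd2 a b c hab hac hbc]
    exact ricoff a b hab
  -- stage C
  have rel : ∀ a b c d : Fin n, a ≠ b → a ≠ c → a ≠ d → b ≠ c → b ≠ d → c ≠ d →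
      rc R a b c d + rc R a d c b = 0 := by
    intro a b c d hab hac had hbc hbd hcd
    have H := h2 (k • (EuclideanSpace.single a 1 + EuclideanSpace.single c 1))
      (k • (EuclideanSpace.single b 1 + EuclideanSpace.single d 1))
      (by rw [hk]; exact inner_comb_self a c hac)
      (by rw [hk]; exact inner_comb_self b d hbd)
      (by rw [hk]; exact inner_comb_comb a c b d hab had hbc.symm hcd)
    rw [sumexp a c, sumexp b d, expand4] at H
    simp only [hfold] at H
    rw [hSS, hS0, ck] at H
    have z05 : rc R a b a d = 0 := by
      rw [sPP a b a d]; exact flat3 b d a hbd hab.symm had.symm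
    have z06 : rc R a d a b = 0 := by
      rw [sPP a d a b]; exact flat3 d b a hbd.symm had.symm hab.symm
    have z07 : rc R c b c d = 0 := by
      rw [sPP c b c d]; exact flat3 b d c hbd hbc hcd.symm
    have z08 : rc R c d c b = 0 := by
      rw [sPP c d c b]; exact flat3 d b c hbd.symm hcd.symm hbc
    have z09 : rc R a b c b = 0 := flat3 a c b hac hab hbc.symm
    have z10 : rc R c b a b = 0 := flat3 c a b hac.symm hbc.symm hab
    have z11 : rc R a d c d = 0 := flat3 a c d hac had hcd
    have z12 : rc R c d a d = 0 := flat3 c a d hac.symm hcd had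
    have p1 : rc R c b a d = rc R a d c b := sP c b a d
    have p2 : rc R c d a b = rc R a b c d := sP c d a b
    linarith [flat1 a b, flat1 a d, flat1 c b, flat1 c d, z05, z06, z07, z08, z09, z10,
      z11, z12, p1, p2, Rdiag0 a, Rdiag0 c, Rdiag0 b, Rdiag0 d,
      ricoff a c hac, ricoff c a hac.symm, ricoff b d hbd, ricoff d b hbd.symm]
  -- final case analysis
  intro i j k' l
  by_cases hij : i = j
  · subst hij; exact r_diag1 _ _ _
  by_cases hkl : k' = l
  · subst hkl; exact r_diag2 _ _ _
  by_cases hik : i = k'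
  · subst hik
    by_cases hjl : j = l
    · subst hjl; exact flat1 _ _
    · rw [sPP i j i l]; exact flat3 j l i hjl (Ne.symm hij) (fun h => hkl h.symm)
  by_cases hil : i = l
  · subst hil
    by_cases hjk : j = k'
    · subst hjk
      rw [sA' i j j i, sPP i j i j]
      rw [flat1 j i]; ring
    · rw [sA' i j k' i, sPP i j i k']
      rw [flat3 j k' i hjk (Ne.symm hij) (Ne.symm hik)]
      ring
  by_cases hjk : j = k'
  · subst hjk
    by_cases hjl : j = l
    · subst hjl; exact r_diag2 _ _ _
    · rw [sA i j j l, sPP j i j l]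
      rw [flat3 i l j hil hij (Ne.symm hjl)]
      ring
  by_cases hjl : j = l
  · subst hjl
    exact flat3 i k' j hik hij (Ne.symm hjk)
  · exact by
      have e1 := rel i j k' l hij hik hil hjk hjl hkl
      have e2 := rel i l j k' hil hij hik (fun h => hjl h.symm) (fun h => hkl h.symm) hjk
      have b1 := sB i j k' l
      have p1 := sP j k' i l
      have q2 : rc R i l k' j = - rc R i l j k' := sA' i l k' j
      have q3 : rc R k' i j l = - rc R i k' j l := sA k' i j l
      linarith

/-- if n ≥ 5 and the 2-curvature s₂ of an algebraic curvature tensor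
vanishes on all 2-planes (evaluated on orthonormal pairs), then R = 0. -/
theorem vanishing_two_curvature_implies_flat (n : ℕ) (hn : 5 ≤ n)
    (R : EuclideanSpace ℝ (Fin n) →ₗ[ℝ] EuclideanSpace ℝ (Fin n) →ₗ[ℝ]
         EuclideanSpace ℝ (Fin n) →ₗ[ℝ] EuclideanSpace ℝ (Fin n) →ₗ[ℝ] ℝ)
    (hA : ∀ x y z w, R x y z w = - R y x z w)
    (hA' : ∀ x y z w, R x y z w = - R x y w z)
    (hP : ∀ x y z w, R x y z w = R z w x y)
    (hB : ∀ x y z w, R x y z w + R y z x w + R z x y w = 0)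
    (h2 : ∀ x y : EuclideanSpace ℝ (Fin n),
      (inner ℝ x x : ℝ) = 1 → (inner ℝ y y : ℝ) = 1 → (inner ℝ x y : ℝ) = 0 →
        (∑ i, ∑ j, R (EuclideanSpace.single i 1) (EuclideanSpace.single j 1)
            (EuclideanSpace.single i 1) (EuclideanSpace.single j 1))
          - 2 * (∑ i, R (EuclideanSpace.single i 1) x (EuclideanSpace.single i 1) x)
          - 2 * (∑ i, R (EuclideanSpace.single i 1) y (EuclideanSpace.single i 1) y)
          + 2 * R x y x y = 0) :
    R = 0 := by
  have hc := comps n hn R hA hA' hP hB h2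
  have hv : ∀ v : EuclideanSpace ℝ (Fin n), v = ∑ i, v i • EuclideanSpace.single i (1:ℝ) := by
    intro v
    have := (EuclideanSpace.basisFun (Fin n) ℝ).toBasis.sum_repr v
    simpa [EuclideanSpace.basisFun_repr, EuclideanSpace.basisFun_apply] using this.symm
  have hc' : ∀ i j a b : Fin n, R (EuclideanSpace.single i 1) (EuclideanSpace.single j 1)
      (EuclideanSpace.single a 1) (EuclideanSpace.single b 1) = 0 := hc
  ext x y z w
  rw [hv x, hv y, hv z, hv w]
  simp [map_sum, map_smul, LinearMap.sum_apply, LinearMap.smul_apply, hc']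


end
end DD
end

section
/- Let h and k be symmetric bilinear forms on an n-dimensional real inner product space, viewed as (1,1) double forms. Then the Greub–Vanstone identity holds: (g·k) ∘ (g·h) = g·(k ∘ h) + k·h, where g·h denotes the exterior (Kulkarni–Nomizu type) product of double forms, and ∘ denotes the composition product of double forms; in components, for the associated (0,4)-tensors: [(g∧k)∘(g∧h)]_{ijkl} = [g∧(k∘h)]_{ijkl} + [k∧h]_{ijkl}, where (k∘h)(x,y) = Σ_i k(x,e_i)h(e_i,y). -/
open Finset

namespace DD

noncomputable section

lemma sum_if_const {α : Type*} (s : Finset α) {P : Prop} [Decidable P] (f : α → ℝ) :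
    ∑ x ∈ s, (if P then f x else 0) = if P then ∑ x ∈ s, f x else 0 := by
  split_ifs <;> simp

/-- Greub–Vanstone identity
(g∧k)∘(g∧h) = g∧(k∘h) + k∧h for symmetric bilinear forms h, k. -/
theorem greub_vanstone {n : ℕ}
    (h k : Fin n → Fin n → ℝ)
    (hsym : ∀ i j, h i j = h j i)
    (ksym : ∀ i j, k i j = k j i) :
    ∀ a b c d : Fin n,
      comp (KN (gE n) k) (KN (gE n) h) a b c d
        = KN (gE n) (fun x y => ∑ i, k x i * h i y) a b c d + KN k h a b c d := by
  intro a b c d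
  simp only [comp, KN, gE, ite_mul, mul_ite, one_mul, zero_mul, mul_one, mul_zero,
    sub_mul, mul_sub, add_mul, mul_add, Finset.sum_sub_distrib, Finset.sum_add_distrib,
    Finset.sum_ite_eq, Finset.sum_ite_eq', Finset.mem_univ, if_true, Finset.mul_sum,
    Finset.sum_mul]
  ring_nf
  simp only [sum_if_const, Finset.sum_ite_eq', Finset.sum_ite_eq, Finset.mem_univ, if_true,
    Finset.sum_sub_distrib, Finset.sum_add_distrib, Finset.sum_ite_eq', Finset.mem_univ, if_true]
  simp only [mul_assoc, ← Finset.mul_sum]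
  simp only [← mul_assoc, mul_comm (h _ _) (k _ _), ← Finset.sum_mul]
  split_ifs <;> ring

end
end DD
end

section
/- Let R be an algebraic curvature tensor on an n-dimensional inner product space and h a symmetric bilinear form. Viewing R as a symmetric endomorphism of Λ²V and g∧h likewise, the contraction of the composition satisfies c(R ∘ (g∧h)) = ι_h R + Ric ∘ h, where: c denotes Ricci contraction of a (2,2) double form, (ι_h R)(x,y) = Σ_{i,j} h(e_i,e_j) R(x,e_i,y,e_j) is the interior product of R by h, and (Ric ∘ h)(x,y) = Σ_i Ric(x,e_i)h(e_i,y). -/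
open Finset

namespace DD

noncomputable section

/-- c(R ∘ (g∧h)) = ι_h R + Ric ∘ h for an algebraic curvature tensor R
and a symmetric bilinear form h. -/
theorem contraction_comp_KN {n : ℕ}
    (R : Fin n → Fin n → Fin n → Fin n → ℝ)
    (hA : ∀ i j k l, R i j k l = - R j i k l)
    (hA' : ∀ i j k l, R i j k l = - R i j l k)
    (hP : ∀ i j k l, R i j k l = R k l i j)
    (hB : ∀ i j k l, R i j k l + R j k i l + R k i j l = 0)
    (h : Fin n → Fin n → ℝ) (hsym : ∀ i j, h i j = h j i) :
    ∀ x y : Fin n,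
      (∑ i, comp R (KN (gE n) h) i x i y)
        = (∑ p, ∑ q, h p q * R x p y q) + ∑ i, ricci R x i * h i y := by
  intro x y
  have key : ∀ i, comp R (KN (gE n) h) i x i y
      = (1/2 : ℝ) * ((∑ q, R i x i q * h q y) - (∑ q, R i x y q * h q i)
        + (∑ p, R i x p y * h p i) - (∑ p, R i x p i * h p y)) := by
    intro i
    unfold comp KN gE
    congr 1
    rw [Finset.sum_comm]
    simp only [mul_sub, mul_add, Finset.sum_sub_distrib, Finset.sum_add_distrib,
      mul_ite, ite_mul, mul_one, mul_zero, zero_mul, one_mul,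
      Finset.sum_ite_irrel, Finset.sum_const_zero,
      Finset.sum_ite_eq, Finset.sum_ite_eq', Finset.mem_univ, if_true, mul_comm]
  have e1 : (∑ i, ∑ q, R i x i q * h q y) = ∑ i, ricci R x i * h i y := by
    rw [Finset.sum_comm]
    simp only [← Finset.sum_mul, ricci]
  have e4 : (∑ i, ∑ p, R i x p i * h p y) = -∑ i, ricci R x i * h i y := by
    rw [← e1]
    simp only [← Finset.sum_neg_distrib]
    refine Finset.sum_congr rfl fun i _ => Finset.sum_congr rfl fun p _ => ?_
    rw [hA' i x p i]; ring
  have e2 : (∑ i, ∑ q, R i x y q * h q i) = -∑ p, ∑ q, h p q * R x p y q := by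
    simp only [← Finset.sum_neg_distrib]
    refine Finset.sum_congr rfl fun i _ => Finset.sum_congr rfl fun q _ => ?_
    rw [hA i x y q, hsym q i]; ring
  have e3 : (∑ i, ∑ p, R i x p y * h p i) = ∑ p, ∑ q, h p q * R x p y q := by
    refine Finset.sum_congr rfl fun i _ => Finset.sum_congr rfl fun p _ => ?_
    rw [hA i x p y, hA' x i p y, hsym p i]; ring
  calc (∑ i, comp R (KN (gE n) h) i x i y)
      = ∑ i, (1/2 : ℝ) * ((∑ q, R i x i q * h q y) - (∑ q, R i x y q * h q i)
        + (∑ p, R i x p y * h p i) - (∑ p, R i x p i * h p y)) :=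
        Finset.sum_congr rfl fun i _ => key i
    _ = (1/2 : ℝ) * ((∑ i, ∑ q, R i x i q * h q y) - (∑ i, ∑ q, R i x y q * h q i)
        + (∑ i, ∑ p, R i x p y * h p i) - (∑ i, ∑ p, R i x p i * h p y)) := by
        rw [← Finset.mul_sum]
        simp only [Finset.sum_sub_distrib, Finset.sum_add_distrib]
    _ = (∑ p, ∑ q, h p q * R x p y q) + ∑ i, ricci R x i * h i y := by
        rw [e1, e2, e3, e4]; ring

end
end DD
end

section
/- Let n ≥ 4, R an algebraic curvature tensor, and D = R − g∧Ric + (1/4)(g∧g)Scal its double dual. Then c(R ∘ D) = c(R ∘ R) − ι_{Ric}R − Ric∘Ric + (1/2) Scal·Ric, where c is Ricci contraction, ∘ is the composition product of (2,2) double forms (composition of induced endomorphisms of Λ²V, transported back to symmetric bilinear forms via contraction c), ι_{Ric}R is the Ricci-contracted interior product (ι_{Ric}R)(x,y) = Σ_{i,j} Ric(e_i,e_j)R(x,e_i,y,e_j), and Ric∘Ric is the square of the Ricci endomorphism. -/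
open Finset

namespace DD

noncomputable section

lemma sum_ite_pull {α : Type*} [Fintype α] (c : Prop) [Decidable c] (f : α → ℝ) :
    (∑ a, if c then f a else 0) = if c then ∑ a, f a else 0 := by
  split <;> simp

lemma key {n : ℕ}
    (R : Fin n → Fin n → Fin n → Fin n → ℝ)
    (hA' : ∀ i j k l, R i j k l = - R i j l k)
    (x y i : Fin n) :
    comp R (dd R) i x i y
    = comp R R i x i y
      - (1/2) * ((∑ q, R i x i q * ricci R q y) - (∑ q, R i x y q * ricci R q i)
          + (∑ p, R i x p y * ricci R p i) - (∑ p, R i x p i * ricci R p y))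
      + (1/2) * scal R * R i x i y := by
  unfold comp dd KN gE
  simp only [mul_sub, mul_add, sub_mul, add_mul, mul_ite, ite_mul, mul_one, mul_zero, one_mul,
    zero_mul, Finset.sum_sub_distrib, Finset.sum_add_distrib, Finset.mul_sum,
    sum_ite_pull, Finset.sum_ite_eq, Finset.sum_ite_eq', Finset.mem_univ, if_true]
  have h1 : R i x y i = - R i x i y := by rw [hA' i x y i]
  rw [h1]
  ring

/-- c(R ∘ D) = c(R ∘ R) − ι_{Ric}R − Ric∘Ric + (1/2)·Scal·Ric,
where D is the double dual of R. -/
theorem contraction_comp_double_dual {n : ℕ} (hn : 4 ≤ n)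
    (R : Fin n → Fin n → Fin n → Fin n → ℝ)
    (hA : ∀ i j k l, R i j k l = - R j i k l)
    (hA' : ∀ i j k l, R i j k l = - R i j l k)
    (hP : ∀ i j k l, R i j k l = R k l i j)
    (hB : ∀ i j k l, R i j k l + R j k i l + R k i j l = 0) :
    ∀ x y : Fin n,
      (∑ i, comp R (dd R) i x i y)
        = (∑ i, comp R R i x i y)
          - (∑ p, ∑ q, ricci R p q * R x p y q)
          - (∑ i, ricci R x i * ricci R i y)
          + (1/2 : ℝ) * scal R * ricci R x y := by
  intro x y
  have hRs : ∀ a b : Fin n, ricci R a b = ricci R b a := fun a b =>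
    Finset.sum_congr rfl fun i _ => hP i a i b
  have h1 : (∑ i, ∑ q, R i x i q * ricci R q y) = ∑ i, ricci R x i * ricci R i y := by
    rw [Finset.sum_comm]
    refine Finset.sum_congr rfl fun q _ => ?_
    rw [← Finset.sum_mul]; rfl
  have h2 : (∑ i, ∑ q, R i x y q * ricci R q i) = - ∑ p, ∑ q, ricci R p q * R x p y q := by
    rw [← Finset.sum_neg_distrib]
    refine Finset.sum_congr rfl fun i _ => ?_
    rw [← Finset.sum_neg_distrib]
    refine Finset.sum_congr rfl fun q _ => ?_
    rw [hA i x y q, hRs q i]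
    ring
  have h3 : (∑ i, ∑ p, R i x p y * ricci R p i) = ∑ p, ∑ q, ricci R p q * R x p y q := by
    refine Finset.sum_congr rfl fun i _ => Finset.sum_congr rfl fun p _ => ?_
    have : R i x p y = R x i y p := by rw [hA i x p y, hA' x i p y, neg_neg]
    rw [this, hRs p i]
    ring
  have h4 : (∑ i, ∑ p, R i x p i * ricci R p y) = - ∑ i, ricci R x i * ricci R i y := by
    rw [Finset.sum_comm, ← Finset.sum_neg_distrib]
    refine Finset.sum_congr rfl fun p _ => ?_
    rw [← Finset.sum_mul]
    have : (∑ i, R i x p i) = - ricci R x p := by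
      rw [show (∑ i, R i x p i) = ∑ i, -(R i x i p) from
        Finset.sum_congr rfl fun i _ => hA' i x p i, Finset.sum_neg_distrib]
      rfl
    rw [this]; ring
  calc (∑ i, comp R (dd R) i x i y)
      = ∑ i, (comp R R i x i y
          - (1/2) * ((∑ q, R i x i q * ricci R q y) - (∑ q, R i x y q * ricci R q i)
              + (∑ p, R i x p y * ricci R p i) - (∑ p, R i x p i * ricci R p y))
          + (1/2) * scal R * R i x i y) :=
        Finset.sum_congr rfl fun i _ => key R hA' x y i
    _ = (∑ i, comp R R i x i y)
          - (1/2) * ((∑ i, ∑ q, R i x i q * ricci R q y) - (∑ i, ∑ q, R i x y q * ricci R q i)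
              + (∑ i, ∑ p, R i x p y * ricci R p i) - (∑ i, ∑ p, R i x p i * ricci R p y))
          + (1/2) * scal R * ricci R x y := by
        simp only [Finset.sum_add_distrib, Finset.sum_sub_distrib, ← Finset.mul_sum, ricci]
    _ = _ := by rw [h1, h2, h3, h4]; ring

end
end DD
end

section
/- Let n = 4 and R an algebraic curvature tensor on an oriented 4-dimensional inner product space, viewed as a symmetric endomorphism 𝓡 of Λ²V. Let ⋆ also denote the Hodge star on Λ²V (an involution). Then the double dual operator ⋆𝓡⋆ is a symmetric endomorphism of Λ²V, satisfies the first Bianchi identity when viewed as a (0,4)-tensor, and its full trace satisfies tr(⋆𝓡⋆) = tr(𝓡) = Scal/2 (with the convention 𝓡(e_i∧e_j) = Σ_{k<l} R_{ijkl} e_k∧e_l). -/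
open Finset

namespace DD

noncomputable section

set_option maxHeartbeats 4000000


/-- integer Levi-Civita -/
def epsZ (i j k l : Fin 4) : ℤ :=
  Matrix.det (Matrix.of fun a b : Fin 4 => if ![i,j,k,l] a = b then (1 : ℤ) else 0)

lemma eps_eq_epsZ (i j k l : Fin 4) : eps i j k l = (epsZ i j k l : ℝ) := by
  unfold eps epsZ
  rw [show ((Matrix.det (Matrix.of fun a b : Fin 4 => if ![i,j,k,l] a = b then (1 : ℤ) else 0) : ℤ) : ℝ)
      = (Int.castRingHom ℝ) (Matrix.det (Matrix.of fun a b : Fin 4 => if ![i,j,k,l] a = b then (1 : ℤ) else 0))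
      from rfl, RingHom.map_det]
  congr 1
  ext a b
  simp [RingHom.mapMatrix_apply, Matrix.map_apply, apply_ite]

def sgnF (a b : Fin 4) : ℤ := if a < b then 1 else if b < a then -1 else 0

def epsT (i j k l : Fin 4) : ℤ :=
  sgnF i j * sgnF i k * sgnF i l * sgnF j k * sgnF j l * sgnF k l

lemma epsZ_eq_epsT : ∀ i j k l, epsZ i j k l = epsT i j k l := by decide

lemma eps_val (i j k l : Fin 4) : eps i j k l = ((epsT i j k l : ℤ) : ℝ) := by
  rw [eps_eq_epsZ, epsZ_eq_epsT]

lemma sum_swap4 (f : Fin 4 → Fin 4 → Fin 4 → Fin 4 → ℝ) :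
    (∑ p, ∑ q, ∑ r, ∑ s, f p q r s) = ∑ p, ∑ q, ∑ r, ∑ s, f r s p q := by
  calc (∑ p, ∑ q, ∑ r, ∑ s, f p q r s)
      = ∑ p, ∑ r, ∑ q, ∑ s, f p q r s :=
        Finset.sum_congr rfl fun p _ => Finset.sum_comm
    _ = ∑ r, ∑ p, ∑ q, ∑ s, f p q r s := Finset.sum_comm
    _ = ∑ r, ∑ p, ∑ s, ∑ q, f p q r s :=
        Finset.sum_congr rfl fun r _ => Finset.sum_congr rfl fun p _ => Finset.sum_comm
    _ = ∑ r, ∑ s, ∑ p, ∑ q, f p q r s :=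
        Finset.sum_congr rfl fun r _ => Finset.sum_comm

lemma con00 (X : Fin 4 → Fin 4 → ℝ) :
    (∑ p, ∑ q, eps 0 0 p q * X p q) = 0 := by
  simp (config := { decide := true }) [eps_val, epsT, sgnF, Fin.sum_univ_four]
  try ring
lemma con01 (X : Fin 4 → Fin 4 → ℝ) :
    (∑ p, ∑ q, eps 0 1 p q * X p q) = X 2 3 - X 3 2 := by
  simp (config := { decide := true }) [eps_val, epsT, sgnF, Fin.sum_univ_four]
  try ring
lemma con02 (X : Fin 4 → Fin 4 → ℝ) :
    (∑ p, ∑ q, eps 0 2 p q * X p q) = X 3 1 - X 1 3 := by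
  simp (config := { decide := true }) [eps_val, epsT, sgnF, Fin.sum_univ_four]
  try ring
lemma con03 (X : Fin 4 → Fin 4 → ℝ) :
    (∑ p, ∑ q, eps 0 3 p q * X p q) = X 1 2 - X 2 1 := by
  simp (config := { decide := true }) [eps_val, epsT, sgnF, Fin.sum_univ_four]
  try ring
lemma con10 (X : Fin 4 → Fin 4 → ℝ) :
    (∑ p, ∑ q, eps 1 0 p q * X p q) = X 3 2 - X 2 3 := by
  simp (config := { decide := true }) [eps_val, epsT, sgnF, Fin.sum_univ_four]
  try ring
lemma con11 (X : Fin 4 → Fin 4 → ℝ) :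
    (∑ p, ∑ q, eps 1 1 p q * X p q) = 0 := by
  simp (config := { decide := true }) [eps_val, epsT, sgnF, Fin.sum_univ_four]
  try ring
lemma con12 (X : Fin 4 → Fin 4 → ℝ) :
    (∑ p, ∑ q, eps 1 2 p q * X p q) = X 0 3 - X 3 0 := by
  simp (config := { decide := true }) [eps_val, epsT, sgnF, Fin.sum_univ_four]
  try ring
lemma con13 (X : Fin 4 → Fin 4 → ℝ) :
    (∑ p, ∑ q, eps 1 3 p q * X p q) = X 2 0 - X 0 2 := by
  simp (config := { decide := true }) [eps_val, epsT, sgnF, Fin.sum_univ_four]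
  try ring
lemma con20 (X : Fin 4 → Fin 4 → ℝ) :
    (∑ p, ∑ q, eps 2 0 p q * X p q) = X 1 3 - X 3 1 := by
  simp (config := { decide := true }) [eps_val, epsT, sgnF, Fin.sum_univ_four]
  try ring
lemma con21 (X : Fin 4 → Fin 4 → ℝ) :
    (∑ p, ∑ q, eps 2 1 p q * X p q) = X 3 0 - X 0 3 := by
  simp (config := { decide := true }) [eps_val, epsT, sgnF, Fin.sum_univ_four]
  try ring
lemma con22 (X : Fin 4 → Fin 4 → ℝ) :
    (∑ p, ∑ q, eps 2 2 p q * X p q) = 0 := by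
  simp (config := { decide := true }) [eps_val, epsT, sgnF, Fin.sum_univ_four]
  try ring
lemma con23 (X : Fin 4 → Fin 4 → ℝ) :
    (∑ p, ∑ q, eps 2 3 p q * X p q) = X 0 1 - X 1 0 := by
  simp (config := { decide := true }) [eps_val, epsT, sgnF, Fin.sum_univ_four]
  try ring
lemma con30 (X : Fin 4 → Fin 4 → ℝ) :
    (∑ p, ∑ q, eps 3 0 p q * X p q) = X 2 1 - X 1 2 := by
  simp (config := { decide := true }) [eps_val, epsT, sgnF, Fin.sum_univ_four]
  try ring
lemma con31 (X : Fin 4 → Fin 4 → ℝ) :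
    (∑ p, ∑ q, eps 3 1 p q * X p q) = X 0 2 - X 2 0 := by
  simp (config := { decide := true }) [eps_val, epsT, sgnF, Fin.sum_univ_four]
  try ring
lemma con32 (X : Fin 4 → Fin 4 → ℝ) :
    (∑ p, ∑ q, eps 3 2 p q * X p q) = X 1 0 - X 0 1 := by
  simp (config := { decide := true }) [eps_val, epsT, sgnF, Fin.sum_univ_four]
  try ring
lemma con33 (X : Fin 4 → Fin 4 → ℝ) :
    (∑ p, ∑ q, eps 3 3 p q * X p q) = 0 := by
  simp (config := { decide := true }) [eps_val, epsT, sgnF, Fin.sum_univ_four]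
  try ring

/-- in dimension 4, the double dual operator ⋆𝓡⋆ (in components
D_{ijkl} = (1/4)Σ ε_{ijpq} ε_{klrs} R_{pqrs}) is a symmetric endomorphism of Λ²V,
satisfies the first Bianchi identity, and has the same full trace as 𝓡, namely Scal/2. -/
theorem double_dual_operator_dim4 (R : Fin 4 → Fin 4 → Fin 4 → Fin 4 → ℝ)
    (hA : ∀ i j k l, R i j k l = - R j i k l)
    (hA' : ∀ i j k l, R i j k l = - R i j l k)
    (hP : ∀ i j k l, R i j k l = R k l i j)
    (hB : ∀ i j k l, R i j k l + R j k i l + R k i j l = 0)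
    (D : Fin 4 → Fin 4 → Fin 4 → Fin 4 → ℝ)
    (hD : ∀ i j k l, D i j k l
      = (1/4 : ℝ) * ∑ p, ∑ q, ∑ r, ∑ s, eps i j p q * eps k l r s * R p q r s) :
    (∀ i j k l, D i j k l = D k l i j) ∧
    (∀ x y z w, D x y z w + D y z x w + D z x y w = 0) ∧
    ((∑ i : Fin 4, ∑ j : Fin 4, if i < j then D i j i j else 0)
        = (∑ i : Fin 4, ∑ j : Fin 4, if i < j then R i j i j else 0)) ∧
    ((∑ i : Fin 4, ∑ j : Fin 4, if i < j then R i j i j else 0) = scal R / 2) := by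
  have hD2 : ∀ i j k l, D i j k l
      = (1/4 : ℝ) * ∑ p, ∑ q, eps i j p q * ∑ r, ∑ s, eps k l r s * R p q r s := by
    intro i j k l
    rw [hD i j k l]
    congr 1
    refine Finset.sum_congr rfl fun p _ => Finset.sum_congr rfl fun q _ => ?_
    rw [Finset.mul_sum]
    refine Finset.sum_congr rfl fun r _ => ?_
    rw [Finset.mul_sum]
    refine Finset.sum_congr rfl fun s _ => ?_
    ring
  have hBc : R 0 1 2 3 - R 0 2 1 3 + R 0 3 1 2 = 0 := by
    linarith only [hB 0 1 2 3, hP 1 2 0 3, hA 2 0 1 3]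
  have t0000 : D 0 0 0 0 = 0 := by
    rw [hD2]
    simp only [con00, con00, mul_zero, Finset.sum_const_zero]
    try norm_num
  have t0001 : D 0 0 0 1 = 0 := by
    rw [hD2]
    simp only [con01, con00, mul_zero, Finset.sum_const_zero]
    try norm_num
  have t0002 : D 0 0 0 2 = 0 := by
    rw [hD2]
    simp only [con02, con00, mul_zero, Finset.sum_const_zero]
    try norm_num
  have t0003 : D 0 0 0 3 = 0 := by
    rw [hD2]
    simp only [con03, con00, mul_zero, Finset.sum_const_zero]
    try norm_num
  have t0010 : D 0 0 1 0 = 0 := by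
    rw [hD2]
    simp only [con10, con00, mul_zero, Finset.sum_const_zero]
    try norm_num
  have t0011 : D 0 0 1 1 = 0 := by
    rw [hD2]
    simp only [con11, con00, mul_zero, Finset.sum_const_zero]
    try norm_num
  have t0012 : D 0 0 1 2 = 0 := by
    rw [hD2]
    simp only [con12, con00, mul_zero, Finset.sum_const_zero]
    try norm_num
  have t0013 : D 0 0 1 3 = 0 := by
    rw [hD2]
    simp only [con13, con00, mul_zero, Finset.sum_const_zero]
    try norm_num
  have t0020 : D 0 0 2 0 = 0 := by
    rw [hD2]
    simp only [con20, con00, mul_zero, Finset.sum_const_zero]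
    try norm_num
  have t0021 : D 0 0 2 1 = 0 := by
    rw [hD2]
    simp only [con21, con00, mul_zero, Finset.sum_const_zero]
    try norm_num
  have t0022 : D 0 0 2 2 = 0 := by
    rw [hD2]
    simp only [con22, con00, mul_zero, Finset.sum_const_zero]
    try norm_num
  have t0023 : D 0 0 2 3 = 0 := by
    rw [hD2]
    simp only [con23, con00, mul_zero, Finset.sum_const_zero]
    try norm_num
  have t0030 : D 0 0 3 0 = 0 := by
    rw [hD2]
    simp only [con30, con00, mul_zero, Finset.sum_const_zero]
    try norm_num
  have t0031 : D 0 0 3 1 = 0 := by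
    rw [hD2]
    simp only [con31, con00, mul_zero, Finset.sum_const_zero]
    try norm_num
  have t0032 : D 0 0 3 2 = 0 := by
    rw [hD2]
    simp only [con32, con00, mul_zero, Finset.sum_const_zero]
    try norm_num
  have t0033 : D 0 0 3 3 = 0 := by
    rw [hD2]
    simp only [con33, con00, mul_zero, Finset.sum_const_zero]
    try norm_num
  have t0100 : D 0 1 0 0 = 0 := by
    rw [hD2]
    simp only [con00, con01, mul_zero, Finset.sum_const_zero]
    try norm_num
  have t0101 : D 0 1 0 1 = R 2 3 2 3 := by
    rw [hD2]
    simp only [con01, con01]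
    linarith only [hA 2 3 2 3, hA 2 3 3 2, hA' 2 3 2 3,
      hA' 3 2 2 3, hP 2 3 2 3]
  have t0102 : D 0 1 0 2 = -R 1 3 2 3 := by
    rw [hD2]
    simp only [con02, con01]
    linarith only [hA 2 3 1 3, hA 2 3 3 1, hA' 2 3 1 3,
      hA' 3 2 1 3, hP 2 3 1 3]
  have t0103 : D 0 1 0 3 = R 1 2 2 3 := by
    rw [hD2]
    simp only [con03, con01]
    linarith only [hA 2 3 1 2, hA 2 3 2 1, hA' 2 3 1 2,
      hA' 3 2 1 2, hP 2 3 1 2]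
  have t0110 : D 0 1 1 0 = -R 2 3 2 3 := by
    rw [hD2]
    simp only [con10, con01]
    linarith only [hA 2 3 2 3, hA 2 3 3 2, hA' 2 3 2 3,
      hA' 3 2 2 3, hP 2 3 2 3]
  have t0111 : D 0 1 1 1 = 0 := by
    rw [hD2]
    simp only [con11, con01, mul_zero, Finset.sum_const_zero]
    try norm_num
  have t0112 : D 0 1 1 2 = R 0 3 2 3 := by
    rw [hD2]
    simp only [con12, con01]
    linarith only [hA 2 3 0 3, hA 2 3 3 0, hA' 2 3 0 3,
      hA' 3 2 0 3, hP 2 3 0 3]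
  have t0113 : D 0 1 1 3 = -R 0 2 2 3 := by
    rw [hD2]
    simp only [con13, con01]
    linarith only [hA 2 3 0 2, hA 2 3 2 0, hA' 2 3 0 2,
      hA' 3 2 0 2, hP 2 3 0 2]
  have t0120 : D 0 1 2 0 = R 1 3 2 3 := by
    rw [hD2]
    simp only [con20, con01]
    linarith only [hA 2 3 1 3, hA 2 3 3 1, hA' 2 3 1 3,
      hA' 3 2 1 3, hP 2 3 1 3]
  have t0121 : D 0 1 2 1 = -R 0 3 2 3 := by
    rw [hD2]
    simp only [con21, con01]
    linarith only [hA 2 3 0 3, hA 2 3 3 0, hA' 2 3 0 3,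
      hA' 3 2 0 3, hP 2 3 0 3]
  have t0122 : D 0 1 2 2 = 0 := by
    rw [hD2]
    simp only [con22, con01, mul_zero, Finset.sum_const_zero]
    try norm_num
  have t0123 : D 0 1 2 3 = R 0 1 2 3 := by
    rw [hD2]
    simp only [con23, con01]
    linarith only [hA 2 3 0 1, hA 2 3 1 0, hA' 2 3 0 1,
      hA' 3 2 0 1, hP 2 3 0 1]
  have t0130 : D 0 1 3 0 = -R 1 2 2 3 := by
    rw [hD2]
    simp only [con30, con01]
    linarith only [hA 2 3 1 2, hA 2 3 2 1, hA' 2 3 1 2,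
      hA' 3 2 1 2, hP 2 3 1 2]
  have t0131 : D 0 1 3 1 = R 0 2 2 3 := by
    rw [hD2]
    simp only [con31, con01]
    linarith only [hA 2 3 0 2, hA 2 3 2 0, hA' 2 3 0 2,
      hA' 3 2 0 2, hP 2 3 0 2]
  have t0132 : D 0 1 3 2 = -R 0 1 2 3 := by
    rw [hD2]
    simp only [con32, con01]
    linarith only [hA 2 3 0 1, hA 2 3 1 0, hA' 2 3 0 1,
      hA' 3 2 0 1, hP 2 3 0 1]
  have t0133 : D 0 1 3 3 = 0 := by
    rw [hD2]
    simp only [con33, con01, mul_zero, Finset.sum_const_zero]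
    try norm_num
  have t0200 : D 0 2 0 0 = 0 := by
    rw [hD2]
    simp only [con00, con02, mul_zero, Finset.sum_const_zero]
    try norm_num
  have t0201 : D 0 2 0 1 = -R 1 3 2 3 := by
    rw [hD2]
    simp only [con01, con02]
    linarith only [hA 1 3 2 3, hA 1 3 3 2, hA' 1 3 2 3,
      hA' 3 1 2 3, hP 1 3 2 3]
  have t0202 : D 0 2 0 2 = R 1 3 1 3 := by
    rw [hD2]
    simp only [con02, con02]
    linarith only [hA 1 3 1 3, hA 1 3 3 1, hA' 1 3 1 3,
      hA' 3 1 1 3, hP 1 3 1 3]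
  have t0203 : D 0 2 0 3 = -R 1 2 1 3 := by
    rw [hD2]
    simp only [con03, con02]
    linarith only [hA 1 3 1 2, hA 1 3 2 1, hA' 1 3 1 2,
      hA' 3 1 1 2, hP 1 3 1 2]
  have t0210 : D 0 2 1 0 = R 1 3 2 3 := by
    rw [hD2]
    simp only [con10, con02]
    linarith only [hA 1 3 2 3, hA 1 3 3 2, hA' 1 3 2 3,
      hA' 3 1 2 3, hP 1 3 2 3]
  have t0211 : D 0 2 1 1 = 0 := by
    rw [hD2]
    simp only [con11, con02, mul_zero, Finset.sum_const_zero]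
    try norm_num
  have t0212 : D 0 2 1 2 = -R 0 3 1 3 := by
    rw [hD2]
    simp only [con12, con02]
    linarith only [hA 1 3 0 3, hA 1 3 3 0, hA' 1 3 0 3,
      hA' 3 1 0 3, hP 1 3 0 3]
  have t0213 : D 0 2 1 3 = R 0 2 1 3 := by
    rw [hD2]
    simp only [con13, con02]
    linarith only [hA 1 3 0 2, hA 1 3 2 0, hA' 1 3 0 2,
      hA' 3 1 0 2, hP 1 3 0 2]
  have t0220 : D 0 2 2 0 = -R 1 3 1 3 := by
    rw [hD2]
    simp only [con20, con02]
    linarith only [hA 1 3 1 3, hA 1 3 3 1, hA' 1 3 1 3,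
      hA' 3 1 1 3, hP 1 3 1 3]
  have t0221 : D 0 2 2 1 = R 0 3 1 3 := by
    rw [hD2]
    simp only [con21, con02]
    linarith only [hA 1 3 0 3, hA 1 3 3 0, hA' 1 3 0 3,
      hA' 3 1 0 3, hP 1 3 0 3]
  have t0222 : D 0 2 2 2 = 0 := by
    rw [hD2]
    simp only [con22, con02, mul_zero, Finset.sum_const_zero]
    try norm_num
  have t0223 : D 0 2 2 3 = -R 0 1 1 3 := by
    rw [hD2]
    simp only [con23, con02]
    linarith only [hA 1 3 0 1, hA 1 3 1 0, hA' 1 3 0 1,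
      hA' 3 1 0 1, hP 1 3 0 1]
  have t0230 : D 0 2 3 0 = R 1 2 1 3 := by
    rw [hD2]
    simp only [con30, con02]
    linarith only [hA 1 3 1 2, hA 1 3 2 1, hA' 1 3 1 2,
      hA' 3 1 1 2, hP 1 3 1 2]
  have t0231 : D 0 2 3 1 = -R 0 2 1 3 := by
    rw [hD2]
    simp only [con31, con02]
    linarith only [hA 1 3 0 2, hA 1 3 2 0, hA' 1 3 0 2,
      hA' 3 1 0 2, hP 1 3 0 2]
  have t0232 : D 0 2 3 2 = R 0 1 1 3 := by
    rw [hD2]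
    simp only [con32, con02]
    linarith only [hA 1 3 0 1, hA 1 3 1 0, hA' 1 3 0 1,
      hA' 3 1 0 1, hP 1 3 0 1]
  have t0233 : D 0 2 3 3 = 0 := by
    rw [hD2]
    simp only [con33, con02, mul_zero, Finset.sum_const_zero]
    try norm_num
  have t0300 : D 0 3 0 0 = 0 := by
    rw [hD2]
    simp only [con00, con03, mul_zero, Finset.sum_const_zero]
    try norm_num
  have t0301 : D 0 3 0 1 = R 1 2 2 3 := by
    rw [hD2]
    simp only [con01, con03]
    linarith only [hA 1 2 2 3, hA 1 2 3 2, hA' 1 2 2 3,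
      hA' 2 1 2 3, hP 1 2 2 3]
  have t0302 : D 0 3 0 2 = -R 1 2 1 3 := by
    rw [hD2]
    simp only [con02, con03]
    linarith only [hA 1 2 1 3, hA 1 2 3 1, hA' 1 2 1 3,
      hA' 2 1 1 3, hP 1 2 1 3]
  have t0303 : D 0 3 0 3 = R 1 2 1 2 := by
    rw [hD2]
    simp only [con03, con03]
    linarith only [hA 1 2 1 2, hA 1 2 2 1, hA' 1 2 1 2,
      hA' 2 1 1 2, hP 1 2 1 2]
  have t0310 : D 0 3 1 0 = -R 1 2 2 3 := by
    rw [hD2]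
    simp only [con10, con03]
    linarith only [hA 1 2 2 3, hA 1 2 3 2, hA' 1 2 2 3,
      hA' 2 1 2 3, hP 1 2 2 3]
  have t0311 : D 0 3 1 1 = 0 := by
    rw [hD2]
    simp only [con11, con03, mul_zero, Finset.sum_const_zero]
    try norm_num
  have t0312 : D 0 3 1 2 = R 0 3 1 2 := by
    rw [hD2]
    simp only [con12, con03]
    linarith only [hA 1 2 0 3, hA 1 2 3 0, hA' 1 2 0 3,
      hA' 2 1 0 3, hP 1 2 0 3]
  have t0313 : D 0 3 1 3 = -R 0 2 1 2 := by
    rw [hD2]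
    simp only [con13, con03]
    linarith only [hA 1 2 0 2, hA 1 2 2 0, hA' 1 2 0 2,
      hA' 2 1 0 2, hP 1 2 0 2]
  have t0320 : D 0 3 2 0 = R 1 2 1 3 := by
    rw [hD2]
    simp only [con20, con03]
    linarith only [hA 1 2 1 3, hA 1 2 3 1, hA' 1 2 1 3,
      hA' 2 1 1 3, hP 1 2 1 3]
  have t0321 : D 0 3 2 1 = -R 0 3 1 2 := by
    rw [hD2]
    simp only [con21, con03]
    linarith only [hA 1 2 0 3, hA 1 2 3 0, hA' 1 2 0 3,
      hA' 2 1 0 3, hP 1 2 0 3]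
  have t0322 : D 0 3 2 2 = 0 := by
    rw [hD2]
    simp only [con22, con03, mul_zero, Finset.sum_const_zero]
    try norm_num
  have t0323 : D 0 3 2 3 = R 0 1 1 2 := by
    rw [hD2]
    simp only [con23, con03]
    linarith only [hA 1 2 0 1, hA 1 2 1 0, hA' 1 2 0 1,
      hA' 2 1 0 1, hP 1 2 0 1]
  have t0330 : D 0 3 3 0 = -R 1 2 1 2 := by
    rw [hD2]
    simp only [con30, con03]
    linarith only [hA 1 2 1 2, hA 1 2 2 1, hA' 1 2 1 2,
      hA' 2 1 1 2, hP 1 2 1 2]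
  have t0331 : D 0 3 3 1 = R 0 2 1 2 := by
    rw [hD2]
    simp only [con31, con03]
    linarith only [hA 1 2 0 2, hA 1 2 2 0, hA' 1 2 0 2,
      hA' 2 1 0 2, hP 1 2 0 2]
  have t0332 : D 0 3 3 2 = -R 0 1 1 2 := by
    rw [hD2]
    simp only [con32, con03]
    linarith only [hA 1 2 0 1, hA 1 2 1 0, hA' 1 2 0 1,
      hA' 2 1 0 1, hP 1 2 0 1]
  have t0333 : D 0 3 3 3 = 0 := by
    rw [hD2]
    simp only [con33, con03, mul_zero, Finset.sum_const_zero]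
    try norm_num
  have t1000 : D 1 0 0 0 = 0 := by
    rw [hD2]
    simp only [con00, con10, mul_zero, Finset.sum_const_zero]
    try norm_num
  have t1001 : D 1 0 0 1 = -R 2 3 2 3 := by
    rw [hD2]
    simp only [con01, con10]
    linarith only [hA 2 3 2 3, hA 2 3 3 2, hA' 2 3 2 3,
      hA' 3 2 2 3, hP 2 3 2 3]
  have t1002 : D 1 0 0 2 = R 1 3 2 3 := by
    rw [hD2]
    simp only [con02, con10]
    linarith only [hA 2 3 1 3, hA 2 3 3 1, hA' 2 3 1 3,
      hA' 3 2 1 3, hP 2 3 1 3]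
  have t1003 : D 1 0 0 3 = -R 1 2 2 3 := by
    rw [hD2]
    simp only [con03, con10]
    linarith only [hA 2 3 1 2, hA 2 3 2 1, hA' 2 3 1 2,
      hA' 3 2 1 2, hP 2 3 1 2]
  have t1010 : D 1 0 1 0 = R 2 3 2 3 := by
    rw [hD2]
    simp only [con10, con10]
    linarith only [hA 2 3 2 3, hA 2 3 3 2, hA' 2 3 2 3,
      hA' 3 2 2 3, hP 2 3 2 3]
  have t1011 : D 1 0 1 1 = 0 := by
    rw [hD2]
    simp only [con11, con10, mul_zero, Finset.sum_const_zero]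
    try norm_num
  have t1012 : D 1 0 1 2 = -R 0 3 2 3 := by
    rw [hD2]
    simp only [con12, con10]
    linarith only [hA 2 3 0 3, hA 2 3 3 0, hA' 2 3 0 3,
      hA' 3 2 0 3, hP 2 3 0 3]
  have t1013 : D 1 0 1 3 = R 0 2 2 3 := by
    rw [hD2]
    simp only [con13, con10]
    linarith only [hA 2 3 0 2, hA 2 3 2 0, hA' 2 3 0 2,
      hA' 3 2 0 2, hP 2 3 0 2]
  have t1020 : D 1 0 2 0 = -R 1 3 2 3 := by
    rw [hD2]
    simp only [con20, con10]
    linarith only [hA 2 3 1 3, hA 2 3 3 1, hA' 2 3 1 3,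
      hA' 3 2 1 3, hP 2 3 1 3]
  have t1021 : D 1 0 2 1 = R 0 3 2 3 := by
    rw [hD2]
    simp only [con21, con10]
    linarith only [hA 2 3 0 3, hA 2 3 3 0, hA' 2 3 0 3,
      hA' 3 2 0 3, hP 2 3 0 3]
  have t1022 : D 1 0 2 2 = 0 := by
    rw [hD2]
    simp only [con22, con10, mul_zero, Finset.sum_const_zero]
    try norm_num
  have t1023 : D 1 0 2 3 = -R 0 1 2 3 := by
    rw [hD2]
    simp only [con23, con10]
    linarith only [hA 2 3 0 1, hA 2 3 1 0, hA' 2 3 0 1,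
      hA' 3 2 0 1, hP 2 3 0 1]
  have t1030 : D 1 0 3 0 = R 1 2 2 3 := by
    rw [hD2]
    simp only [con30, con10]
    linarith only [hA 2 3 1 2, hA 2 3 2 1, hA' 2 3 1 2,
      hA' 3 2 1 2, hP 2 3 1 2]
  have t1031 : D 1 0 3 1 = -R 0 2 2 3 := by
    rw [hD2]
    simp only [con31, con10]
    linarith only [hA 2 3 0 2, hA 2 3 2 0, hA' 2 3 0 2,
      hA' 3 2 0 2, hP 2 3 0 2]
  have t1032 : D 1 0 3 2 = R 0 1 2 3 := by
    rw [hD2]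
    simp only [con32, con10]
    linarith only [hA 2 3 0 1, hA 2 3 1 0, hA' 2 3 0 1,
      hA' 3 2 0 1, hP 2 3 0 1]
  have t1033 : D 1 0 3 3 = 0 := by
    rw [hD2]
    simp only [con33, con10, mul_zero, Finset.sum_const_zero]
    try norm_num
  have t1100 : D 1 1 0 0 = 0 := by
    rw [hD2]
    simp only [con00, con11, mul_zero, Finset.sum_const_zero]
    try norm_num
  have t1101 : D 1 1 0 1 = 0 := by
    rw [hD2]
    simp only [con01, con11, mul_zero, Finset.sum_const_zero]
    try norm_num
  have t1102 : D 1 1 0 2 = 0 := by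
    rw [hD2]
    simp only [con02, con11, mul_zero, Finset.sum_const_zero]
    try norm_num
  have t1103 : D 1 1 0 3 = 0 := by
    rw [hD2]
    simp only [con03, con11, mul_zero, Finset.sum_const_zero]
    try norm_num
  have t1110 : D 1 1 1 0 = 0 := by
    rw [hD2]
    simp only [con10, con11, mul_zero, Finset.sum_const_zero]
    try norm_num
  have t1111 : D 1 1 1 1 = 0 := by
    rw [hD2]
    simp only [con11, con11, mul_zero, Finset.sum_const_zero]
    try norm_num
  have t1112 : D 1 1 1 2 = 0 := by
    rw [hD2]
    simp only [con12, con11, mul_zero, Finset.sum_const_zero]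
    try norm_num
  have t1113 : D 1 1 1 3 = 0 := by
    rw [hD2]
    simp only [con13, con11, mul_zero, Finset.sum_const_zero]
    try norm_num
  have t1120 : D 1 1 2 0 = 0 := by
    rw [hD2]
    simp only [con20, con11, mul_zero, Finset.sum_const_zero]
    try norm_num
  have t1121 : D 1 1 2 1 = 0 := by
    rw [hD2]
    simp only [con21, con11, mul_zero, Finset.sum_const_zero]
    try norm_num
  have t1122 : D 1 1 2 2 = 0 := by
    rw [hD2]
    simp only [con22, con11, mul_zero, Finset.sum_const_zero]
    try norm_num
  have t1123 : D 1 1 2 3 = 0 := by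
    rw [hD2]
    simp only [con23, con11, mul_zero, Finset.sum_const_zero]
    try norm_num
  have t1130 : D 1 1 3 0 = 0 := by
    rw [hD2]
    simp only [con30, con11, mul_zero, Finset.sum_const_zero]
    try norm_num
  have t1131 : D 1 1 3 1 = 0 := by
    rw [hD2]
    simp only [con31, con11, mul_zero, Finset.sum_const_zero]
    try norm_num
  have t1132 : D 1 1 3 2 = 0 := by
    rw [hD2]
    simp only [con32, con11, mul_zero, Finset.sum_const_zero]
    try norm_num
  have t1133 : D 1 1 3 3 = 0 := by
    rw [hD2]
    simp only [con33, con11, mul_zero, Finset.sum_const_zero]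
    try norm_num
  have t1200 : D 1 2 0 0 = 0 := by
    rw [hD2]
    simp only [con00, con12, mul_zero, Finset.sum_const_zero]
    try norm_num
  have t1201 : D 1 2 0 1 = R 0 3 2 3 := by
    rw [hD2]
    simp only [con01, con12]
    linarith only [hA 0 3 2 3, hA 0 3 3 2, hA' 0 3 2 3,
      hA' 3 0 2 3, hP 0 3 2 3]
  have t1202 : D 1 2 0 2 = -R 0 3 1 3 := by
    rw [hD2]
    simp only [con02, con12]
    linarith only [hA 0 3 1 3, hA 0 3 3 1, hA' 0 3 1 3,
      hA' 3 0 1 3, hP 0 3 1 3]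
  have t1203 : D 1 2 0 3 = R 0 3 1 2 := by
    rw [hD2]
    simp only [con03, con12]
    linarith only [hA 0 3 1 2, hA 0 3 2 1, hA' 0 3 1 2,
      hA' 3 0 1 2, hP 0 3 1 2]
  have t1210 : D 1 2 1 0 = -R 0 3 2 3 := by
    rw [hD2]
    simp only [con10, con12]
    linarith only [hA 0 3 2 3, hA 0 3 3 2, hA' 0 3 2 3,
      hA' 3 0 2 3, hP 0 3 2 3]
  have t1211 : D 1 2 1 1 = 0 := by
    rw [hD2]
    simp only [con11, con12, mul_zero, Finset.sum_const_zero]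
    try norm_num
  have t1212 : D 1 2 1 2 = R 0 3 0 3 := by
    rw [hD2]
    simp only [con12, con12]
    linarith only [hA 0 3 0 3, hA 0 3 3 0, hA' 0 3 0 3,
      hA' 3 0 0 3, hP 0 3 0 3]
  have t1213 : D 1 2 1 3 = -R 0 2 0 3 := by
    rw [hD2]
    simp only [con13, con12]
    linarith only [hA 0 3 0 2, hA 0 3 2 0, hA' 0 3 0 2,
      hA' 3 0 0 2, hP 0 3 0 2]
  have t1220 : D 1 2 2 0 = R 0 3 1 3 := by
    rw [hD2]
    simp only [con20, con12]
    linarith only [hA 0 3 1 3, hA 0 3 3 1, hA' 0 3 1 3,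
      hA' 3 0 1 3, hP 0 3 1 3]
  have t1221 : D 1 2 2 1 = -R 0 3 0 3 := by
    rw [hD2]
    simp only [con21, con12]
    linarith only [hA 0 3 0 3, hA 0 3 3 0, hA' 0 3 0 3,
      hA' 3 0 0 3, hP 0 3 0 3]
  have t1222 : D 1 2 2 2 = 0 := by
    rw [hD2]
    simp only [con22, con12, mul_zero, Finset.sum_const_zero]
    try norm_num
  have t1223 : D 1 2 2 3 = R 0 1 0 3 := by
    rw [hD2]
    simp only [con23, con12]
    linarith only [hA 0 3 0 1, hA 0 3 1 0, hA' 0 3 0 1,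
      hA' 3 0 0 1, hP 0 3 0 1]
  have t1230 : D 1 2 3 0 = -R 0 3 1 2 := by
    rw [hD2]
    simp only [con30, con12]
    linarith only [hA 0 3 1 2, hA 0 3 2 1, hA' 0 3 1 2,
      hA' 3 0 1 2, hP 0 3 1 2]
  have t1231 : D 1 2 3 1 = R 0 2 0 3 := by
    rw [hD2]
    simp only [con31, con12]
    linarith only [hA 0 3 0 2, hA 0 3 2 0, hA' 0 3 0 2,
      hA' 3 0 0 2, hP 0 3 0 2]
  have t1232 : D 1 2 3 2 = -R 0 1 0 3 := by
    rw [hD2]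
    simp only [con32, con12]
    linarith only [hA 0 3 0 1, hA 0 3 1 0, hA' 0 3 0 1,
      hA' 3 0 0 1, hP 0 3 0 1]
  have t1233 : D 1 2 3 3 = 0 := by
    rw [hD2]
    simp only [con33, con12, mul_zero, Finset.sum_const_zero]
    try norm_num
  have t1300 : D 1 3 0 0 = 0 := by
    rw [hD2]
    simp only [con00, con13, mul_zero, Finset.sum_const_zero]
    try norm_num
  have t1301 : D 1 3 0 1 = -R 0 2 2 3 := by
    rw [hD2]
    simp only [con01, con13]
    linarith only [hA 0 2 2 3, hA 0 2 3 2, hA' 0 2 2 3,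
      hA' 2 0 2 3, hP 0 2 2 3]
  have t1302 : D 1 3 0 2 = R 0 2 1 3 := by
    rw [hD2]
    simp only [con02, con13]
    linarith only [hA 0 2 1 3, hA 0 2 3 1, hA' 0 2 1 3,
      hA' 2 0 1 3, hP 0 2 1 3]
  have t1303 : D 1 3 0 3 = -R 0 2 1 2 := by
    rw [hD2]
    simp only [con03, con13]
    linarith only [hA 0 2 1 2, hA 0 2 2 1, hA' 0 2 1 2,
      hA' 2 0 1 2, hP 0 2 1 2]
  have t1310 : D 1 3 1 0 = R 0 2 2 3 := by
    rw [hD2]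
    simp only [con10, con13]
    linarith only [hA 0 2 2 3, hA 0 2 3 2, hA' 0 2 2 3,
      hA' 2 0 2 3, hP 0 2 2 3]
  have t1311 : D 1 3 1 1 = 0 := by
    rw [hD2]
    simp only [con11, con13, mul_zero, Finset.sum_const_zero]
    try norm_num
  have t1312 : D 1 3 1 2 = -R 0 2 0 3 := by
    rw [hD2]
    simp only [con12, con13]
    linarith only [hA 0 2 0 3, hA 0 2 3 0, hA' 0 2 0 3,
      hA' 2 0 0 3, hP 0 2 0 3]
  have t1313 : D 1 3 1 3 = R 0 2 0 2 := by
    rw [hD2]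
    simp only [con13, con13]
    linarith only [hA 0 2 0 2, hA 0 2 2 0, hA' 0 2 0 2,
      hA' 2 0 0 2, hP 0 2 0 2]
  have t1320 : D 1 3 2 0 = -R 0 2 1 3 := by
    rw [hD2]
    simp only [con20, con13]
    linarith only [hA 0 2 1 3, hA 0 2 3 1, hA' 0 2 1 3,
      hA' 2 0 1 3, hP 0 2 1 3]
  have t1321 : D 1 3 2 1 = R 0 2 0 3 := by
    rw [hD2]
    simp only [con21, con13]
    linarith only [hA 0 2 0 3, hA 0 2 3 0, hA' 0 2 0 3,
      hA' 2 0 0 3, hP 0 2 0 3]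
  have t1322 : D 1 3 2 2 = 0 := by
    rw [hD2]
    simp only [con22, con13, mul_zero, Finset.sum_const_zero]
    try norm_num
  have t1323 : D 1 3 2 3 = -R 0 1 0 2 := by
    rw [hD2]
    simp only [con23, con13]
    linarith only [hA 0 2 0 1, hA 0 2 1 0, hA' 0 2 0 1,
      hA' 2 0 0 1, hP 0 2 0 1]
  have t1330 : D 1 3 3 0 = R 0 2 1 2 := by
    rw [hD2]
    simp only [con30, con13]
    linarith only [hA 0 2 1 2, hA 0 2 2 1, hA' 0 2 1 2,
      hA' 2 0 1 2, hP 0 2 1 2]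
  have t1331 : D 1 3 3 1 = -R 0 2 0 2 := by
    rw [hD2]
    simp only [con31, con13]
    linarith only [hA 0 2 0 2, hA 0 2 2 0, hA' 0 2 0 2,
      hA' 2 0 0 2, hP 0 2 0 2]
  have t1332 : D 1 3 3 2 = R 0 1 0 2 := by
    rw [hD2]
    simp only [con32, con13]
    linarith only [hA 0 2 0 1, hA 0 2 1 0, hA' 0 2 0 1,
      hA' 2 0 0 1, hP 0 2 0 1]
  have t1333 : D 1 3 3 3 = 0 := by
    rw [hD2]
    simp only [con33, con13, mul_zero, Finset.sum_const_zero]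
    try norm_num
  have t2000 : D 2 0 0 0 = 0 := by
    rw [hD2]
    simp only [con00, con20, mul_zero, Finset.sum_const_zero]
    try norm_num
  have t2001 : D 2 0 0 1 = R 1 3 2 3 := by
    rw [hD2]
    simp only [con01, con20]
    linarith only [hA 1 3 2 3, hA 1 3 3 2, hA' 1 3 2 3,
      hA' 3 1 2 3, hP 1 3 2 3]
  have t2002 : D 2 0 0 2 = -R 1 3 1 3 := by
    rw [hD2]
    simp only [con02, con20]
    linarith only [hA 1 3 1 3, hA 1 3 3 1, hA' 1 3 1 3,
      hA' 3 1 1 3, hP 1 3 1 3]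
  have t2003 : D 2 0 0 3 = R 1 2 1 3 := by
    rw [hD2]
    simp only [con03, con20]
    linarith only [hA 1 3 1 2, hA 1 3 2 1, hA' 1 3 1 2,
      hA' 3 1 1 2, hP 1 3 1 2]
  have t2010 : D 2 0 1 0 = -R 1 3 2 3 := by
    rw [hD2]
    simp only [con10, con20]
    linarith only [hA 1 3 2 3, hA 1 3 3 2, hA' 1 3 2 3,
      hA' 3 1 2 3, hP 1 3 2 3]
  have t2011 : D 2 0 1 1 = 0 := by
    rw [hD2]
    simp only [con11, con20, mul_zero, Finset.sum_const_zero]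
    try norm_num
  have t2012 : D 2 0 1 2 = R 0 3 1 3 := by
    rw [hD2]
    simp only [con12, con20]
    linarith only [hA 1 3 0 3, hA 1 3 3 0, hA' 1 3 0 3,
      hA' 3 1 0 3, hP 1 3 0 3]
  have t2013 : D 2 0 1 3 = -R 0 2 1 3 := by
    rw [hD2]
    simp only [con13, con20]
    linarith only [hA 1 3 0 2, hA 1 3 2 0, hA' 1 3 0 2,
      hA' 3 1 0 2, hP 1 3 0 2]
  have t2020 : D 2 0 2 0 = R 1 3 1 3 := by
    rw [hD2]
    simp only [con20, con20]
    linarith only [hA 1 3 1 3, hA 1 3 3 1, hA' 1 3 1 3,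
      hA' 3 1 1 3, hP 1 3 1 3]
  have t2021 : D 2 0 2 1 = -R 0 3 1 3 := by
    rw [hD2]
    simp only [con21, con20]
    linarith only [hA 1 3 0 3, hA 1 3 3 0, hA' 1 3 0 3,
      hA' 3 1 0 3, hP 1 3 0 3]
  have t2022 : D 2 0 2 2 = 0 := by
    rw [hD2]
    simp only [con22, con20, mul_zero, Finset.sum_const_zero]
    try norm_num
  have t2023 : D 2 0 2 3 = R 0 1 1 3 := by
    rw [hD2]
    simp only [con23, con20]
    linarith only [hA 1 3 0 1, hA 1 3 1 0, hA' 1 3 0 1,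
      hA' 3 1 0 1, hP 1 3 0 1]
  have t2030 : D 2 0 3 0 = -R 1 2 1 3 := by
    rw [hD2]
    simp only [con30, con20]
    linarith only [hA 1 3 1 2, hA 1 3 2 1, hA' 1 3 1 2,
      hA' 3 1 1 2, hP 1 3 1 2]
  have t2031 : D 2 0 3 1 = R 0 2 1 3 := by
    rw [hD2]
    simp only [con31, con20]
    linarith only [hA 1 3 0 2, hA 1 3 2 0, hA' 1 3 0 2,
      hA' 3 1 0 2, hP 1 3 0 2]
  have t2032 : D 2 0 3 2 = -R 0 1 1 3 := by
    rw [hD2]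
    simp only [con32, con20]
    linarith only [hA 1 3 0 1, hA 1 3 1 0, hA' 1 3 0 1,
      hA' 3 1 0 1, hP 1 3 0 1]
  have t2033 : D 2 0 3 3 = 0 := by
    rw [hD2]
    simp only [con33, con20, mul_zero, Finset.sum_const_zero]
    try norm_num
  have t2100 : D 2 1 0 0 = 0 := by
    rw [hD2]
    simp only [con00, con21, mul_zero, Finset.sum_const_zero]
    try norm_num
  have t2101 : D 2 1 0 1 = -R 0 3 2 3 := by
    rw [hD2]
    simp only [con01, con21]
    linarith only [hA 0 3 2 3, hA 0 3 3 2, hA' 0 3 2 3,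
      hA' 3 0 2 3, hP 0 3 2 3]
  have t2102 : D 2 1 0 2 = R 0 3 1 3 := by
    rw [hD2]
    simp only [con02, con21]
    linarith only [hA 0 3 1 3, hA 0 3 3 1, hA' 0 3 1 3,
      hA' 3 0 1 3, hP 0 3 1 3]
  have t2103 : D 2 1 0 3 = -R 0 3 1 2 := by
    rw [hD2]
    simp only [con03, con21]
    linarith only [hA 0 3 1 2, hA 0 3 2 1, hA' 0 3 1 2,
      hA' 3 0 1 2, hP 0 3 1 2]
  have t2110 : D 2 1 1 0 = R 0 3 2 3 := by
    rw [hD2]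
    simp only [con10, con21]
    linarith only [hA 0 3 2 3, hA 0 3 3 2, hA' 0 3 2 3,
      hA' 3 0 2 3, hP 0 3 2 3]
  have t2111 : D 2 1 1 1 = 0 := by
    rw [hD2]
    simp only [con11, con21, mul_zero, Finset.sum_const_zero]
    try norm_num
  have t2112 : D 2 1 1 2 = -R 0 3 0 3 := by
    rw [hD2]
    simp only [con12, con21]
    linarith only [hA 0 3 0 3, hA 0 3 3 0, hA' 0 3 0 3,
      hA' 3 0 0 3, hP 0 3 0 3]
  have t2113 : D 2 1 1 3 = R 0 2 0 3 := by
    rw [hD2]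
    simp only [con13, con21]
    linarith only [hA 0 3 0 2, hA 0 3 2 0, hA' 0 3 0 2,
      hA' 3 0 0 2, hP 0 3 0 2]
  have t2120 : D 2 1 2 0 = -R 0 3 1 3 := by
    rw [hD2]
    simp only [con20, con21]
    linarith only [hA 0 3 1 3, hA 0 3 3 1, hA' 0 3 1 3,
      hA' 3 0 1 3, hP 0 3 1 3]
  have t2121 : D 2 1 2 1 = R 0 3 0 3 := by
    rw [hD2]
    simp only [con21, con21]
    linarith only [hA 0 3 0 3, hA 0 3 3 0, hA' 0 3 0 3,
      hA' 3 0 0 3, hP 0 3 0 3]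
  have t2122 : D 2 1 2 2 = 0 := by
    rw [hD2]
    simp only [con22, con21, mul_zero, Finset.sum_const_zero]
    try norm_num
  have t2123 : D 2 1 2 3 = -R 0 1 0 3 := by
    rw [hD2]
    simp only [con23, con21]
    linarith only [hA 0 3 0 1, hA 0 3 1 0, hA' 0 3 0 1,
      hA' 3 0 0 1, hP 0 3 0 1]
  have t2130 : D 2 1 3 0 = R 0 3 1 2 := by
    rw [hD2]
    simp only [con30, con21]
    linarith only [hA 0 3 1 2, hA 0 3 2 1, hA' 0 3 1 2,
      hA' 3 0 1 2, hP 0 3 1 2]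
  have t2131 : D 2 1 3 1 = -R 0 2 0 3 := by
    rw [hD2]
    simp only [con31, con21]
    linarith only [hA 0 3 0 2, hA 0 3 2 0, hA' 0 3 0 2,
      hA' 3 0 0 2, hP 0 3 0 2]
  have t2132 : D 2 1 3 2 = R 0 1 0 3 := by
    rw [hD2]
    simp only [con32, con21]
    linarith only [hA 0 3 0 1, hA 0 3 1 0, hA' 0 3 0 1,
      hA' 3 0 0 1, hP 0 3 0 1]
  have t2133 : D 2 1 3 3 = 0 := by
    rw [hD2]
    simp only [con33, con21, mul_zero, Finset.sum_const_zero]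
    try norm_num
  have t2200 : D 2 2 0 0 = 0 := by
    rw [hD2]
    simp only [con00, con22, mul_zero, Finset.sum_const_zero]
    try norm_num
  have t2201 : D 2 2 0 1 = 0 := by
    rw [hD2]
    simp only [con01, con22, mul_zero, Finset.sum_const_zero]
    try norm_num
  have t2202 : D 2 2 0 2 = 0 := by
    rw [hD2]
    simp only [con02, con22, mul_zero, Finset.sum_const_zero]
    try norm_num
  have t2203 : D 2 2 0 3 = 0 := by
    rw [hD2]
    simp only [con03, con22, mul_zero, Finset.sum_const_zero]
    try norm_num
  have t2210 : D 2 2 1 0 = 0 := by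
    rw [hD2]
    simp only [con10, con22, mul_zero, Finset.sum_const_zero]
    try norm_num
  have t2211 : D 2 2 1 1 = 0 := by
    rw [hD2]
    simp only [con11, con22, mul_zero, Finset.sum_const_zero]
    try norm_num
  have t2212 : D 2 2 1 2 = 0 := by
    rw [hD2]
    simp only [con12, con22, mul_zero, Finset.sum_const_zero]
    try norm_num
  have t2213 : D 2 2 1 3 = 0 := by
    rw [hD2]
    simp only [con13, con22, mul_zero, Finset.sum_const_zero]
    try norm_num
  have t2220 : D 2 2 2 0 = 0 := by
    rw [hD2]
    simp only [con20, con22, mul_zero, Finset.sum_const_zero]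
    try norm_num
  have t2221 : D 2 2 2 1 = 0 := by
    rw [hD2]
    simp only [con21, con22, mul_zero, Finset.sum_const_zero]
    try norm_num
  have t2222 : D 2 2 2 2 = 0 := by
    rw [hD2]
    simp only [con22, con22, mul_zero, Finset.sum_const_zero]
    try norm_num
  have t2223 : D 2 2 2 3 = 0 := by
    rw [hD2]
    simp only [con23, con22, mul_zero, Finset.sum_const_zero]
    try norm_num
  have t2230 : D 2 2 3 0 = 0 := by
    rw [hD2]
    simp only [con30, con22, mul_zero, Finset.sum_const_zero]
    try norm_num
  have t2231 : D 2 2 3 1 = 0 := by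
    rw [hD2]
    simp only [con31, con22, mul_zero, Finset.sum_const_zero]
    try norm_num
  have t2232 : D 2 2 3 2 = 0 := by
    rw [hD2]
    simp only [con32, con22, mul_zero, Finset.sum_const_zero]
    try norm_num
  have t2233 : D 2 2 3 3 = 0 := by
    rw [hD2]
    simp only [con33, con22, mul_zero, Finset.sum_const_zero]
    try norm_num
  have t2300 : D 2 3 0 0 = 0 := by
    rw [hD2]
    simp only [con00, con23, mul_zero, Finset.sum_const_zero]
    try norm_num
  have t2301 : D 2 3 0 1 = R 0 1 2 3 := by
    rw [hD2]
    simp only [con01, con23]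
    linarith only [hA 0 1 2 3, hA 0 1 3 2, hA' 0 1 2 3,
      hA' 1 0 2 3, hP 0 1 2 3]
  have t2302 : D 2 3 0 2 = -R 0 1 1 3 := by
    rw [hD2]
    simp only [con02, con23]
    linarith only [hA 0 1 1 3, hA 0 1 3 1, hA' 0 1 1 3,
      hA' 1 0 1 3, hP 0 1 1 3]
  have t2303 : D 2 3 0 3 = R 0 1 1 2 := by
    rw [hD2]
    simp only [con03, con23]
    linarith only [hA 0 1 1 2, hA 0 1 2 1, hA' 0 1 1 2,
      hA' 1 0 1 2, hP 0 1 1 2]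
  have t2310 : D 2 3 1 0 = -R 0 1 2 3 := by
    rw [hD2]
    simp only [con10, con23]
    linarith only [hA 0 1 2 3, hA 0 1 3 2, hA' 0 1 2 3,
      hA' 1 0 2 3, hP 0 1 2 3]
  have t2311 : D 2 3 1 1 = 0 := by
    rw [hD2]
    simp only [con11, con23, mul_zero, Finset.sum_const_zero]
    try norm_num
  have t2312 : D 2 3 1 2 = R 0 1 0 3 := by
    rw [hD2]
    simp only [con12, con23]
    linarith only [hA 0 1 0 3, hA 0 1 3 0, hA' 0 1 0 3,
      hA' 1 0 0 3, hP 0 1 0 3]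
  have t2313 : D 2 3 1 3 = -R 0 1 0 2 := by
    rw [hD2]
    simp only [con13, con23]
    linarith only [hA 0 1 0 2, hA 0 1 2 0, hA' 0 1 0 2,
      hA' 1 0 0 2, hP 0 1 0 2]
  have t2320 : D 2 3 2 0 = R 0 1 1 3 := by
    rw [hD2]
    simp only [con20, con23]
    linarith only [hA 0 1 1 3, hA 0 1 3 1, hA' 0 1 1 3,
      hA' 1 0 1 3, hP 0 1 1 3]
  have t2321 : D 2 3 2 1 = -R 0 1 0 3 := by
    rw [hD2]
    simp only [con21, con23]
    linarith only [hA 0 1 0 3, hA 0 1 3 0, hA' 0 1 0 3,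
      hA' 1 0 0 3, hP 0 1 0 3]
  have t2322 : D 2 3 2 2 = 0 := by
    rw [hD2]
    simp only [con22, con23, mul_zero, Finset.sum_const_zero]
    try norm_num
  have t2323 : D 2 3 2 3 = R 0 1 0 1 := by
    rw [hD2]
    simp only [con23, con23]
    linarith only [hA 0 1 0 1, hA 0 1 1 0, hA' 0 1 0 1,
      hA' 1 0 0 1, hP 0 1 0 1]
  have t2330 : D 2 3 3 0 = -R 0 1 1 2 := by
    rw [hD2]
    simp only [con30, con23]
    linarith only [hA 0 1 1 2, hA 0 1 2 1, hA' 0 1 1 2,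
      hA' 1 0 1 2, hP 0 1 1 2]
  have t2331 : D 2 3 3 1 = R 0 1 0 2 := by
    rw [hD2]
    simp only [con31, con23]
    linarith only [hA 0 1 0 2, hA 0 1 2 0, hA' 0 1 0 2,
      hA' 1 0 0 2, hP 0 1 0 2]
  have t2332 : D 2 3 3 2 = -R 0 1 0 1 := by
    rw [hD2]
    simp only [con32, con23]
    linarith only [hA 0 1 0 1, hA 0 1 1 0, hA' 0 1 0 1,
      hA' 1 0 0 1, hP 0 1 0 1]
  have t2333 : D 2 3 3 3 = 0 := by
    rw [hD2]
    simp only [con33, con23, mul_zero, Finset.sum_const_zero]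
    try norm_num
  have t3000 : D 3 0 0 0 = 0 := by
    rw [hD2]
    simp only [con00, con30, mul_zero, Finset.sum_const_zero]
    try norm_num
  have t3001 : D 3 0 0 1 = -R 1 2 2 3 := by
    rw [hD2]
    simp only [con01, con30]
    linarith only [hA 1 2 2 3, hA 1 2 3 2, hA' 1 2 2 3,
      hA' 2 1 2 3, hP 1 2 2 3]
  have t3002 : D 3 0 0 2 = R 1 2 1 3 := by
    rw [hD2]
    simp only [con02, con30]
    linarith only [hA 1 2 1 3, hA 1 2 3 1, hA' 1 2 1 3,
      hA' 2 1 1 3, hP 1 2 1 3]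
  have t3003 : D 3 0 0 3 = -R 1 2 1 2 := by
    rw [hD2]
    simp only [con03, con30]
    linarith only [hA 1 2 1 2, hA 1 2 2 1, hA' 1 2 1 2,
      hA' 2 1 1 2, hP 1 2 1 2]
  have t3010 : D 3 0 1 0 = R 1 2 2 3 := by
    rw [hD2]
    simp only [con10, con30]
    linarith only [hA 1 2 2 3, hA 1 2 3 2, hA' 1 2 2 3,
      hA' 2 1 2 3, hP 1 2 2 3]
  have t3011 : D 3 0 1 1 = 0 := by
    rw [hD2]
    simp only [con11, con30, mul_zero, Finset.sum_const_zero]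
    try norm_num
  have t3012 : D 3 0 1 2 = -R 0 3 1 2 := by
    rw [hD2]
    simp only [con12, con30]
    linarith only [hA 1 2 0 3, hA 1 2 3 0, hA' 1 2 0 3,
      hA' 2 1 0 3, hP 1 2 0 3]
  have t3013 : D 3 0 1 3 = R 0 2 1 2 := by
    rw [hD2]
    simp only [con13, con30]
    linarith only [hA 1 2 0 2, hA 1 2 2 0, hA' 1 2 0 2,
      hA' 2 1 0 2, hP 1 2 0 2]
  have t3020 : D 3 0 2 0 = -R 1 2 1 3 := by
    rw [hD2]
    simp only [con20, con30]
    linarith only [hA 1 2 1 3, hA 1 2 3 1, hA' 1 2 1 3,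
      hA' 2 1 1 3, hP 1 2 1 3]
  have t3021 : D 3 0 2 1 = R 0 3 1 2 := by
    rw [hD2]
    simp only [con21, con30]
    linarith only [hA 1 2 0 3, hA 1 2 3 0, hA' 1 2 0 3,
      hA' 2 1 0 3, hP 1 2 0 3]
  have t3022 : D 3 0 2 2 = 0 := by
    rw [hD2]
    simp only [con22, con30, mul_zero, Finset.sum_const_zero]
    try norm_num
  have t3023 : D 3 0 2 3 = -R 0 1 1 2 := by
    rw [hD2]
    simp only [con23, con30]
    linarith only [hA 1 2 0 1, hA 1 2 1 0, hA' 1 2 0 1,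
      hA' 2 1 0 1, hP 1 2 0 1]
  have t3030 : D 3 0 3 0 = R 1 2 1 2 := by
    rw [hD2]
    simp only [con30, con30]
    linarith only [hA 1 2 1 2, hA 1 2 2 1, hA' 1 2 1 2,
      hA' 2 1 1 2, hP 1 2 1 2]
  have t3031 : D 3 0 3 1 = -R 0 2 1 2 := by
    rw [hD2]
    simp only [con31, con30]
    linarith only [hA 1 2 0 2, hA 1 2 2 0, hA' 1 2 0 2,
      hA' 2 1 0 2, hP 1 2 0 2]
  have t3032 : D 3 0 3 2 = R 0 1 1 2 := by
    rw [hD2]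
    simp only [con32, con30]
    linarith only [hA 1 2 0 1, hA 1 2 1 0, hA' 1 2 0 1,
      hA' 2 1 0 1, hP 1 2 0 1]
  have t3033 : D 3 0 3 3 = 0 := by
    rw [hD2]
    simp only [con33, con30, mul_zero, Finset.sum_const_zero]
    try norm_num
  have t3100 : D 3 1 0 0 = 0 := by
    rw [hD2]
    simp only [con00, con31, mul_zero, Finset.sum_const_zero]
    try norm_num
  have t3101 : D 3 1 0 1 = R 0 2 2 3 := by
    rw [hD2]
    simp only [con01, con31]
    linarith only [hA 0 2 2 3, hA 0 2 3 2, hA' 0 2 2 3,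
      hA' 2 0 2 3, hP 0 2 2 3]
  have t3102 : D 3 1 0 2 = -R 0 2 1 3 := by
    rw [hD2]
    simp only [con02, con31]
    linarith only [hA 0 2 1 3, hA 0 2 3 1, hA' 0 2 1 3,
      hA' 2 0 1 3, hP 0 2 1 3]
  have t3103 : D 3 1 0 3 = R 0 2 1 2 := by
    rw [hD2]
    simp only [con03, con31]
    linarith only [hA 0 2 1 2, hA 0 2 2 1, hA' 0 2 1 2,
      hA' 2 0 1 2, hP 0 2 1 2]
  have t3110 : D 3 1 1 0 = -R 0 2 2 3 := by
    rw [hD2]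
    simp only [con10, con31]
    linarith only [hA 0 2 2 3, hA 0 2 3 2, hA' 0 2 2 3,
      hA' 2 0 2 3, hP 0 2 2 3]
  have t3111 : D 3 1 1 1 = 0 := by
    rw [hD2]
    simp only [con11, con31, mul_zero, Finset.sum_const_zero]
    try norm_num
  have t3112 : D 3 1 1 2 = R 0 2 0 3 := by
    rw [hD2]
    simp only [con12, con31]
    linarith only [hA 0 2 0 3, hA 0 2 3 0, hA' 0 2 0 3,
      hA' 2 0 0 3, hP 0 2 0 3]
  have t3113 : D 3 1 1 3 = -R 0 2 0 2 := by
    rw [hD2]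
    simp only [con13, con31]
    linarith only [hA 0 2 0 2, hA 0 2 2 0, hA' 0 2 0 2,
      hA' 2 0 0 2, hP 0 2 0 2]
  have t3120 : D 3 1 2 0 = R 0 2 1 3 := by
    rw [hD2]
    simp only [con20, con31]
    linarith only [hA 0 2 1 3, hA 0 2 3 1, hA' 0 2 1 3,
      hA' 2 0 1 3, hP 0 2 1 3]
  have t3121 : D 3 1 2 1 = -R 0 2 0 3 := by
    rw [hD2]
    simp only [con21, con31]
    linarith only [hA 0 2 0 3, hA 0 2 3 0, hA' 0 2 0 3,
      hA' 2 0 0 3, hP 0 2 0 3]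
  have t3122 : D 3 1 2 2 = 0 := by
    rw [hD2]
    simp only [con22, con31, mul_zero, Finset.sum_const_zero]
    try norm_num
  have t3123 : D 3 1 2 3 = R 0 1 0 2 := by
    rw [hD2]
    simp only [con23, con31]
    linarith only [hA 0 2 0 1, hA 0 2 1 0, hA' 0 2 0 1,
      hA' 2 0 0 1, hP 0 2 0 1]
  have t3130 : D 3 1 3 0 = -R 0 2 1 2 := by
    rw [hD2]
    simp only [con30, con31]
    linarith only [hA 0 2 1 2, hA 0 2 2 1, hA' 0 2 1 2,
      hA' 2 0 1 2, hP 0 2 1 2]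
  have t3131 : D 3 1 3 1 = R 0 2 0 2 := by
    rw [hD2]
    simp only [con31, con31]
    linarith only [hA 0 2 0 2, hA 0 2 2 0, hA' 0 2 0 2,
      hA' 2 0 0 2, hP 0 2 0 2]
  have t3132 : D 3 1 3 2 = -R 0 1 0 2 := by
    rw [hD2]
    simp only [con32, con31]
    linarith only [hA 0 2 0 1, hA 0 2 1 0, hA' 0 2 0 1,
      hA' 2 0 0 1, hP 0 2 0 1]
  have t3133 : D 3 1 3 3 = 0 := by
    rw [hD2]
    simp only [con33, con31, mul_zero, Finset.sum_const_zero]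
    try norm_num
  have t3200 : D 3 2 0 0 = 0 := by
    rw [hD2]
    simp only [con00, con32, mul_zero, Finset.sum_const_zero]
    try norm_num
  have t3201 : D 3 2 0 1 = -R 0 1 2 3 := by
    rw [hD2]
    simp only [con01, con32]
    linarith only [hA 0 1 2 3, hA 0 1 3 2, hA' 0 1 2 3,
      hA' 1 0 2 3, hP 0 1 2 3]
  have t3202 : D 3 2 0 2 = R 0 1 1 3 := by
    rw [hD2]
    simp only [con02, con32]
    linarith only [hA 0 1 1 3, hA 0 1 3 1, hA' 0 1 1 3,
      hA' 1 0 1 3, hP 0 1 1 3]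
  have t3203 : D 3 2 0 3 = -R 0 1 1 2 := by
    rw [hD2]
    simp only [con03, con32]
    linarith only [hA 0 1 1 2, hA 0 1 2 1, hA' 0 1 1 2,
      hA' 1 0 1 2, hP 0 1 1 2]
  have t3210 : D 3 2 1 0 = R 0 1 2 3 := by
    rw [hD2]
    simp only [con10, con32]
    linarith only [hA 0 1 2 3, hA 0 1 3 2, hA' 0 1 2 3,
      hA' 1 0 2 3, hP 0 1 2 3]
  have t3211 : D 3 2 1 1 = 0 := by
    rw [hD2]
    simp only [con11, con32, mul_zero, Finset.sum_const_zero]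
    try norm_num
  have t3212 : D 3 2 1 2 = -R 0 1 0 3 := by
    rw [hD2]
    simp only [con12, con32]
    linarith only [hA 0 1 0 3, hA 0 1 3 0, hA' 0 1 0 3,
      hA' 1 0 0 3, hP 0 1 0 3]
  have t3213 : D 3 2 1 3 = R 0 1 0 2 := by
    rw [hD2]
    simp only [con13, con32]
    linarith only [hA 0 1 0 2, hA 0 1 2 0, hA' 0 1 0 2,
      hA' 1 0 0 2, hP 0 1 0 2]
  have t3220 : D 3 2 2 0 = -R 0 1 1 3 := by
    rw [hD2]
    simp only [con20, con32]
    linarith only [hA 0 1 1 3, hA 0 1 3 1, hA' 0 1 1 3,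
      hA' 1 0 1 3, hP 0 1 1 3]
  have t3221 : D 3 2 2 1 = R 0 1 0 3 := by
    rw [hD2]
    simp only [con21, con32]
    linarith only [hA 0 1 0 3, hA 0 1 3 0, hA' 0 1 0 3,
      hA' 1 0 0 3, hP 0 1 0 3]
  have t3222 : D 3 2 2 2 = 0 := by
    rw [hD2]
    simp only [con22, con32, mul_zero, Finset.sum_const_zero]
    try norm_num
  have t3223 : D 3 2 2 3 = -R 0 1 0 1 := by
    rw [hD2]
    simp only [con23, con32]
    linarith only [hA 0 1 0 1, hA 0 1 1 0, hA' 0 1 0 1,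
      hA' 1 0 0 1, hP 0 1 0 1]
  have t3230 : D 3 2 3 0 = R 0 1 1 2 := by
    rw [hD2]
    simp only [con30, con32]
    linarith only [hA 0 1 1 2, hA 0 1 2 1, hA' 0 1 1 2,
      hA' 1 0 1 2, hP 0 1 1 2]
  have t3231 : D 3 2 3 1 = -R 0 1 0 2 := by
    rw [hD2]
    simp only [con31, con32]
    linarith only [hA 0 1 0 2, hA 0 1 2 0, hA' 0 1 0 2,
      hA' 1 0 0 2, hP 0 1 0 2]
  have t3232 : D 3 2 3 2 = R 0 1 0 1 := by
    rw [hD2]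
    simp only [con32, con32]
    linarith only [hA 0 1 0 1, hA 0 1 1 0, hA' 0 1 0 1,
      hA' 1 0 0 1, hP 0 1 0 1]
  have t3233 : D 3 2 3 3 = 0 := by
    rw [hD2]
    simp only [con33, con32, mul_zero, Finset.sum_const_zero]
    try norm_num
  have t3300 : D 3 3 0 0 = 0 := by
    rw [hD2]
    simp only [con00, con33, mul_zero, Finset.sum_const_zero]
    try norm_num
  have t3301 : D 3 3 0 1 = 0 := by
    rw [hD2]
    simp only [con01, con33, mul_zero, Finset.sum_const_zero]
    try norm_num
  have t3302 : D 3 3 0 2 = 0 := by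
    rw [hD2]
    simp only [con02, con33, mul_zero, Finset.sum_const_zero]
    try norm_num
  have t3303 : D 3 3 0 3 = 0 := by
    rw [hD2]
    simp only [con03, con33, mul_zero, Finset.sum_const_zero]
    try norm_num
  have t3310 : D 3 3 1 0 = 0 := by
    rw [hD2]
    simp only [con10, con33, mul_zero, Finset.sum_const_zero]
    try norm_num
  have t3311 : D 3 3 1 1 = 0 := by
    rw [hD2]
    simp only [con11, con33, mul_zero, Finset.sum_const_zero]
    try norm_num
  have t3312 : D 3 3 1 2 = 0 := by
    rw [hD2]
    simp only [con12, con33, mul_zero, Finset.sum_const_zero]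
    try norm_num
  have t3313 : D 3 3 1 3 = 0 := by
    rw [hD2]
    simp only [con13, con33, mul_zero, Finset.sum_const_zero]
    try norm_num
  have t3320 : D 3 3 2 0 = 0 := by
    rw [hD2]
    simp only [con20, con33, mul_zero, Finset.sum_const_zero]
    try norm_num
  have t3321 : D 3 3 2 1 = 0 := by
    rw [hD2]
    simp only [con21, con33, mul_zero, Finset.sum_const_zero]
    try norm_num
  have t3322 : D 3 3 2 2 = 0 := by
    rw [hD2]
    simp only [con22, con33, mul_zero, Finset.sum_const_zero]
    try norm_num
  have t3323 : D 3 3 2 3 = 0 := by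
    rw [hD2]
    simp only [con23, con33, mul_zero, Finset.sum_const_zero]
    try norm_num
  have t3330 : D 3 3 3 0 = 0 := by
    rw [hD2]
    simp only [con30, con33, mul_zero, Finset.sum_const_zero]
    try norm_num
  have t3331 : D 3 3 3 1 = 0 := by
    rw [hD2]
    simp only [con31, con33, mul_zero, Finset.sum_const_zero]
    try norm_num
  have t3332 : D 3 3 3 2 = 0 := by
    rw [hD2]
    simp only [con32, con33, mul_zero, Finset.sum_const_zero]
    try norm_num
  have t3333 : D 3 3 3 3 = 0 := by
    rw [hD2]
    simp only [con33, con33, mul_zero, Finset.sum_const_zero]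
    try norm_num
  refine ⟨?_, ?_, ?_, ?_⟩
  · intro i j k l
    rw [hD i j k l, hD k l i j]
    congr 1
    rw [show (∑ p, ∑ q, ∑ r, ∑ s, eps i j p q * eps k l r s * R p q r s)
        = ∑ p, ∑ q, ∑ r, ∑ s, eps i j r s * eps k l p q * R r s p q from
      sum_swap4 fun p q r s => eps i j p q * eps k l r s * R p q r s]
    refine Finset.sum_congr rfl fun p _ => Finset.sum_congr rfl fun q _ =>
      Finset.sum_congr rfl fun r _ => Finset.sum_congr rfl fun s _ => ?_
    rw [hP r s p q]
    ring
  · intro x y z w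
    fin_cases x <;> fin_cases y <;> fin_cases z <;> fin_cases w
    · show D 0 0 0 0 + D 0 0 0 0 + D 0 0 0 0 = 0
      linarith only [t0000, t0000, t0000, hBc]
    · show D 0 0 0 1 + D 0 0 0 1 + D 0 0 0 1 = 0
      linarith only [t0001, t0001, t0001, hBc]
    · show D 0 0 0 2 + D 0 0 0 2 + D 0 0 0 2 = 0
      linarith only [t0002, t0002, t0002, hBc]
    · show D 0 0 0 3 + D 0 0 0 3 + D 0 0 0 3 = 0
      linarith only [t0003, t0003, t0003, hBc]
    · show D 0 0 1 0 + D 0 1 0 0 + D 1 0 0 0 = 0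
      linarith only [t0010, t0100, t1000, hBc]
    · show D 0 0 1 1 + D 0 1 0 1 + D 1 0 0 1 = 0
      linarith only [t0011, t0101, t1001, hBc]
    · show D 0 0 1 2 + D 0 1 0 2 + D 1 0 0 2 = 0
      linarith only [t0012, t0102, t1002, hBc]
    · show D 0 0 1 3 + D 0 1 0 3 + D 1 0 0 3 = 0
      linarith only [t0013, t0103, t1003, hBc]
    · show D 0 0 2 0 + D 0 2 0 0 + D 2 0 0 0 = 0
      linarith only [t0020, t0200, t2000, hBc]
    · show D 0 0 2 1 + D 0 2 0 1 + D 2 0 0 1 = 0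
      linarith only [t0021, t0201, t2001, hBc]
    · show D 0 0 2 2 + D 0 2 0 2 + D 2 0 0 2 = 0
      linarith only [t0022, t0202, t2002, hBc]
    · show D 0 0 2 3 + D 0 2 0 3 + D 2 0 0 3 = 0
      linarith only [t0023, t0203, t2003, hBc]
    · show D 0 0 3 0 + D 0 3 0 0 + D 3 0 0 0 = 0
      linarith only [t0030, t0300, t3000, hBc]
    · show D 0 0 3 1 + D 0 3 0 1 + D 3 0 0 1 = 0
      linarith only [t0031, t0301, t3001, hBc]
    · show D 0 0 3 2 + D 0 3 0 2 + D 3 0 0 2 = 0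
      linarith only [t0032, t0302, t3002, hBc]
    · show D 0 0 3 3 + D 0 3 0 3 + D 3 0 0 3 = 0
      linarith only [t0033, t0303, t3003, hBc]
    · show D 0 1 0 0 + D 1 0 0 0 + D 0 0 1 0 = 0
      linarith only [t0100, t1000, t0010, hBc]
    · show D 0 1 0 1 + D 1 0 0 1 + D 0 0 1 1 = 0
      linarith only [t0101, t1001, t0011, hBc]
    · show D 0 1 0 2 + D 1 0 0 2 + D 0 0 1 2 = 0
      linarith only [t0102, t1002, t0012, hBc]
    · show D 0 1 0 3 + D 1 0 0 3 + D 0 0 1 3 = 0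
      linarith only [t0103, t1003, t0013, hBc]
    · show D 0 1 1 0 + D 1 1 0 0 + D 1 0 1 0 = 0
      linarith only [t0110, t1100, t1010, hBc]
    · show D 0 1 1 1 + D 1 1 0 1 + D 1 0 1 1 = 0
      linarith only [t0111, t1101, t1011, hBc]
    · show D 0 1 1 2 + D 1 1 0 2 + D 1 0 1 2 = 0
      linarith only [t0112, t1102, t1012, hBc]
    · show D 0 1 1 3 + D 1 1 0 3 + D 1 0 1 3 = 0
      linarith only [t0113, t1103, t1013, hBc]
    · show D 0 1 2 0 + D 1 2 0 0 + D 2 0 1 0 = 0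
      linarith only [t0120, t1200, t2010, hBc]
    · show D 0 1 2 1 + D 1 2 0 1 + D 2 0 1 1 = 0
      linarith only [t0121, t1201, t2011, hBc]
    · show D 0 1 2 2 + D 1 2 0 2 + D 2 0 1 2 = 0
      linarith only [t0122, t1202, t2012, hBc]
    · show D 0 1 2 3 + D 1 2 0 3 + D 2 0 1 3 = 0
      linarith only [t0123, t1203, t2013, hBc]
    · show D 0 1 3 0 + D 1 3 0 0 + D 3 0 1 0 = 0
      linarith only [t0130, t1300, t3010, hBc]
    · show D 0 1 3 1 + D 1 3 0 1 + D 3 0 1 1 = 0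
      linarith only [t0131, t1301, t3011, hBc]
    · show D 0 1 3 2 + D 1 3 0 2 + D 3 0 1 2 = 0
      linarith only [t0132, t1302, t3012, hBc]
    · show D 0 1 3 3 + D 1 3 0 3 + D 3 0 1 3 = 0
      linarith only [t0133, t1303, t3013, hBc]
    · show D 0 2 0 0 + D 2 0 0 0 + D 0 0 2 0 = 0
      linarith only [t0200, t2000, t0020, hBc]
    · show D 0 2 0 1 + D 2 0 0 1 + D 0 0 2 1 = 0
      linarith only [t0201, t2001, t0021, hBc]
    · show D 0 2 0 2 + D 2 0 0 2 + D 0 0 2 2 = 0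
      linarith only [t0202, t2002, t0022, hBc]
    · show D 0 2 0 3 + D 2 0 0 3 + D 0 0 2 3 = 0
      linarith only [t0203, t2003, t0023, hBc]
    · show D 0 2 1 0 + D 2 1 0 0 + D 1 0 2 0 = 0
      linarith only [t0210, t2100, t1020, hBc]
    · show D 0 2 1 1 + D 2 1 0 1 + D 1 0 2 1 = 0
      linarith only [t0211, t2101, t1021, hBc]
    · show D 0 2 1 2 + D 2 1 0 2 + D 1 0 2 2 = 0
      linarith only [t0212, t2102, t1022, hBc]
    · show D 0 2 1 3 + D 2 1 0 3 + D 1 0 2 3 = 0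
      linarith only [t0213, t2103, t1023, hBc]
    · show D 0 2 2 0 + D 2 2 0 0 + D 2 0 2 0 = 0
      linarith only [t0220, t2200, t2020, hBc]
    · show D 0 2 2 1 + D 2 2 0 1 + D 2 0 2 1 = 0
      linarith only [t0221, t2201, t2021, hBc]
    · show D 0 2 2 2 + D 2 2 0 2 + D 2 0 2 2 = 0
      linarith only [t0222, t2202, t2022, hBc]
    · show D 0 2 2 3 + D 2 2 0 3 + D 2 0 2 3 = 0
      linarith only [t0223, t2203, t2023, hBc]
    · show D 0 2 3 0 + D 2 3 0 0 + D 3 0 2 0 = 0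
      linarith only [t0230, t2300, t3020, hBc]
    · show D 0 2 3 1 + D 2 3 0 1 + D 3 0 2 1 = 0
      linarith only [t0231, t2301, t3021, hBc]
    · show D 0 2 3 2 + D 2 3 0 2 + D 3 0 2 2 = 0
      linarith only [t0232, t2302, t3022, hBc]
    · show D 0 2 3 3 + D 2 3 0 3 + D 3 0 2 3 = 0
      linarith only [t0233, t2303, t3023, hBc]
    · show D 0 3 0 0 + D 3 0 0 0 + D 0 0 3 0 = 0
      linarith only [t0300, t3000, t0030, hBc]
    · show D 0 3 0 1 + D 3 0 0 1 + D 0 0 3 1 = 0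
      linarith only [t0301, t3001, t0031, hBc]
    · show D 0 3 0 2 + D 3 0 0 2 + D 0 0 3 2 = 0
      linarith only [t0302, t3002, t0032, hBc]
    · show D 0 3 0 3 + D 3 0 0 3 + D 0 0 3 3 = 0
      linarith only [t0303, t3003, t0033, hBc]
    · show D 0 3 1 0 + D 3 1 0 0 + D 1 0 3 0 = 0
      linarith only [t0310, t3100, t1030, hBc]
    · show D 0 3 1 1 + D 3 1 0 1 + D 1 0 3 1 = 0
      linarith only [t0311, t3101, t1031, hBc]
    · show D 0 3 1 2 + D 3 1 0 2 + D 1 0 3 2 = 0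
      linarith only [t0312, t3102, t1032, hBc]
    · show D 0 3 1 3 + D 3 1 0 3 + D 1 0 3 3 = 0
      linarith only [t0313, t3103, t1033, hBc]
    · show D 0 3 2 0 + D 3 2 0 0 + D 2 0 3 0 = 0
      linarith only [t0320, t3200, t2030, hBc]
    · show D 0 3 2 1 + D 3 2 0 1 + D 2 0 3 1 = 0
      linarith only [t0321, t3201, t2031, hBc]
    · show D 0 3 2 2 + D 3 2 0 2 + D 2 0 3 2 = 0
      linarith only [t0322, t3202, t2032, hBc]
    · show D 0 3 2 3 + D 3 2 0 3 + D 2 0 3 3 = 0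
      linarith only [t0323, t3203, t2033, hBc]
    · show D 0 3 3 0 + D 3 3 0 0 + D 3 0 3 0 = 0
      linarith only [t0330, t3300, t3030, hBc]
    · show D 0 3 3 1 + D 3 3 0 1 + D 3 0 3 1 = 0
      linarith only [t0331, t3301, t3031, hBc]
    · show D 0 3 3 2 + D 3 3 0 2 + D 3 0 3 2 = 0
      linarith only [t0332, t3302, t3032, hBc]
    · show D 0 3 3 3 + D 3 3 0 3 + D 3 0 3 3 = 0
      linarith only [t0333, t3303, t3033, hBc]
    · show D 1 0 0 0 + D 0 0 1 0 + D 0 1 0 0 = 0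
      linarith only [t1000, t0010, t0100, hBc]
    · show D 1 0 0 1 + D 0 0 1 1 + D 0 1 0 1 = 0
      linarith only [t1001, t0011, t0101, hBc]
    · show D 1 0 0 2 + D 0 0 1 2 + D 0 1 0 2 = 0
      linarith only [t1002, t0012, t0102, hBc]
    · show D 1 0 0 3 + D 0 0 1 3 + D 0 1 0 3 = 0
      linarith only [t1003, t0013, t0103, hBc]
    · show D 1 0 1 0 + D 0 1 1 0 + D 1 1 0 0 = 0
      linarith only [t1010, t0110, t1100, hBc]
    · show D 1 0 1 1 + D 0 1 1 1 + D 1 1 0 1 = 0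
      linarith only [t1011, t0111, t1101, hBc]
    · show D 1 0 1 2 + D 0 1 1 2 + D 1 1 0 2 = 0
      linarith only [t1012, t0112, t1102, hBc]
    · show D 1 0 1 3 + D 0 1 1 3 + D 1 1 0 3 = 0
      linarith only [t1013, t0113, t1103, hBc]
    · show D 1 0 2 0 + D 0 2 1 0 + D 2 1 0 0 = 0
      linarith only [t1020, t0210, t2100, hBc]
    · show D 1 0 2 1 + D 0 2 1 1 + D 2 1 0 1 = 0
      linarith only [t1021, t0211, t2101, hBc]
    · show D 1 0 2 2 + D 0 2 1 2 + D 2 1 0 2 = 0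
      linarith only [t1022, t0212, t2102, hBc]
    · show D 1 0 2 3 + D 0 2 1 3 + D 2 1 0 3 = 0
      linarith only [t1023, t0213, t2103, hBc]
    · show D 1 0 3 0 + D 0 3 1 0 + D 3 1 0 0 = 0
      linarith only [t1030, t0310, t3100, hBc]
    · show D 1 0 3 1 + D 0 3 1 1 + D 3 1 0 1 = 0
      linarith only [t1031, t0311, t3101, hBc]
    · show D 1 0 3 2 + D 0 3 1 2 + D 3 1 0 2 = 0
      linarith only [t1032, t0312, t3102, hBc]
    · show D 1 0 3 3 + D 0 3 1 3 + D 3 1 0 3 = 0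
      linarith only [t1033, t0313, t3103, hBc]
    · show D 1 1 0 0 + D 1 0 1 0 + D 0 1 1 0 = 0
      linarith only [t1100, t1010, t0110, hBc]
    · show D 1 1 0 1 + D 1 0 1 1 + D 0 1 1 1 = 0
      linarith only [t1101, t1011, t0111, hBc]
    · show D 1 1 0 2 + D 1 0 1 2 + D 0 1 1 2 = 0
      linarith only [t1102, t1012, t0112, hBc]
    · show D 1 1 0 3 + D 1 0 1 3 + D 0 1 1 3 = 0
      linarith only [t1103, t1013, t0113, hBc]
    · show D 1 1 1 0 + D 1 1 1 0 + D 1 1 1 0 = 0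
      linarith only [t1110, t1110, t1110, hBc]
    · show D 1 1 1 1 + D 1 1 1 1 + D 1 1 1 1 = 0
      linarith only [t1111, t1111, t1111, hBc]
    · show D 1 1 1 2 + D 1 1 1 2 + D 1 1 1 2 = 0
      linarith only [t1112, t1112, t1112, hBc]
    · show D 1 1 1 3 + D 1 1 1 3 + D 1 1 1 3 = 0
      linarith only [t1113, t1113, t1113, hBc]
    · show D 1 1 2 0 + D 1 2 1 0 + D 2 1 1 0 = 0
      linarith only [t1120, t1210, t2110, hBc]
    · show D 1 1 2 1 + D 1 2 1 1 + D 2 1 1 1 = 0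
      linarith only [t1121, t1211, t2111, hBc]
    · show D 1 1 2 2 + D 1 2 1 2 + D 2 1 1 2 = 0
      linarith only [t1122, t1212, t2112, hBc]
    · show D 1 1 2 3 + D 1 2 1 3 + D 2 1 1 3 = 0
      linarith only [t1123, t1213, t2113, hBc]
    · show D 1 1 3 0 + D 1 3 1 0 + D 3 1 1 0 = 0
      linarith only [t1130, t1310, t3110, hBc]
    · show D 1 1 3 1 + D 1 3 1 1 + D 3 1 1 1 = 0
      linarith only [t1131, t1311, t3111, hBc]
    · show D 1 1 3 2 + D 1 3 1 2 + D 3 1 1 2 = 0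
      linarith only [t1132, t1312, t3112, hBc]
    · show D 1 1 3 3 + D 1 3 1 3 + D 3 1 1 3 = 0
      linarith only [t1133, t1313, t3113, hBc]
    · show D 1 2 0 0 + D 2 0 1 0 + D 0 1 2 0 = 0
      linarith only [t1200, t2010, t0120, hBc]
    · show D 1 2 0 1 + D 2 0 1 1 + D 0 1 2 1 = 0
      linarith only [t1201, t2011, t0121, hBc]
    · show D 1 2 0 2 + D 2 0 1 2 + D 0 1 2 2 = 0
      linarith only [t1202, t2012, t0122, hBc]
    · show D 1 2 0 3 + D 2 0 1 3 + D 0 1 2 3 = 0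
      linarith only [t1203, t2013, t0123, hBc]
    · show D 1 2 1 0 + D 2 1 1 0 + D 1 1 2 0 = 0
      linarith only [t1210, t2110, t1120, hBc]
    · show D 1 2 1 1 + D 2 1 1 1 + D 1 1 2 1 = 0
      linarith only [t1211, t2111, t1121, hBc]
    · show D 1 2 1 2 + D 2 1 1 2 + D 1 1 2 2 = 0
      linarith only [t1212, t2112, t1122, hBc]
    · show D 1 2 1 3 + D 2 1 1 3 + D 1 1 2 3 = 0
      linarith only [t1213, t2113, t1123, hBc]
    · show D 1 2 2 0 + D 2 2 1 0 + D 2 1 2 0 = 0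
      linarith only [t1220, t2210, t2120, hBc]
    · show D 1 2 2 1 + D 2 2 1 1 + D 2 1 2 1 = 0
      linarith only [t1221, t2211, t2121, hBc]
    · show D 1 2 2 2 + D 2 2 1 2 + D 2 1 2 2 = 0
      linarith only [t1222, t2212, t2122, hBc]
    · show D 1 2 2 3 + D 2 2 1 3 + D 2 1 2 3 = 0
      linarith only [t1223, t2213, t2123, hBc]
    · show D 1 2 3 0 + D 2 3 1 0 + D 3 1 2 0 = 0
      linarith only [t1230, t2310, t3120, hBc]
    · show D 1 2 3 1 + D 2 3 1 1 + D 3 1 2 1 = 0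
      linarith only [t1231, t2311, t3121, hBc]
    · show D 1 2 3 2 + D 2 3 1 2 + D 3 1 2 2 = 0
      linarith only [t1232, t2312, t3122, hBc]
    · show D 1 2 3 3 + D 2 3 1 3 + D 3 1 2 3 = 0
      linarith only [t1233, t2313, t3123, hBc]
    · show D 1 3 0 0 + D 3 0 1 0 + D 0 1 3 0 = 0
      linarith only [t1300, t3010, t0130, hBc]
    · show D 1 3 0 1 + D 3 0 1 1 + D 0 1 3 1 = 0
      linarith only [t1301, t3011, t0131, hBc]
    · show D 1 3 0 2 + D 3 0 1 2 + D 0 1 3 2 = 0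
      linarith only [t1302, t3012, t0132, hBc]
    · show D 1 3 0 3 + D 3 0 1 3 + D 0 1 3 3 = 0
      linarith only [t1303, t3013, t0133, hBc]
    · show D 1 3 1 0 + D 3 1 1 0 + D 1 1 3 0 = 0
      linarith only [t1310, t3110, t1130, hBc]
    · show D 1 3 1 1 + D 3 1 1 1 + D 1 1 3 1 = 0
      linarith only [t1311, t3111, t1131, hBc]
    · show D 1 3 1 2 + D 3 1 1 2 + D 1 1 3 2 = 0
      linarith only [t1312, t3112, t1132, hBc]
    · show D 1 3 1 3 + D 3 1 1 3 + D 1 1 3 3 = 0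
      linarith only [t1313, t3113, t1133, hBc]
    · show D 1 3 2 0 + D 3 2 1 0 + D 2 1 3 0 = 0
      linarith only [t1320, t3210, t2130, hBc]
    · show D 1 3 2 1 + D 3 2 1 1 + D 2 1 3 1 = 0
      linarith only [t1321, t3211, t2131, hBc]
    · show D 1 3 2 2 + D 3 2 1 2 + D 2 1 3 2 = 0
      linarith only [t1322, t3212, t2132, hBc]
    · show D 1 3 2 3 + D 3 2 1 3 + D 2 1 3 3 = 0
      linarith only [t1323, t3213, t2133, hBc]
    · show D 1 3 3 0 + D 3 3 1 0 + D 3 1 3 0 = 0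
      linarith only [t1330, t3310, t3130, hBc]
    · show D 1 3 3 1 + D 3 3 1 1 + D 3 1 3 1 = 0
      linarith only [t1331, t3311, t3131, hBc]
    · show D 1 3 3 2 + D 3 3 1 2 + D 3 1 3 2 = 0
      linarith only [t1332, t3312, t3132, hBc]
    · show D 1 3 3 3 + D 3 3 1 3 + D 3 1 3 3 = 0
      linarith only [t1333, t3313, t3133, hBc]
    · show D 2 0 0 0 + D 0 0 2 0 + D 0 2 0 0 = 0
      linarith only [t2000, t0020, t0200, hBc]
    · show D 2 0 0 1 + D 0 0 2 1 + D 0 2 0 1 = 0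
      linarith only [t2001, t0021, t0201, hBc]
    · show D 2 0 0 2 + D 0 0 2 2 + D 0 2 0 2 = 0
      linarith only [t2002, t0022, t0202, hBc]
    · show D 2 0 0 3 + D 0 0 2 3 + D 0 2 0 3 = 0
      linarith only [t2003, t0023, t0203, hBc]
    · show D 2 0 1 0 + D 0 1 2 0 + D 1 2 0 0 = 0
      linarith only [t2010, t0120, t1200, hBc]
    · show D 2 0 1 1 + D 0 1 2 1 + D 1 2 0 1 = 0
      linarith only [t2011, t0121, t1201, hBc]
    · show D 2 0 1 2 + D 0 1 2 2 + D 1 2 0 2 = 0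
      linarith only [t2012, t0122, t1202, hBc]
    · show D 2 0 1 3 + D 0 1 2 3 + D 1 2 0 3 = 0
      linarith only [t2013, t0123, t1203, hBc]
    · show D 2 0 2 0 + D 0 2 2 0 + D 2 2 0 0 = 0
      linarith only [t2020, t0220, t2200, hBc]
    · show D 2 0 2 1 + D 0 2 2 1 + D 2 2 0 1 = 0
      linarith only [t2021, t0221, t2201, hBc]
    · show D 2 0 2 2 + D 0 2 2 2 + D 2 2 0 2 = 0
      linarith only [t2022, t0222, t2202, hBc]
    · show D 2 0 2 3 + D 0 2 2 3 + D 2 2 0 3 = 0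
      linarith only [t2023, t0223, t2203, hBc]
    · show D 2 0 3 0 + D 0 3 2 0 + D 3 2 0 0 = 0
      linarith only [t2030, t0320, t3200, hBc]
    · show D 2 0 3 1 + D 0 3 2 1 + D 3 2 0 1 = 0
      linarith only [t2031, t0321, t3201, hBc]
    · show D 2 0 3 2 + D 0 3 2 2 + D 3 2 0 2 = 0
      linarith only [t2032, t0322, t3202, hBc]
    · show D 2 0 3 3 + D 0 3 2 3 + D 3 2 0 3 = 0
      linarith only [t2033, t0323, t3203, hBc]
    · show D 2 1 0 0 + D 1 0 2 0 + D 0 2 1 0 = 0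
      linarith only [t2100, t1020, t0210, hBc]
    · show D 2 1 0 1 + D 1 0 2 1 + D 0 2 1 1 = 0
      linarith only [t2101, t1021, t0211, hBc]
    · show D 2 1 0 2 + D 1 0 2 2 + D 0 2 1 2 = 0
      linarith only [t2102, t1022, t0212, hBc]
    · show D 2 1 0 3 + D 1 0 2 3 + D 0 2 1 3 = 0
      linarith only [t2103, t1023, t0213, hBc]
    · show D 2 1 1 0 + D 1 1 2 0 + D 1 2 1 0 = 0
      linarith only [t2110, t1120, t1210, hBc]
    · show D 2 1 1 1 + D 1 1 2 1 + D 1 2 1 1 = 0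
      linarith only [t2111, t1121, t1211, hBc]
    · show D 2 1 1 2 + D 1 1 2 2 + D 1 2 1 2 = 0
      linarith only [t2112, t1122, t1212, hBc]
    · show D 2 1 1 3 + D 1 1 2 3 + D 1 2 1 3 = 0
      linarith only [t2113, t1123, t1213, hBc]
    · show D 2 1 2 0 + D 1 2 2 0 + D 2 2 1 0 = 0
      linarith only [t2120, t1220, t2210, hBc]
    · show D 2 1 2 1 + D 1 2 2 1 + D 2 2 1 1 = 0
      linarith only [t2121, t1221, t2211, hBc]
    · show D 2 1 2 2 + D 1 2 2 2 + D 2 2 1 2 = 0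
      linarith only [t2122, t1222, t2212, hBc]
    · show D 2 1 2 3 + D 1 2 2 3 + D 2 2 1 3 = 0
      linarith only [t2123, t1223, t2213, hBc]
    · show D 2 1 3 0 + D 1 3 2 0 + D 3 2 1 0 = 0
      linarith only [t2130, t1320, t3210, hBc]
    · show D 2 1 3 1 + D 1 3 2 1 + D 3 2 1 1 = 0
      linarith only [t2131, t1321, t3211, hBc]
    · show D 2 1 3 2 + D 1 3 2 2 + D 3 2 1 2 = 0
      linarith only [t2132, t1322, t3212, hBc]
    · show D 2 1 3 3 + D 1 3 2 3 + D 3 2 1 3 = 0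
      linarith only [t2133, t1323, t3213, hBc]
    · show D 2 2 0 0 + D 2 0 2 0 + D 0 2 2 0 = 0
      linarith only [t2200, t2020, t0220, hBc]
    · show D 2 2 0 1 + D 2 0 2 1 + D 0 2 2 1 = 0
      linarith only [t2201, t2021, t0221, hBc]
    · show D 2 2 0 2 + D 2 0 2 2 + D 0 2 2 2 = 0
      linarith only [t2202, t2022, t0222, hBc]
    · show D 2 2 0 3 + D 2 0 2 3 + D 0 2 2 3 = 0
      linarith only [t2203, t2023, t0223, hBc]
    · show D 2 2 1 0 + D 2 1 2 0 + D 1 2 2 0 = 0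
      linarith only [t2210, t2120, t1220, hBc]
    · show D 2 2 1 1 + D 2 1 2 1 + D 1 2 2 1 = 0
      linarith only [t2211, t2121, t1221, hBc]
    · show D 2 2 1 2 + D 2 1 2 2 + D 1 2 2 2 = 0
      linarith only [t2212, t2122, t1222, hBc]
    · show D 2 2 1 3 + D 2 1 2 3 + D 1 2 2 3 = 0
      linarith only [t2213, t2123, t1223, hBc]
    · show D 2 2 2 0 + D 2 2 2 0 + D 2 2 2 0 = 0
      linarith only [t2220, t2220, t2220, hBc]
    · show D 2 2 2 1 + D 2 2 2 1 + D 2 2 2 1 = 0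
      linarith only [t2221, t2221, t2221, hBc]
    · show D 2 2 2 2 + D 2 2 2 2 + D 2 2 2 2 = 0
      linarith only [t2222, t2222, t2222, hBc]
    · show D 2 2 2 3 + D 2 2 2 3 + D 2 2 2 3 = 0
      linarith only [t2223, t2223, t2223, hBc]
    · show D 2 2 3 0 + D 2 3 2 0 + D 3 2 2 0 = 0
      linarith only [t2230, t2320, t3220, hBc]
    · show D 2 2 3 1 + D 2 3 2 1 + D 3 2 2 1 = 0
      linarith only [t2231, t2321, t3221, hBc]
    · show D 2 2 3 2 + D 2 3 2 2 + D 3 2 2 2 = 0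
      linarith only [t2232, t2322, t3222, hBc]
    · show D 2 2 3 3 + D 2 3 2 3 + D 3 2 2 3 = 0
      linarith only [t2233, t2323, t3223, hBc]
    · show D 2 3 0 0 + D 3 0 2 0 + D 0 2 3 0 = 0
      linarith only [t2300, t3020, t0230, hBc]
    · show D 2 3 0 1 + D 3 0 2 1 + D 0 2 3 1 = 0
      linarith only [t2301, t3021, t0231, hBc]
    · show D 2 3 0 2 + D 3 0 2 2 + D 0 2 3 2 = 0
      linarith only [t2302, t3022, t0232, hBc]
    · show D 2 3 0 3 + D 3 0 2 3 + D 0 2 3 3 = 0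
      linarith only [t2303, t3023, t0233, hBc]
    · show D 2 3 1 0 + D 3 1 2 0 + D 1 2 3 0 = 0
      linarith only [t2310, t3120, t1230, hBc]
    · show D 2 3 1 1 + D 3 1 2 1 + D 1 2 3 1 = 0
      linarith only [t2311, t3121, t1231, hBc]
    · show D 2 3 1 2 + D 3 1 2 2 + D 1 2 3 2 = 0
      linarith only [t2312, t3122, t1232, hBc]
    · show D 2 3 1 3 + D 3 1 2 3 + D 1 2 3 3 = 0
      linarith only [t2313, t3123, t1233, hBc]
    · show D 2 3 2 0 + D 3 2 2 0 + D 2 2 3 0 = 0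
      linarith only [t2320, t3220, t2230, hBc]
    · show D 2 3 2 1 + D 3 2 2 1 + D 2 2 3 1 = 0
      linarith only [t2321, t3221, t2231, hBc]
    · show D 2 3 2 2 + D 3 2 2 2 + D 2 2 3 2 = 0
      linarith only [t2322, t3222, t2232, hBc]
    · show D 2 3 2 3 + D 3 2 2 3 + D 2 2 3 3 = 0
      linarith only [t2323, t3223, t2233, hBc]
    · show D 2 3 3 0 + D 3 3 2 0 + D 3 2 3 0 = 0
      linarith only [t2330, t3320, t3230, hBc]
    · show D 2 3 3 1 + D 3 3 2 1 + D 3 2 3 1 = 0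
      linarith only [t2331, t3321, t3231, hBc]
    · show D 2 3 3 2 + D 3 3 2 2 + D 3 2 3 2 = 0
      linarith only [t2332, t3322, t3232, hBc]
    · show D 2 3 3 3 + D 3 3 2 3 + D 3 2 3 3 = 0
      linarith only [t2333, t3323, t3233, hBc]
    · show D 3 0 0 0 + D 0 0 3 0 + D 0 3 0 0 = 0
      linarith only [t3000, t0030, t0300, hBc]
    · show D 3 0 0 1 + D 0 0 3 1 + D 0 3 0 1 = 0
      linarith only [t3001, t0031, t0301, hBc]
    · show D 3 0 0 2 + D 0 0 3 2 + D 0 3 0 2 = 0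
      linarith only [t3002, t0032, t0302, hBc]
    · show D 3 0 0 3 + D 0 0 3 3 + D 0 3 0 3 = 0
      linarith only [t3003, t0033, t0303, hBc]
    · show D 3 0 1 0 + D 0 1 3 0 + D 1 3 0 0 = 0
      linarith only [t3010, t0130, t1300, hBc]
    · show D 3 0 1 1 + D 0 1 3 1 + D 1 3 0 1 = 0
      linarith only [t3011, t0131, t1301, hBc]
    · show D 3 0 1 2 + D 0 1 3 2 + D 1 3 0 2 = 0
      linarith only [t3012, t0132, t1302, hBc]
    · show D 3 0 1 3 + D 0 1 3 3 + D 1 3 0 3 = 0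
      linarith only [t3013, t0133, t1303, hBc]
    · show D 3 0 2 0 + D 0 2 3 0 + D 2 3 0 0 = 0
      linarith only [t3020, t0230, t2300, hBc]
    · show D 3 0 2 1 + D 0 2 3 1 + D 2 3 0 1 = 0
      linarith only [t3021, t0231, t2301, hBc]
    · show D 3 0 2 2 + D 0 2 3 2 + D 2 3 0 2 = 0
      linarith only [t3022, t0232, t2302, hBc]
    · show D 3 0 2 3 + D 0 2 3 3 + D 2 3 0 3 = 0
      linarith only [t3023, t0233, t2303, hBc]
    · show D 3 0 3 0 + D 0 3 3 0 + D 3 3 0 0 = 0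
      linarith only [t3030, t0330, t3300, hBc]
    · show D 3 0 3 1 + D 0 3 3 1 + D 3 3 0 1 = 0
      linarith only [t3031, t0331, t3301, hBc]
    · show D 3 0 3 2 + D 0 3 3 2 + D 3 3 0 2 = 0
      linarith only [t3032, t0332, t3302, hBc]
    · show D 3 0 3 3 + D 0 3 3 3 + D 3 3 0 3 = 0
      linarith only [t3033, t0333, t3303, hBc]
    · show D 3 1 0 0 + D 1 0 3 0 + D 0 3 1 0 = 0
      linarith only [t3100, t1030, t0310, hBc]
    · show D 3 1 0 1 + D 1 0 3 1 + D 0 3 1 1 = 0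
      linarith only [t3101, t1031, t0311, hBc]
    · show D 3 1 0 2 + D 1 0 3 2 + D 0 3 1 2 = 0
      linarith only [t3102, t1032, t0312, hBc]
    · show D 3 1 0 3 + D 1 0 3 3 + D 0 3 1 3 = 0
      linarith only [t3103, t1033, t0313, hBc]
    · show D 3 1 1 0 + D 1 1 3 0 + D 1 3 1 0 = 0
      linarith only [t3110, t1130, t1310, hBc]
    · show D 3 1 1 1 + D 1 1 3 1 + D 1 3 1 1 = 0
      linarith only [t3111, t1131, t1311, hBc]
    · show D 3 1 1 2 + D 1 1 3 2 + D 1 3 1 2 = 0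
      linarith only [t3112, t1132, t1312, hBc]
    · show D 3 1 1 3 + D 1 1 3 3 + D 1 3 1 3 = 0
      linarith only [t3113, t1133, t1313, hBc]
    · show D 3 1 2 0 + D 1 2 3 0 + D 2 3 1 0 = 0
      linarith only [t3120, t1230, t2310, hBc]
    · show D 3 1 2 1 + D 1 2 3 1 + D 2 3 1 1 = 0
      linarith only [t3121, t1231, t2311, hBc]
    · show D 3 1 2 2 + D 1 2 3 2 + D 2 3 1 2 = 0
      linarith only [t3122, t1232, t2312, hBc]
    · show D 3 1 2 3 + D 1 2 3 3 + D 2 3 1 3 = 0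
      linarith only [t3123, t1233, t2313, hBc]
    · show D 3 1 3 0 + D 1 3 3 0 + D 3 3 1 0 = 0
      linarith only [t3130, t1330, t3310, hBc]
    · show D 3 1 3 1 + D 1 3 3 1 + D 3 3 1 1 = 0
      linarith only [t3131, t1331, t3311, hBc]
    · show D 3 1 3 2 + D 1 3 3 2 + D 3 3 1 2 = 0
      linarith only [t3132, t1332, t3312, hBc]
    · show D 3 1 3 3 + D 1 3 3 3 + D 3 3 1 3 = 0
      linarith only [t3133, t1333, t3313, hBc]
    · show D 3 2 0 0 + D 2 0 3 0 + D 0 3 2 0 = 0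
      linarith only [t3200, t2030, t0320, hBc]
    · show D 3 2 0 1 + D 2 0 3 1 + D 0 3 2 1 = 0
      linarith only [t3201, t2031, t0321, hBc]
    · show D 3 2 0 2 + D 2 0 3 2 + D 0 3 2 2 = 0
      linarith only [t3202, t2032, t0322, hBc]
    · show D 3 2 0 3 + D 2 0 3 3 + D 0 3 2 3 = 0
      linarith only [t3203, t2033, t0323, hBc]
    · show D 3 2 1 0 + D 2 1 3 0 + D 1 3 2 0 = 0
      linarith only [t3210, t2130, t1320, hBc]
    · show D 3 2 1 1 + D 2 1 3 1 + D 1 3 2 1 = 0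
      linarith only [t3211, t2131, t1321, hBc]
    · show D 3 2 1 2 + D 2 1 3 2 + D 1 3 2 2 = 0
      linarith only [t3212, t2132, t1322, hBc]
    · show D 3 2 1 3 + D 2 1 3 3 + D 1 3 2 3 = 0
      linarith only [t3213, t2133, t1323, hBc]
    · show D 3 2 2 0 + D 2 2 3 0 + D 2 3 2 0 = 0
      linarith only [t3220, t2230, t2320, hBc]
    · show D 3 2 2 1 + D 2 2 3 1 + D 2 3 2 1 = 0
      linarith only [t3221, t2231, t2321, hBc]
    · show D 3 2 2 2 + D 2 2 3 2 + D 2 3 2 2 = 0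
      linarith only [t3222, t2232, t2322, hBc]
    · show D 3 2 2 3 + D 2 2 3 3 + D 2 3 2 3 = 0
      linarith only [t3223, t2233, t2323, hBc]
    · show D 3 2 3 0 + D 2 3 3 0 + D 3 3 2 0 = 0
      linarith only [t3230, t2330, t3320, hBc]
    · show D 3 2 3 1 + D 2 3 3 1 + D 3 3 2 1 = 0
      linarith only [t3231, t2331, t3321, hBc]
    · show D 3 2 3 2 + D 2 3 3 2 + D 3 3 2 2 = 0
      linarith only [t3232, t2332, t3322, hBc]
    · show D 3 2 3 3 + D 2 3 3 3 + D 3 3 2 3 = 0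
      linarith only [t3233, t2333, t3323, hBc]
    · show D 3 3 0 0 + D 3 0 3 0 + D 0 3 3 0 = 0
      linarith only [t3300, t3030, t0330, hBc]
    · show D 3 3 0 1 + D 3 0 3 1 + D 0 3 3 1 = 0
      linarith only [t3301, t3031, t0331, hBc]
    · show D 3 3 0 2 + D 3 0 3 2 + D 0 3 3 2 = 0
      linarith only [t3302, t3032, t0332, hBc]
    · show D 3 3 0 3 + D 3 0 3 3 + D 0 3 3 3 = 0
      linarith only [t3303, t3033, t0333, hBc]
    · show D 3 3 1 0 + D 3 1 3 0 + D 1 3 3 0 = 0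
      linarith only [t3310, t3130, t1330, hBc]
    · show D 3 3 1 1 + D 3 1 3 1 + D 1 3 3 1 = 0
      linarith only [t3311, t3131, t1331, hBc]
    · show D 3 3 1 2 + D 3 1 3 2 + D 1 3 3 2 = 0
      linarith only [t3312, t3132, t1332, hBc]
    · show D 3 3 1 3 + D 3 1 3 3 + D 1 3 3 3 = 0
      linarith only [t3313, t3133, t1333, hBc]
    · show D 3 3 2 0 + D 3 2 3 0 + D 2 3 3 0 = 0
      linarith only [t3320, t3230, t2330, hBc]
    · show D 3 3 2 1 + D 3 2 3 1 + D 2 3 3 1 = 0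
      linarith only [t3321, t3231, t2331, hBc]
    · show D 3 3 2 2 + D 3 2 3 2 + D 2 3 3 2 = 0
      linarith only [t3322, t3232, t2332, hBc]
    · show D 3 3 2 3 + D 3 2 3 3 + D 2 3 3 3 = 0
      linarith only [t3323, t3233, t2333, hBc]
    · show D 3 3 3 0 + D 3 3 3 0 + D 3 3 3 0 = 0
      linarith only [t3330, t3330, t3330, hBc]
    · show D 3 3 3 1 + D 3 3 3 1 + D 3 3 3 1 = 0
      linarith only [t3331, t3331, t3331, hBc]
    · show D 3 3 3 2 + D 3 3 3 2 + D 3 3 3 2 = 0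
      linarith only [t3332, t3332, t3332, hBc]
    · show D 3 3 3 3 + D 3 3 3 3 + D 3 3 3 3 = 0
      linarith only [t3333, t3333, t3333, hBc]
  · simp (config := { decide := true }) only [Fin.sum_univ_four, ite_true, ite_false,
      add_zero, zero_add]
    linarith only [t0101, t0202, t0303, t1212, t1313, t2323]
  · simp (config := { decide := true }) only [scal, ricci, Fin.sum_univ_four, ite_true,
      ite_false, add_zero, zero_add]
    linarith only [hA 0 0 0 0, hA 1 1 1 1, hA 2 2 2 2, hA 3 3 3 3, hA 1 0 1 0, hA' 0 1 1 0, hA 2 0 2 0, hA' 0 2 2 0, hA 3 0 3 0, hA' 0 3 3 0, hA 2 1 2 1, hA' 1 2 2 1, hA 3 1 3 1, hA' 1 3 3 1, hA 3 2 3 2, hA' 2 3 3 2]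

end
end DD
end

section
/- Let h be a symmetric bilinear form on an n-dimensional real inner product space V with n ≥ 4. If the (0,4)-tensor g∧h (Kulkarni–Nomizu product of h with the metric) vanishes, then h = 0. More generally, for 0 ≤ k and a symmetric (p,p) double form ω with p + k ≤ n, multiplication by g^k on (p,p) double forms is injective (cancellation property of exterior multiplication by the metric); in the special case of symmetric bilinear forms: g∧h = 0 implies h = 0 whenever n ≥ 3. -/
open Finset

namespace DD

noncomputable section

/-- cancellation property of exterior multiplication by the metric
for symmetric bilinear forms: if n ≥ 3 and g∧h = 0 then h = 0. -/
theorem KN_metric_injective {n : ℕ} (hn : 3 ≤ n)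
    (h : Fin n → Fin n → ℝ) (hsym : ∀ i j, h i j = h j i)
    (hKN : ∀ i j k l : Fin n, KN (gE n) h i j k l = 0) :
    ∀ i j : Fin n, h i j = 0 := by
  have hex : ∀ i j : Fin n, ∃ k : Fin n, k ≠ i ∧ k ≠ j := by
    intro i j
    by_contra hc
    push_neg at hc
    have hsub : (Finset.univ : Finset (Fin n)) ⊆ {i, j} := by
      intro x _
      rcases eq_or_ne x i with hx | hx
      · simp [hx]
      · simp [hc x hx]
    have := Finset.card_le_card hsub
    have h2 : ({i, j} : Finset (Fin n)).card ≤ 2 := by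
      refine le_trans (Finset.card_insert_le _ _) ?_
      simp
    simp [Finset.card_univ] at this
    omega
  -- diagonal vanishes
  have hdiag : ∀ i : Fin n, h i i = 0 := by
    intro i
    obtain ⟨k, hki, -⟩ := hex i i
    obtain ⟨l, hli, hlk⟩ := hex i k
    have e1 := hKN i k i k
    have e2 := hKN i l i l
    have e3 := hKN k l k l
    simp [KN, gE, hki, hki.symm, hli, hli.symm, hlk, hlk.symm] at e1 e2 e3
    linarith
  intro i j
  rcases eq_or_ne i j with hij | hij
  · rw [hij]; exact hdiag j
  · obtain ⟨k, hki, hkj⟩ := hex i j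
    have e := hKN i k j k
    simp [KN, gE, hij, hij.symm, hki, hki.symm, hkj, hkj.symm] at e
    linarith [hdiag k, e]

end
end DD
end

section
/- Let n ≥ 4 and let R be an algebraic curvature tensor on an n-dimensional inner product space, with double dual D = R − g∧Ric + (1/4)(g∧g)Scal. Then D = 0 if and only if R = 0. -/
open Finset

namespace DD

noncomputable section

/-- the double dual D of an algebraic curvature tensor vanishes
if and only if R vanishes (n ≥ 4). -/
theorem double_dual_zero_iff {n : ℕ} (hn : 4 ≤ n)
    (R : Fin n → Fin n → Fin n → Fin n → ℝ)
    (hA : ∀ i j k l, R i j k l = - R j i k l)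
    (hA' : ∀ i j k l, R i j k l = - R i j l k)
    (hP : ∀ i j k l, R i j k l = R k l i j)
    (hB : ∀ i j k l, R i j k l + R j k i l + R k i j l = 0) :
    (∀ i j k l, dd R i j k l = 0) ↔ (∀ i j k l, R i j k l = 0) := by
  constructor
  · intro hD
    have hn4 : (4:ℝ) ≤ (n:ℝ) := by exact_mod_cast hn
    have key : ∀ j l : Fin n,
        ((3:ℝ) - n) * ricci R j l + ((n:ℝ)-3)/2 * gE n j l * scal R = 0 := by
      intro j l
      have h0 : ∑ i, dd R i j i l = 0 := Finset.sum_eq_zero fun i _ => hD i j i l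
      simp only [dd, KN, gE, if_pos rfl, one_mul, mul_one, Finset.sum_add_distrib,
        Finset.sum_sub_distrib, ← Finset.sum_mul, ← Finset.mul_sum] at h0
      simp only [Finset.sum_ite_eq, Finset.sum_ite_eq', Finset.mem_univ, if_true,
        Finset.sum_const, Finset.card_univ, Fintype.card_fin, nsmul_eq_mul, mul_one,
        ite_mul, one_mul, zero_mul, mul_ite, mul_zero] at h0
      show ((3:ℝ) - n) * (∑ i, R i j i l)
          + ((n:ℝ)-3)/2 * (if j = l then (1:ℝ) else 0) * scal R = 0
      rw [show (∑ i, ricci R i i) = scal R from rfl] at h0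
      simp only [ricci] at h0
      by_cases h : j = l <;> simp only [h, if_true, if_false] <;>
        simp only [h, if_true, if_false] at h0 <;> nlinarith [h0]
    have hscal : scal R = 0 := by
      have h1 : ∑ j, (((3:ℝ) - n) * ricci R j j + ((n:ℝ)-3)/2 * gE n j j * scal R) = 0 :=
        Finset.sum_eq_zero fun j _ => key j j
      simp only [gE, if_pos rfl, mul_one, Finset.sum_add_distrib, ← Finset.mul_sum,
        Finset.sum_const, Finset.card_univ, Fintype.card_fin, nsmul_eq_mul] at h1
      rw [show (∑ j, ricci R j j) = scal R from rfl] at h1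
      norm_num at h1
      have h2 : ((n:ℝ)-3) * ((n:ℝ)*scal R - 2*scal R) = 0 := by linear_combination 2*h1
      rcases mul_eq_zero.mp h2 with h | h
      · exact absurd h (by nlinarith)
      · have h3 : ((n:ℝ)-2) * scal R = 0 := by linarith
        rcases mul_eq_zero.mp h3 with h' | h'
        · nlinarith
        · exact h'
    have hric : ∀ j l : Fin n, ricci R j l = 0 := by
      intro j l
      have := key j l
      rw [hscal] at this
      have h3 : (3:ℝ) - n ≠ 0 := by nlinarith
      have := mul_eq_zero.mp (by linarith [this] : ((3:ℝ) - n) * ricci R j l = 0)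
      tauto
    intro i j k l
    have := hD i j k l
    simp only [dd, KN, hric, hscal, mul_zero, zero_mul, sub_zero, add_zero, zero_add,
      zero_sub, neg_zero] at this
    linarith [this]
  · intro hR i j k l
    simp [dd, KN, ricci, scal, hR]

end
end DD
end

section
/- Let n ≥ 4, q = 2, 2q ≤ n, and let R be an algebraic curvature tensor. Then the second Lovelock tensor T₄ := (c⁴R²/4!)·g − (c³R²/3!) satisfies c³R² = 12·c(R ∘ D), where D = R − g∧Ric + (1/4)(g∧g)Scal is the double dual of R, ∘ is the composition product of (2,2) double forms (composition of induced symmetric endomorphisms of Λ²V), and c is Ricci contraction; consequently T₄ = (1/2)c²(R∘D)·g − 2c(R∘D). -/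
open Finset

namespace DD

noncomputable section

/-- The exterior square R² of the curvature tensor as a (4,4) double form,
with components (1/16) δ^{a₁a₂a₃a₄}_{i₁i₂i₃i₄} δ^{b₁b₂b₃b₄}_{j₁j₂j₃j₄}
R_{a₁a₂b₁b₂} R_{a₃a₄b₃b₄}. -/
def Rsq {n : ℕ} (R : Fin n → Fin n → Fin n → Fin n → ℝ)
    (i j : Fin 4 → Fin n) : ℝ :=
  (1/16 : ℝ) * ∑ a₁, ∑ a₂, ∑ a₃, ∑ a₄, ∑ b₁, ∑ b₂, ∑ b₃, ∑ b₄,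
    gkdelta ![a₁, a₂, a₃, a₄] i * gkdelta ![b₁, b₂, b₃, b₄] j
      * R a₁ a₂ b₁ b₂ * R a₃ a₄ b₃ b₄

/-- Triple Ricci contraction c³(R²) of the (4,4) double form R². -/
def cccRsq {n : ℕ} (R : Fin n → Fin n → Fin n → Fin n → ℝ) (x y : Fin n) : ℝ :=
  ∑ i₁, ∑ i₂, ∑ i₃, Rsq R ![i₁, i₂, i₃, x] ![i₁, i₂, i₃, y]

theorem det_fin_four' {R : Type*} [CommRing R] (A : Matrix (Fin 4) (Fin 4) R) :
    A.det =
      A 0 0 * (A 1 1 * (A 2 2 * A 3 3 - A 2 3 * A 3 2) - A 1 2 * (A 2 1 * A 3 3 - A 2 3 * A 3 1) + A 1 3 * (A 2 1 * A 3 2 - A 2 2 * A 3 1))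
    - A 0 1 * (A 1 0 * (A 2 2 * A 3 3 - A 2 3 * A 3 2) - A 1 2 * (A 2 0 * A 3 3 - A 2 3 * A 3 0) + A 1 3 * (A 2 0 * A 3 2 - A 2 2 * A 3 0))
    + A 0 2 * (A 1 0 * (A 2 1 * A 3 3 - A 2 3 * A 3 1) - A 1 1 * (A 2 0 * A 3 3 - A 2 3 * A 3 0) + A 1 3 * (A 2 0 * A 3 1 - A 2 1 * A 3 0))
    - A 0 3 * (A 1 0 * (A 2 1 * A 3 2 - A 2 2 * A 3 1) - A 1 1 * (A 2 0 * A 3 2 - A 2 2 * A 3 0) + A 1 2 * (A 2 0 * A 3 1 - A 2 1 * A 3 0)) := by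
  rw [Matrix.det_succ_row_zero]
  simp only [Fin.sum_univ_succ, Matrix.det_fin_three, Matrix.submatrix_apply, Fin.succAbove,
    Matrix.det_fin_zero, Finset.univ_eq_empty, Finset.sum_empty,
    show (Fin.succ 0 : Fin 4) = 1 from rfl, show (Fin.succ 1 : Fin 4) = 2 from rfl,
    show (Fin.succ 2 : Fin 4) = 3 from rfl,
    show (Fin.castSucc 0 : Fin 4) = 0 from rfl, show (Fin.castSucc 1 : Fin 4) = 1 from rfl,
    show (Fin.castSucc 2 : Fin 4) = 2 from rfl]
  norm_num [Fin.lt_def]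
  simp only [show (Fin.succ 2 : Fin 4) = 3 from rfl]
  ring
def E24 {n : ℕ} (i : Fin 4 → Fin n) (F : Fin n → Fin n → Fin n → Fin n → ℝ) : ℝ :=
  F (i 0) (i 1) (i 2) (i 3) - F (i 0) (i 1) (i 3) (i 2) - F (i 0) (i 2) (i 1) (i 3) + F (i 0) (i 2) (i 3) (i 1) + F (i 0) (i 3) (i 1) (i 2) - F (i 0) (i 3) (i 2) (i 1) - F (i 1) (i 0) (i 2) (i 3) + F (i 1) (i 0) (i 3) (i 2) + F (i 1) (i 2) (i 0) (i 3) - F (i 1) (i 2) (i 3) (i 0) - F (i 1) (i 3) (i 0) (i 2) + F (i 1) (i 3) (i 2) (i 0) + F (i 2) (i 0) (i 1) (i 3) - F (i 2) (i 0) (i 3) (i 1) - F (i 2) (i 1) (i 0) (i 3) + F (i 2) (i 1) (i 3) (i 0) + F (i 2) (i 3) (i 0) (i 1) - F (i 2) (i 3) (i 1) (i 0) - F (i 3) (i 0) (i 1) (i 2) + F (i 3) (i 0) (i 2) (i 1) + F (i 3) (i 1) (i 0) (i 2) - F (i 3) (i 1) (i 2) (i 0) - F (i 3) (i 2) (i 0)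 (i 1) + F (i 3) (i 2) (i 1) (i 0)

theorem det4_expand {n : ℕ} (i : Fin 4 → Fin n) (a₁ a₂ a₃ a₄ : Fin n) :
    gkdelta ![a₁, a₂, a₃, a₄] i =
      (if a₄ = i 3 then (1:ℝ) else 0) * ((if a₃ = i 2 then (1:ℝ) else 0) * ((if a₂ = i 1 then (1:ℝ) else 0) * (if a₁ = i 0 then (1:ℝ) else 0)))
      - (if a₄ = i 2 then (1:ℝ) else 0) * ((if a₃ = i 3 then (1:ℝ) else 0) * ((if a₂ = i 1 then (1:ℝ) else 0) * (if a₁ = i 0 then (1:ℝ) else 0)))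
      - (if a₄ = i 3 then (1:ℝ) else 0) * ((if a₃ = i 1 then (1:ℝ) else 0) * ((if a₂ = i 2 then (1:ℝ) else 0) * (if a₁ = i 0 then (1:ℝ) else 0)))
      + (if a₄ = i 1 then (1:ℝ) else 0) * ((if a₃ = i 3 then (1:ℝ) else 0) * ((if a₂ = i 2 then (1:ℝ) else 0) * (if a₁ = i 0 then (1:ℝ) else 0)))
      + (if a₄ = i 2 then (1:ℝ) else 0) * ((if a₃ = i 1 then (1:ℝ) else 0) * ((if a₂ = i 3 then (1:ℝ) else 0) * (if a₁ = i 0 then (1:ℝ) else 0)))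
      - (if a₄ = i 1 then (1:ℝ) else 0) * ((if a₃ = i 2 then (1:ℝ) else 0) * ((if a₂ = i 3 then (1:ℝ) else 0) * (if a₁ = i 0 then (1:ℝ) else 0)))
      - (if a₄ = i 3 then (1:ℝ) else 0) * ((if a₃ = i 2 then (1:ℝ) else 0) * ((if a₂ = i 0 then (1:ℝ) else 0) * (if a₁ = i 1 then (1:ℝ) else 0)))
      + (if a₄ = i 2 then (1:ℝ) else 0) * ((if a₃ = i 3 then (1:ℝ) else 0) * ((if a₂ = i 0 then (1:ℝ) else 0) * (if a₁ = i 1 then (1:ℝ) else 0)))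
      + (if a₄ = i 3 then (1:ℝ) else 0) * ((if a₃ = i 0 then (1:ℝ) else 0) * ((if a₂ = i 2 then (1:ℝ) else 0) * (if a₁ = i 1 then (1:ℝ) else 0)))
      - (if a₄ = i 0 then (1:ℝ) else 0) * ((if a₃ = i 3 then (1:ℝ) else 0) * ((if a₂ = i 2 then (1:ℝ) else 0) * (if a₁ = i 1 then (1:ℝ) else 0)))
      - (if a₄ = i 2 then (1:ℝ) else 0) * ((if a₃ = i 0 then (1:ℝ) else 0) * ((if a₂ = i 3 then (1:ℝ) else 0) * (if a₁ = i 1 then (1:ℝ) else 0)))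
      + (if a₄ = i 0 then (1:ℝ) else 0) * ((if a₃ = i 2 then (1:ℝ) else 0) * ((if a₂ = i 3 then (1:ℝ) else 0) * (if a₁ = i 1 then (1:ℝ) else 0)))
      + (if a₄ = i 3 then (1:ℝ) else 0) * ((if a₃ = i 1 then (1:ℝ) else 0) * ((if a₂ = i 0 then (1:ℝ) else 0) * (if a₁ = i 2 then (1:ℝ) else 0)))
      - (if a₄ = i 1 then (1:ℝ) else 0) * ((if a₃ = i 3 then (1:ℝ) else 0) * ((if a₂ = i 0 then (1:ℝ) else 0) * (if a₁ = i 2 then (1:ℝ) else 0)))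
      - (if a₄ = i 3 then (1:ℝ) else 0) * ((if a₃ = i 0 then (1:ℝ) else 0) * ((if a₂ = i 1 then (1:ℝ) else 0) * (if a₁ = i 2 then (1:ℝ) else 0)))
      + (if a₄ = i 0 then (1:ℝ) else 0) * ((if a₃ = i 3 then (1:ℝ) else 0) * ((if a₂ = i 1 then (1:ℝ) else 0) * (if a₁ = i 2 then (1:ℝ) else 0)))
      + (if a₄ = i 1 then (1:ℝ) else 0) * ((if a₃ = i 0 then (1:ℝ) else 0) * ((if a₂ = i 3 then (1:ℝ) else 0) * (if a₁ = i 2 then (1:ℝ) else 0)))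
      - (if a₄ = i 0 then (1:ℝ) else 0) * ((if a₃ = i 1 then (1:ℝ) else 0) * ((if a₂ = i 3 then (1:ℝ) else 0) * (if a₁ = i 2 then (1:ℝ) else 0)))
      - (if a₄ = i 2 then (1:ℝ) else 0) * ((if a₃ = i 1 then (1:ℝ) else 0) * ((if a₂ = i 0 then (1:ℝ) else 0) * (if a₁ = i 3 then (1:ℝ) else 0)))
      + (if a₄ = i 1 then (1:ℝ) else 0) * ((if a₃ = i 2 then (1:ℝ) else 0) * ((if a₂ = i 0 then (1:ℝ) else 0) * (if a₁ = i 3 then (1:ℝ) else 0)))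
      + (if a₄ = i 2 then (1:ℝ) else 0) * ((if a₃ = i 0 then (1:ℝ) else 0) * ((if a₂ = i 1 then (1:ℝ) else 0) * (if a₁ = i 3 then (1:ℝ) else 0)))
      - (if a₄ = i 0 then (1:ℝ) else 0) * ((if a₃ = i 2 then (1:ℝ) else 0) * ((if a₂ = i 1 then (1:ℝ) else 0) * (if a₁ = i 3 then (1:ℝ) else 0)))
      - (if a₄ = i 1 then (1:ℝ) else 0) * ((if a₃ = i 0 then (1:ℝ) else 0) * ((if a₂ = i 2 then (1:ℝ) else 0) * (if a₁ = i 3 then (1:ℝ) else 0)))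
      + (if a₄ = i 0 then (1:ℝ) else 0) * ((if a₃ = i 1 then (1:ℝ) else 0) * ((if a₂ = i 2 then (1:ℝ) else 0) * (if a₁ = i 3 then (1:ℝ) else 0))) := by
  unfold gkdelta
  rw [det_fin_four']
  simp only [Matrix.of_apply,
    show (![a₁,a₂,a₃,a₄] : Fin 4 → Fin n) 0 = a₁ from rfl,
    show (![a₁,a₂,a₃,a₄] : Fin 4 → Fin n) 1 = a₂ from rfl,
    show (![a₁,a₂,a₃,a₄] : Fin 4 → Fin n) 2 = a₃ from rfl,
    show (![a₁,a₂,a₃,a₄] : Fin 4 → Fin n) 3 = a₄ from rfl]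
  ring

theorem collapse {n : ℕ} (i : Fin 4 → Fin n) (F : Fin n → Fin n → Fin n → Fin n → ℝ) :
    (∑ a₁, ∑ a₂, ∑ a₃, ∑ a₄, gkdelta ![a₁, a₂, a₃, a₄] i * F a₁ a₂ a₃ a₄) = E24 i F := by
  simp only [det4_expand, sub_mul, add_mul, ite_mul, one_mul, zero_mul,
    Finset.sum_sub_distrib, Finset.sum_add_distrib, Finset.sum_ite_eq', Finset.mem_univ, if_true]
  unfold E24
  ring

theorem Rsq_eq {n : ℕ} (R : Fin n → Fin n → Fin n → Fin n → ℝ) (i j : Fin 4 → Fin n) :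
    Rsq R i j = (1/16 : ℝ) * E24 i (fun a₁ a₂ a₃ a₄ => E24 j
      (fun b₁ b₂ b₃ b₄ => R a₁ a₂ b₁ b₂ * R a₃ a₄ b₃ b₄)) := by
  unfold Rsq
  congr 1
  simp only [mul_assoc]
  simp only [← Finset.mul_sum]
  simp only [collapse]

variable {n : ℕ} (R : Fin n → Fin n → Fin n → Fin n → ℝ)

theorem rot3 (f : Fin n → Fin n → Fin n → ℝ) :
    (∑ a, ∑ b, ∑ c, f a b c) = ∑ b, ∑ c, ∑ a, f a b c := by
  rw [Finset.sum_comm]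
  exact Finset.sum_congr rfl fun b _ => Finset.sum_comm

theorem rot3' (f : Fin n → Fin n → Fin n → ℝ) :
    (∑ a, ∑ b, ∑ c, f a b c) = ∑ c, ∑ a, ∑ b, f a b c := by
  rw [rot3, rot3]

theorem swap23 (f : Fin n → Fin n → Fin n → ℝ) :
    (∑ a, ∑ b, ∑ c, f a b c) = ∑ a, ∑ c, ∑ b, f a b c :=
  Finset.sum_congr rfl fun _ _ => Finset.sum_comm

theorem tr1 : ∀ a b, (∑ i, R i a i b) = ricci R a b := fun _ _ => rfl

theorem tr2 (hA : ∀ i j k l, R i j k l = - R j i k l)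
    (hA' : ∀ i j k l, R i j k l = - R i j l k) :
    ∀ a b, (∑ i, R a i b i) = ricci R a b := by
  intro a b
  refine Finset.sum_congr rfl fun i _ => ?_
  rw [hA a i b i, hA' i a b i]; ring

theorem tr3 (hA : ∀ i j k l, R i j k l = - R j i k l) :
    ∀ a b, (∑ i, R a i i b) = -(ricci R a b) := by
  intro a b
  rw [ricci, ← Finset.sum_neg_distrib]
  exact Finset.sum_congr rfl fun i _ => by rw [hA a i i b]

theorem tr4 (hA' : ∀ i j k l, R i j k l = - R i j l k) :
    ∀ a b, (∑ i, R i a b i) = -(ricci R a b) := by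
  intro a b
  rw [ricci, ← Finset.sum_neg_distrib]
  exact Finset.sum_congr rfl fun i _ => by rw [hA' i a b i]

theorem rs (hP : ∀ i j k l, R i j k l = R k l i j) :
    ∀ a b, ricci R a b = ricci R b a := by
  intro a b
  exact Finset.sum_congr rfl fun i _ => hP i a i b

theorem sc2 : (∑ i, ∑ j, R i j i j) = scal R := by
  rw [scal, Finset.sum_comm]; rfl

section evals
variable (hA : ∀ i j k l, R i j k l = - R j i k l)
    (hA' : ∀ i j k l, R i j k l = - R i j l k)
    (hP : ∀ i j k l, R i j k l = R k l i j) (x y : Fin n)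
include hA hA' hP

theorem ev1 : (∑ i₁, ∑ i₂, ∑ i₃, R i₁ x i₁ y * R i₂ i₃ i₂ i₃) = scal R * ricci R x y := by
  simp only [← Finset.mul_sum, ← Finset.sum_mul]
  rw [tr1, sc2]; ring

theorem ev2 : (∑ i₁, ∑ i₂, ∑ i₃, R i₁ x i₂ i₃ * R i₁ y i₂ i₃)
    = ∑ a, ∑ b, ∑ c, R x a b c * R y a b c := by
  refine Finset.sum_congr rfl fun i₁ _ => Finset.sum_congr rfl fun i₂ _ =>
    Finset.sum_congr rfl fun i₃ _ => ?_
  rw [hA i₁ x i₂ i₃, hA i₁ y i₂ i₃]; ring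

theorem ev3 : (∑ i₁, ∑ i₂, ∑ i₃, R i₁ i₂ i₁ x * R i₂ i₃ i₃ y)
    = -(∑ a, ricci R x a * ricci R y a) := by
  calc (∑ i₁, ∑ i₂, ∑ i₃, R i₁ i₂ i₁ x * R i₂ i₃ i₃ y)
      = ∑ i₁, ∑ i₂, R i₁ i₂ i₁ x * -(ricci R i₂ y) := by
        simp only [← Finset.mul_sum, tr3 R hA]
    _ = ∑ i₂, ∑ i₁, R i₁ i₂ i₁ x * -(ricci R i₂ y) := Finset.sum_comm
    _ = ∑ i₂, ricci R i₂ x * -(ricci R i₂ y) := by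
        simp only [← Finset.sum_mul, tr1 R]
    _ = -(∑ a, ricci R x a * ricci R y a) := by
        rw [← Finset.sum_neg_distrib]
        exact Finset.sum_congr rfl fun a _ => by rw [rs R hP a x, rs R hP a y]; ring

theorem ev4 : (∑ i₁, ∑ i₂, ∑ i₃, R i₁ i₂ i₁ y * R i₂ i₃ i₃ x)
    = -(∑ a, ricci R x a * ricci R y a) := by
  calc (∑ i₁, ∑ i₂, ∑ i₃, R i₁ i₂ i₁ y * R i₂ i₃ i₃ x)
      = ∑ i₁, ∑ i₂, R i₁ i₂ i₁ y * -(ricci R i₂ x) := by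
        simp only [← Finset.mul_sum, tr3 R hA]
    _ = ∑ i₂, ∑ i₁, R i₁ i₂ i₁ y * -(ricci R i₂ x) := Finset.sum_comm
    _ = ∑ i₂, ricci R i₂ y * -(ricci R i₂ x) := by
        simp only [← Finset.sum_mul, tr1 R]
    _ = -(∑ a, ricci R x a * ricci R y a) := by
        rw [← Finset.sum_neg_distrib]
        exact Finset.sum_congr rfl fun a _ => by rw [rs R hP a x, rs R hP a y]; ring

theorem ev5 : (∑ i₁, ∑ i₂, ∑ i₃, R i₁ i₂ i₁ i₂ * R i₃ x i₃ y) = scal R * ricci R x y := by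
  simp only [← Finset.mul_sum, ← Finset.sum_mul]
  rw [sc2, tr1]

theorem ev6 : (∑ i₁, ∑ i₂, ∑ i₃, R i₁ i₂ i₁ i₃ * R i₂ x i₃ y)
    = ∑ a, ∑ b, ricci R a b * R x a y b := by
  calc (∑ i₁, ∑ i₂, ∑ i₃, R i₁ i₂ i₁ i₃ * R i₂ x i₃ y)
      = ∑ i₂, ∑ i₃, ∑ i₁, R i₁ i₂ i₁ i₃ * R i₂ x i₃ y := rot3 _
    _ = ∑ i₂, ∑ i₃, ricci R i₂ i₃ * R i₂ x i₃ y := by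
        simp only [← Finset.sum_mul, tr1 R]
    _ = ∑ a, ∑ b, ricci R a b * R x a y b := by
        refine Finset.sum_congr rfl fun a _ => Finset.sum_congr rfl fun b _ => ?_
        rw [hA a x b y, hA' x a b y]; ring

theorem ev7 : (∑ i₁, ∑ i₂, ∑ i₃, R i₁ i₂ i₁ i₃ * R i₂ y i₃ x)
    = ∑ a, ∑ b, ricci R a b * R x a y b := by
  calc (∑ i₁, ∑ i₂, ∑ i₃, R i₁ i₂ i₁ i₃ * R i₂ y i₃ x)
      = ∑ i₂, ∑ i₃, ∑ i₁, R i₁ i₂ i₁ i₃ * R i₂ y i₃ x := rot3 _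
    _ = ∑ i₂, ∑ i₃, ricci R i₂ i₃ * R i₂ y i₃ x := by
        simp only [← Finset.sum_mul, tr1 R]
    _ = ∑ i₃, ∑ i₂, ricci R i₂ i₃ * R i₂ y i₃ x := Finset.sum_comm
    _ = ∑ a, ∑ b, ricci R a b * R x a y b := by
        refine Finset.sum_congr rfl fun a _ => Finset.sum_congr rfl fun b _ => ?_
        rw [rs R hP b a, hP b y a x, hA a x b y, hA' x a b y]; ring

theorem ev8 : (∑ i₁, ∑ i₂, ∑ i₃, R i₁ i₂ i₂ x * R i₁ i₃ i₃ y)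
    = ∑ a, ricci R x a * ricci R y a := by
  calc (∑ i₁, ∑ i₂, ∑ i₃, R i₁ i₂ i₂ x * R i₁ i₃ i₃ y)
      = ∑ i₁, (∑ i₂, R i₁ i₂ i₂ x) * (∑ i₃, R i₁ i₃ i₃ y) := by
        simp only [← Finset.mul_sum, ← Finset.sum_mul]
    _ = ∑ i₁, -(ricci R i₁ x) * -(ricci R i₁ y) := by
        simp only [tr3 R hA]
    _ = ∑ a, ricci R x a * ricci R y a := by
        exact Finset.sum_congr rfl fun a _ => by rw [rs R hP a x, rs R hP a y]; ring

theorem ev9 : (∑ i₁, ∑ i₂, ∑ i₃, R i₁ i₂ i₂ y * R i₁ i₃ i₃ x)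
    = ∑ a, ricci R x a * ricci R y a := by
  calc (∑ i₁, ∑ i₂, ∑ i₃, R i₁ i₂ i₂ y * R i₁ i₃ i₃ x)
      = ∑ i₁, (∑ i₂, R i₁ i₂ i₂ y) * (∑ i₃, R i₁ i₃ i₃ x) := by
        simp only [← Finset.mul_sum, ← Finset.sum_mul]
    _ = ∑ i₁, -(ricci R i₁ y) * -(ricci R i₁ x) := by
        simp only [tr3 R hA]
    _ = ∑ a, ricci R x a * ricci R y a := by
        exact Finset.sum_congr rfl fun a _ => by rw [rs R hP a x, rs R hP a y]; ring

theorem ev10 : (∑ i₁, ∑ i₂, ∑ i₃, R i₁ i₂ i₂ i₃ * R i₁ x i₃ y)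
    = -(∑ a, ∑ b, ricci R a b * R x a y b) := by
  calc (∑ i₁, ∑ i₂, ∑ i₃, R i₁ i₂ i₂ i₃ * R i₁ x i₃ y)
      = ∑ i₁, ∑ i₃, ∑ i₂, R i₁ i₂ i₂ i₃ * R i₁ x i₃ y := swap23 _
    _ = ∑ i₁, ∑ i₃, -(ricci R i₁ i₃) * R i₁ x i₃ y := by
        simp only [← Finset.sum_mul, tr3 R hA]
    _ = -(∑ a, ∑ b, ricci R a b * R x a y b) := by
        simp only [← Finset.sum_neg_distrib]
        refine Finset.sum_congr rfl fun a _ => Finset.sum_congr rfl fun b _ => ?_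
        rw [hA a x b y, hA' x a b y]; ring

theorem ev11 : (∑ i₁, ∑ i₂, ∑ i₃, R i₁ i₂ i₂ i₃ * R i₁ y i₃ x)
    = -(∑ a, ∑ b, ricci R a b * R x a y b) := by
  calc (∑ i₁, ∑ i₂, ∑ i₃, R i₁ i₂ i₂ i₃ * R i₁ y i₃ x)
      = ∑ i₁, ∑ i₃, ∑ i₂, R i₁ i₂ i₂ i₃ * R i₁ y i₃ x := swap23 _
    _ = ∑ i₁, ∑ i₃, -(ricci R i₁ i₃) * R i₁ y i₃ x := by
        simp only [← Finset.sum_mul, tr3 R hA]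
    _ = ∑ i₃, ∑ i₁, -(ricci R i₁ i₃) * R i₁ y i₃ x := Finset.sum_comm
    _ = -(∑ a, ∑ b, ricci R a b * R x a y b) := by
        simp only [← Finset.sum_neg_distrib]
        refine Finset.sum_congr rfl fun a _ => Finset.sum_congr rfl fun b _ => ?_
        rw [rs R hP b a, hP b y a x, hA a x b y, hA' x a b y]; ring

theorem ev12 : (∑ i₁, ∑ i₂, ∑ i₃, R i₁ i₂ i₃ x * R i₁ i₂ i₃ y)
    = ∑ a, ∑ b, ∑ c, R x a b c * R y a b c := by
  calc (∑ i₁, ∑ i₂, ∑ i₃, R i₁ i₂ i₃ x * R i₁ i₂ i₃ y)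
      = ∑ i₁, ∑ i₂, ∑ i₃, R x i₃ i₁ i₂ * R y i₃ i₁ i₂ := by
        refine Finset.sum_congr rfl fun i₁ _ => Finset.sum_congr rfl fun i₂ _ =>
          Finset.sum_congr rfl fun i₃ _ => ?_
        rw [hP i₁ i₂ i₃ x, hP i₁ i₂ i₃ y, hA i₃ x i₁ i₂, hA i₃ y i₁ i₂]; ring
    _ = ∑ a, ∑ b, ∑ c, R x a b c * R y a b c := rot3' _

theorem ev13 : (∑ i₁, ∑ i₂, ∑ i₃, R i₁ i₃ i₁ x * R i₂ i₃ i₂ y)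
    = ∑ a, ricci R x a * ricci R y a := by
  calc (∑ i₁, ∑ i₂, ∑ i₃, R i₁ i₃ i₁ x * R i₂ i₃ i₂ y)
      = ∑ i₂, ∑ i₃, ∑ i₁, R i₁ i₃ i₁ x * R i₂ i₃ i₂ y := rot3 _
    _ = ∑ i₂, ∑ i₃, ricci R i₃ x * R i₂ i₃ i₂ y := by
        simp only [← Finset.sum_mul, tr1 R]
    _ = ∑ i₃, ∑ i₂, ricci R i₃ x * R i₂ i₃ i₂ y := Finset.sum_comm
    _ = ∑ i₃, ricci R i₃ x * ricci R i₃ y := by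
        simp only [← Finset.mul_sum, tr1 R]
    _ = ∑ a, ricci R x a * ricci R y a := by
        exact Finset.sum_congr rfl fun a _ => by rw [rs R hP a x, rs R hP a y]

theorem ev14 : (∑ i₁, ∑ i₂, ∑ i₃, R i₁ i₃ i₁ y * R i₂ i₃ i₂ x)
    = ∑ a, ricci R x a * ricci R y a := by
  calc (∑ i₁, ∑ i₂, ∑ i₃, R i₁ i₃ i₁ y * R i₂ i₃ i₂ x)
      = ∑ i₂, ∑ i₃, ∑ i₁, R i₁ i₃ i₁ y * R i₂ i₃ i₂ x := rot3 _
    _ = ∑ i₂, ∑ i₃, ricci R i₃ y * R i₂ i₃ i₂ x := by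
        simp only [← Finset.sum_mul, tr1 R]
    _ = ∑ i₃, ∑ i₂, ricci R i₃ y * R i₂ i₃ i₂ x := Finset.sum_comm
    _ = ∑ i₃, ricci R i₃ y * ricci R i₃ x := by
        simp only [← Finset.mul_sum, tr1 R]
    _ = ∑ a, ricci R x a * ricci R y a := by
        exact Finset.sum_congr rfl fun a _ => by rw [rs R hP a x, rs R hP a y]; ring

theorem ev15 : (∑ i₁, ∑ i₂, ∑ i₃, R i₁ i₃ i₁ i₃ * R i₂ x i₂ y) = scal R * ricci R x y := by
  calc (∑ i₁, ∑ i₂, ∑ i₃, R i₁ i₃ i₁ i₃ * R i₂ x i₂ y)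
      = ∑ i₁, ∑ i₃, ∑ i₂, R i₁ i₃ i₁ i₃ * R i₂ x i₂ y := swap23 _
    _ = scal R * ricci R x y := by
        simp only [← Finset.mul_sum, ← Finset.sum_mul]
        rw [sc2, tr1]

theorem ev16 : (∑ i₁, ∑ i₂, ∑ i₃, R i₁ i₃ i₂ x * R i₁ i₃ i₂ y)
    = ∑ a, ∑ b, ∑ c, R x a b c * R y a b c := by
  calc (∑ i₁, ∑ i₂, ∑ i₃, R i₁ i₃ i₂ x * R i₁ i₃ i₂ y)
      = ∑ i₁, ∑ i₂, ∑ i₃, R x i₂ i₁ i₃ * R y i₂ i₁ i₃ := by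
        refine Finset.sum_congr rfl fun i₁ _ => Finset.sum_congr rfl fun i₂ _ =>
          Finset.sum_congr rfl fun i₃ _ => ?_
        rw [hP i₁ i₃ i₂ x, hP i₁ i₃ i₂ y, hA i₂ x i₁ i₃, hA i₂ y i₁ i₃]; ring
    _ = ∑ a, ∑ b, ∑ c, R x a b c * R y a b c := Finset.sum_comm

theorem ev17 : (∑ i₁, ∑ i₂, ∑ i₃, R i₁ i₃ i₂ i₃ * R i₁ x i₂ y)
    = ∑ a, ∑ b, ricci R a b * R x a y b := by
  calc (∑ i₁, ∑ i₂, ∑ i₃, R i₁ i₃ i₂ i₃ * R i₁ x i₂ y)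
      = ∑ i₁, ∑ i₂, ricci R i₁ i₂ * R i₁ x i₂ y := by
        simp only [← Finset.sum_mul, tr2 R hA hA']
    _ = ∑ a, ∑ b, ricci R a b * R x a y b := by
        refine Finset.sum_congr rfl fun a _ => Finset.sum_congr rfl fun b _ => ?_
        rw [hA a x b y, hA' x a b y]; ring

theorem ev18 : (∑ i₁, ∑ i₂, ∑ i₃, R i₁ i₃ i₂ i₃ * R i₁ y i₂ x)
    = ∑ a, ∑ b, ricci R a b * R x a y b := by
  calc (∑ i₁, ∑ i₂, ∑ i₃, R i₁ i₃ i₂ i₃ * R i₁ y i₂ x)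
      = ∑ i₁, ∑ i₂, ricci R i₁ i₂ * R i₁ y i₂ x := by
        simp only [← Finset.sum_mul, tr2 R hA hA']
    _ = ∑ i₂, ∑ i₁, ricci R i₁ i₂ * R i₁ y i₂ x := Finset.sum_comm
    _ = ∑ a, ∑ b, ricci R a b * R x a y b := by
        refine Finset.sum_congr rfl fun a _ => Finset.sum_congr rfl fun b _ => ?_
        rw [rs R hP b a, hP b y a x, hA a x b y, hA' x a b y]; ring
end evals

theorem pointwise {n : ℕ} (R : Fin n → Fin n → Fin n → Fin n → ℝ)
    (hA : ∀ i j k l, R i j k l = - R j i k l)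
    (hA' : ∀ i j k l, R i j k l = - R i j l k)
    (hP : ∀ i j k l, R i j k l = R k l i j)
    (i₁ i₂ i₃ x y : Fin n) :
    (1/16 : ℝ) * E24 ![i₁,i₂,i₃,x] (fun a₁ a₂ a₃ a₄ => E24 ![i₁,i₂,i₃,y]
      (fun b₁ b₂ b₃ b₄ => R a₁ a₂ b₁ b₂ * R a₃ a₄ b₃ b₄)) =
      2 * (R i₁ x i₁ y * (R i₂ i₃ i₂ i₃))
      + 2 * (R i₁ x i₂ i₃ * (R i₁ y i₂ i₃))
      + 2 * (R i₁ i₂ i₁ x * (R i₂ i₃ i₃ y))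
      + 2 * (R i₁ i₂ i₁ y * (R i₂ i₃ i₃ x))
      + 2 * (R i₁ i₂ i₁ i₂ * (R i₃ x i₃ y))
      - 2 * (R i₁ i₂ i₁ i₃ * (R i₂ x i₃ y))
      - 2 * (R i₁ i₂ i₁ i₃ * (R i₂ y i₃ x))
      - 2 * (R i₁ i₂ i₂ x * (R i₁ i₃ i₃ y))
      - 2 * (R i₁ i₂ i₂ y * (R i₁ i₃ i₃ x))
      + 2 * (R i₁ i₂ i₂ i₃ * (R i₁ x i₃ y))
      + 2 * (R i₁ i₂ i₂ i₃ * (R i₁ y i₃ x))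
      + 2 * (R i₁ i₂ i₃ x * (R i₁ i₂ i₃ y))
      - 2 * (R i₁ i₃ i₁ x * (R i₂ i₃ i₂ y))
      - 2 * (R i₁ i₃ i₁ y * (R i₂ i₃ i₂ x))
      + 2 * (R i₁ i₃ i₁ i₃ * (R i₂ x i₂ y))
      + 2 * (R i₁ i₃ i₂ x * (R i₁ i₃ i₂ y))
      - 2 * (R i₁ i₃ i₂ i₃ * (R i₁ x i₂ y))
      - 2 * (R i₁ i₃ i₂ i₃ * (R i₁ y i₂ x)) := by
  have s1_i₂i₁ : ∀ k l, R i₂ i₁ k l = - R i₁ i₂ k l := fun k l => hA i₂ i₁ k l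
  have s1_i₃i₁ : ∀ k l, R i₃ i₁ k l = - R i₁ i₃ k l := fun k l => hA i₃ i₁ k l
  have s1_xi₁ : ∀ k l, R x i₁ k l = - R i₁ x k l := fun k l => hA x i₁ k l
  have s1_yi₁ : ∀ k l, R y i₁ k l = - R i₁ y k l := fun k l => hA y i₁ k l
  have s1_i₃i₂ : ∀ k l, R i₃ i₂ k l = - R i₂ i₃ k l := fun k l => hA i₃ i₂ k l
  have s1_xi₂ : ∀ k l, R x i₂ k l = - R i₂ x k l := fun k l => hA x i₂ k l
  have s1_yi₂ : ∀ k l, R y i₂ k l = - R i₂ y k l := fun k l => hA y i₂ k l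
  have s1_xi₃ : ∀ k l, R x i₃ k l = - R i₃ x k l := fun k l => hA x i₃ k l
  have s1_yi₃ : ∀ k l, R y i₃ k l = - R i₃ y k l := fun k l => hA y i₃ k l
  have s1_yx : ∀ k l, R y x k l = - R x y k l := fun k l => hA y x k l
  have s2_i₂i₁ : ∀ k l, R k l i₂ i₁ = - R k l i₁ i₂ := fun k l => hA' k l i₂ i₁
  have s2_i₃i₁ : ∀ k l, R k l i₃ i₁ = - R k l i₁ i₃ := fun k l => hA' k l i₃ i₁
  have s2_xi₁ : ∀ k l, R k l x i₁ = - R k l i₁ x := fun k l => hA' k l x i₁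
  have s2_yi₁ : ∀ k l, R k l y i₁ = - R k l i₁ y := fun k l => hA' k l y i₁
  have s2_i₃i₂ : ∀ k l, R k l i₃ i₂ = - R k l i₂ i₃ := fun k l => hA' k l i₃ i₂
  have s2_xi₂ : ∀ k l, R k l x i₂ = - R k l i₂ x := fun k l => hA' k l x i₂
  have s2_yi₂ : ∀ k l, R k l y i₂ = - R k l i₂ y := fun k l => hA' k l y i₂
  have s2_xi₃ : ∀ k l, R k l x i₃ = - R k l i₃ x := fun k l => hA' k l x i₃
  have s2_yi₃ : ∀ k l, R k l y i₃ = - R k l i₃ y := fun k l => hA' k l y i₃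
  have s2_yx : ∀ k l, R k l y x = - R k l x y := fun k l => hA' k l y x
  have p_i1i3i1i2 : R i₁ i₃ i₁ i₂ = R i₁ i₂ i₁ i₃ := hP i₁ i₃ i₁ i₂
  have p_i1xi1i2 : R i₁ x i₁ i₂ = R i₁ i₂ i₁ x := hP i₁ x i₁ i₂
  have p_i1xi1i3 : R i₁ x i₁ i₃ = R i₁ i₃ i₁ x := hP i₁ x i₁ i₃
  have p_i1yi1i2 : R i₁ y i₁ i₂ = R i₁ i₂ i₁ y := hP i₁ y i₁ i₂
  have p_i1yi1i3 : R i₁ y i₁ i₃ = R i₁ i₃ i₁ y := hP i₁ y i₁ i₃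
  have p_i1yi1x : R i₁ y i₁ x = R i₁ x i₁ y := hP i₁ y i₁ x
  have p_i2i3i1i2 : R i₂ i₃ i₁ i₂ = R i₁ i₂ i₂ i₃ := hP i₂ i₃ i₁ i₂
  have p_i2i3i1i3 : R i₂ i₃ i₁ i₃ = R i₁ i₃ i₂ i₃ := hP i₂ i₃ i₁ i₃
  have p_i2i3i1x : R i₂ i₃ i₁ x = R i₁ x i₂ i₃ := hP i₂ i₃ i₁ x
  have p_i2i3i1y : R i₂ i₃ i₁ y = R i₁ y i₂ i₃ := hP i₂ i₃ i₁ y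
  have p_i2xi1i2 : R i₂ x i₁ i₂ = R i₁ i₂ i₂ x := hP i₂ x i₁ i₂
  have p_i2xi1i3 : R i₂ x i₁ i₃ = R i₁ i₃ i₂ x := hP i₂ x i₁ i₃
  have p_i2xi1x : R i₂ x i₁ x = R i₁ x i₂ x := hP i₂ x i₁ x
  have p_i2xi1y : R i₂ x i₁ y = R i₁ y i₂ x := hP i₂ x i₁ y
  have p_i2xi2i3 : R i₂ x i₂ i₃ = R i₂ i₃ i₂ x := hP i₂ x i₂ i₃
  have p_i2yi1i2 : R i₂ y i₁ i₂ = R i₁ i₂ i₂ y := hP i₂ y i₁ i₂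
  have p_i2yi1i3 : R i₂ y i₁ i₃ = R i₁ i₃ i₂ y := hP i₂ y i₁ i₃
  have p_i2yi1x : R i₂ y i₁ x = R i₁ x i₂ y := hP i₂ y i₁ x
  have p_i2yi1y : R i₂ y i₁ y = R i₁ y i₂ y := hP i₂ y i₁ y
  have p_i2yi2i3 : R i₂ y i₂ i₃ = R i₂ i₃ i₂ y := hP i₂ y i₂ i₃
  have p_i2yi2x : R i₂ y i₂ x = R i₂ x i₂ y := hP i₂ y i₂ x
  have p_i3xi1i2 : R i₃ x i₁ i₂ = R i₁ i₂ i₃ x := hP i₃ x i₁ i₂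
  have p_i3xi1i3 : R i₃ x i₁ i₃ = R i₁ i₃ i₃ x := hP i₃ x i₁ i₃
  have p_i3xi1x : R i₃ x i₁ x = R i₁ x i₃ x := hP i₃ x i₁ x
  have p_i3xi1y : R i₃ x i₁ y = R i₁ y i₃ x := hP i₃ x i₁ y
  have p_i3xi2i3 : R i₃ x i₂ i₃ = R i₂ i₃ i₃ x := hP i₃ x i₂ i₃
  have p_i3xi2x : R i₃ x i₂ x = R i₂ x i₃ x := hP i₃ x i₂ x
  have p_i3xi2y : R i₃ x i₂ y = R i₂ y i₃ x := hP i₃ x i₂ y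
  have p_i3yi1i2 : R i₃ y i₁ i₂ = R i₁ i₂ i₃ y := hP i₃ y i₁ i₂
  have p_i3yi1i3 : R i₃ y i₁ i₃ = R i₁ i₃ i₃ y := hP i₃ y i₁ i₃
  have p_i3yi1x : R i₃ y i₁ x = R i₁ x i₃ y := hP i₃ y i₁ x
  have p_i3yi1y : R i₃ y i₁ y = R i₁ y i₃ y := hP i₃ y i₁ y
  have p_i3yi2i3 : R i₃ y i₂ i₃ = R i₂ i₃ i₃ y := hP i₃ y i₂ i₃
  have p_i3yi2x : R i₃ y i₂ x = R i₂ x i₃ y := hP i₃ y i₂ x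
  have p_i3yi2y : R i₃ y i₂ y = R i₂ y i₃ y := hP i₃ y i₂ y
  have p_i3yi3x : R i₃ y i₃ x = R i₃ x i₃ y := hP i₃ y i₃ x
  have p_xyi1i2 : R x y i₁ i₂ = R i₁ i₂ x y := hP x y i₁ i₂
  have p_xyi1i3 : R x y i₁ i₃ = R i₁ i₃ x y := hP x y i₁ i₃
  have p_xyi1x : R x y i₁ x = R i₁ x x y := hP x y i₁ x
  have p_xyi1y : R x y i₁ y = R i₁ y x y := hP x y i₁ y
  have p_xyi2i3 : R x y i₂ i₃ = R i₂ i₃ x y := hP x y i₂ i₃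
  have p_xyi2x : R x y i₂ x = R i₂ x x y := hP x y i₂ x
  have p_xyi2y : R x y i₂ y = R i₂ y x y := hP x y i₂ y
  have p_xyi3x : R x y i₃ x = R i₃ x x y := hP x y i₃ x
  have p_xyi3y : R x y i₃ y = R i₃ y x y := hP x y i₃ y
  simp only [E24,
    show (![i₁,i₂,i₃,x] : Fin 4 → Fin n) 0 = i₁ from rfl,
    show (![i₁,i₂,i₃,x] : Fin 4 → Fin n) 1 = i₂ from rfl,
    show (![i₁,i₂,i₃,x] : Fin 4 → Fin n) 2 = i₃ from rfl,
    show (![i₁,i₂,i₃,x] : Fin 4 → Fin n) 3 = x from rfl,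
    show (![i₁,i₂,i₃,y] : Fin 4 → Fin n) 0 = i₁ from rfl,
    show (![i₁,i₂,i₃,y] : Fin 4 → Fin n) 1 = i₂ from rfl,
    show (![i₁,i₂,i₃,y] : Fin 4 → Fin n) 2 = i₃ from rfl,
    show (![i₁,i₂,i₃,y] : Fin 4 → Fin n) 3 = y from rfl,
    s1_i₂i₁, s1_i₃i₁, s1_xi₁, s1_yi₁, s1_i₃i₂, s1_xi₂, s1_yi₂, s1_xi₃, s1_yi₃, s1_yx, s2_i₂i₁, s2_i₃i₁, s2_xi₁, s2_yi₁, s2_i₃i₂, s2_xi₂, s2_yi₂, s2_xi₃, s2_yi₃, s2_yx, p_i1i3i1i2, p_i1xi1i2, p_i1xi1i3, p_i1yi1i2, p_i1yi1i3, p_i1yi1x, p_i2i3i1i2, p_i2i3i1i3, p_i2i3i1x, p_i2i3i1y, p_i2xi1i2, p_i2xi1i3, p_i2xi1x, p_i2xi1y, p_i2xi2i3, p_i2yi1i2, p_i2yi1i3, p_i2yi1x, p_i2yi1y, p_i2yi2i3, p_i2yi2x, p_i3xi1i2, p_i3xi1i3, p_i3xi1x, p_i3xi1y, p_i3xi2i3,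 p_i3xi2x, p_i3xi2y, p_i3yi1i2, p_i3yi1i3, p_i3yi1x, p_i3yi1y, p_i3yi2i3, p_i3yi2x, p_i3yi2y, p_i3yi3x, p_xyi1i2, p_xyi1i3, p_xyi1x, p_xyi1y, p_xyi2i3, p_xyi2x, p_xyi2y, p_xyi3x, p_xyi3y]
  ring

theorem tr1' {n : ℕ} (R : Fin n → Fin n → Fin n → Fin n → ℝ) :
    ∀ a b, (∑ i, R i a i b) = ricci R a b := fun _ _ => rfl

theorem rs' {n : ℕ} (R : Fin n → Fin n → Fin n → Fin n → ℝ)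
    (hP : ∀ i j k l, R i j k l = R k l i j) :
    ∀ a b, ricci R a b = ricci R b a := fun a b =>
  Finset.sum_congr rfl fun i _ => hP i a i b

theorem rhs_eval {n : ℕ} (R : Fin n → Fin n → Fin n → Fin n → ℝ)
    (hA : ∀ i j k l, R i j k l = - R j i k l)
    (hA' : ∀ i j k l, R i j k l = - R i j l k)
    (hP : ∀ i j k l, R i j k l = R k l i j) (x y : Fin n) :
    (∑ i, comp R (dd R) i x i y) =
      (1/2 : ℝ) * ((∑ a, ∑ b, ∑ c, R x a b c * R y a b c)
        - 2 * (∑ a, ∑ b, ricci R a b * R x a y b)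
        - 2 * (∑ a, ricci R x a * ricci R y a)
        + scal R * ricci R x y) := by
  have step1 : (∑ i, comp R (dd R) i x i y)
      = (1/2 : ℝ) * ∑ i, ∑ p, ∑ q, R i x p q * dd R p q i y := by
    simp only [comp, ← Finset.mul_sum]
  have split : (∑ i, ∑ p, ∑ q, R i x p q * dd R p q i y)
      = (∑ i, ∑ p, ∑ q, R i x p q * R p q i y)
      - (∑ i, ∑ p, ∑ q, R i x p q * (gE n p i * ricci R q y))
      + (∑ i, ∑ p, ∑ q, R i x p q * (gE n p y * ricci R q i))
      - (∑ i, ∑ p, ∑ q, R i x p q * (gE n q y * ricci R p i))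
      + (∑ i, ∑ p, ∑ q, R i x p q * (gE n q i * ricci R p y))
      + (1/2 : ℝ) * scal R * ((∑ i, ∑ p, ∑ q, R i x p q * (gE n p i * gE n q y))
          - (∑ i, ∑ p, ∑ q, R i x p q * (gE n p y * gE n q i))) := by
    simp only [Finset.mul_sum, ← Finset.sum_add_distrib, ← Finset.sum_sub_distrib]
    refine Finset.sum_congr rfl fun i _ => Finset.sum_congr rfl fun p _ =>
      Finset.sum_congr rfl fun q _ => ?_
    simp only [dd, KN]; ring
  have hT1 : (∑ i, ∑ p, ∑ q, R i x p q * R p q i y)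
      = ∑ a, ∑ b, ∑ c, R x a b c * R y a b c := by
    refine Finset.sum_congr rfl fun i _ => Finset.sum_congr rfl fun p _ =>
      Finset.sum_congr rfl fun q _ => ?_
    rw [hP p q i y, hA i x p q, hA i y p q]; ring
  have hT2 : (∑ i, ∑ p, ∑ q, R i x p q * (gE n p i * ricci R q y))
      = ∑ a, ricci R x a * ricci R y a := by
    calc (∑ i, ∑ p, ∑ q, R i x p q * (gE n p i * ricci R q y))
        = ∑ i, ∑ q, R i x i q * ricci R q y := by
          simp only [gE, ite_mul, mul_ite, one_mul, zero_mul, mul_one, mul_zero,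
            Finset.sum_ite_irrel, Finset.sum_const_zero, Finset.sum_ite_eq', Finset.mem_univ, if_true]
      _ = ∑ q, ∑ i, R i x i q * ricci R q y := Finset.sum_comm
      _ = ∑ q, ricci R x q * ricci R q y := by
          simp only [← Finset.sum_mul, tr1' R]
      _ = ∑ a, ricci R x a * ricci R y a := by
          exact Finset.sum_congr rfl fun a _ => by rw [rs' R hP a y]
  have hT3 : (∑ i, ∑ p, ∑ q, R i x p q * (gE n p y * ricci R q i))
      = -(∑ a, ∑ b, ricci R a b * R x a y b) := by
    calc (∑ i, ∑ p, ∑ q, R i x p q * (gE n p y * ricci R q i))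
        = ∑ i, ∑ q, R i x y q * ricci R q i := by
          simp only [gE, ite_mul, mul_ite, one_mul, zero_mul, mul_one, mul_zero,
            Finset.sum_ite_irrel, Finset.sum_const_zero, Finset.sum_ite_eq', Finset.mem_univ, if_true]
      _ = -(∑ a, ∑ b, ricci R a b * R x a y b) := by
          simp only [← Finset.sum_neg_distrib]
          refine Finset.sum_congr rfl fun a _ => Finset.sum_congr rfl fun b _ => ?_
          rw [rs' R hP b a, hA a x y b, hA' x a y b]; ring
  have hT4 : (∑ i, ∑ p, ∑ q, R i x p q * (gE n q y * ricci R p i))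
      = ∑ a, ∑ b, ricci R a b * R x a y b := by
    calc (∑ i, ∑ p, ∑ q, R i x p q * (gE n q y * ricci R p i))
        = ∑ i, ∑ p, R i x p y * ricci R p i := by
          simp only [gE, ite_mul, mul_ite, one_mul, zero_mul, mul_one, mul_zero,
            Finset.sum_ite_irrel, Finset.sum_const_zero, Finset.sum_ite_eq', Finset.mem_univ, if_true]
      _ = ∑ a, ∑ b, ricci R a b * R x a y b := by
          refine Finset.sum_congr rfl fun a _ => Finset.sum_congr rfl fun b _ => ?_
          rw [rs' R hP b a, hA a x b y, hA' x a b y]; ring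
  have hT5 : (∑ i, ∑ p, ∑ q, R i x p q * (gE n q i * ricci R p y))
      = -(∑ a, ricci R x a * ricci R y a) := by
    calc (∑ i, ∑ p, ∑ q, R i x p q * (gE n q i * ricci R p y))
        = ∑ i, ∑ p, R i x p i * ricci R p y := by
          simp only [gE, ite_mul, mul_ite, one_mul, zero_mul, mul_one, mul_zero,
            Finset.sum_ite_irrel, Finset.sum_const_zero, Finset.sum_ite_eq', Finset.mem_univ, if_true]
      _ = ∑ p, ∑ i, R i x p i * ricci R p y := Finset.sum_comm
      _ = ∑ p, -(ricci R x p) * ricci R p y := by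
          refine Finset.sum_congr rfl fun p _ => ?_
          rw [← Finset.sum_mul]
          congr 1
          rw [ricci, ← Finset.sum_neg_distrib]
          exact Finset.sum_congr rfl fun i _ => by rw [hA' i x p i]
      _ = -(∑ a, ricci R x a * ricci R y a) := by
          simp only [← Finset.sum_neg_distrib]
          refine Finset.sum_congr rfl fun a _ => ?_
          rw [rs' R hP a y]; ring
  have hT6 : (∑ i, ∑ p, ∑ q, R i x p q * (gE n p i * gE n q y)) = ricci R x y := by
    calc (∑ i, ∑ p, ∑ q, R i x p q * (gE n p i * gE n q y))
        = ∑ i, R i x i y := by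
          simp only [gE, ite_mul, mul_ite, one_mul, zero_mul, mul_one, mul_zero,
            Finset.sum_ite_irrel, Finset.sum_const_zero, Finset.sum_ite_eq', Finset.mem_univ, if_true]
      _ = ricci R x y := rfl
  have hT7 : (∑ i, ∑ p, ∑ q, R i x p q * (gE n p y * gE n q i)) = -(ricci R x y) := by
    calc (∑ i, ∑ p, ∑ q, R i x p q * (gE n p y * gE n q i))
        = ∑ i, R i x y i := by
          simp only [gE, ite_mul, mul_ite, one_mul, zero_mul, mul_one, mul_zero,
            Finset.sum_ite_irrel, Finset.sum_const_zero, Finset.sum_ite_eq', Finset.mem_univ, if_true]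
      _ = -(ricci R x y) := by
          rw [ricci, ← Finset.sum_neg_distrib]
          exact Finset.sum_congr rfl fun i _ => by rw [hA' i x y i]
  rw [step1, split, hT1, hT2, hT3, hT4, hT5, hT6, hT7]
  ring

theorem lhs_eval {n : ℕ} (R : Fin n → Fin n → Fin n → Fin n → ℝ)
    (hA : ∀ i j k l, R i j k l = - R j i k l)
    (hA' : ∀ i j k l, R i j k l = - R i j l k)
    (hP : ∀ i j k l, R i j k l = R k l i j) (x y : Fin n) :
    cccRsq R x y =
      6 * (∑ a, ∑ b, ∑ c, R x a b c * R y a b c)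
      - 12 * (∑ a, ∑ b, ricci R a b * R x a y b)
      - 12 * (∑ a, ricci R x a * ricci R y a)
      + 6 * (scal R * ricci R x y) := by
  calc cccRsq R x y
      = ∑ i₁, ∑ i₂, ∑ i₃,
        (2 * (R i₁ x i₁ y * (R i₂ i₃ i₂ i₃))
        + 2 * (R i₁ x i₂ i₃ * (R i₁ y i₂ i₃))
        + 2 * (R i₁ i₂ i₁ x * (R i₂ i₃ i₃ y))
        + 2 * (R i₁ i₂ i₁ y * (R i₂ i₃ i₃ x))
        + 2 * (R i₁ i₂ i₁ i₂ * (R i₃ x i₃ y))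
        - 2 * (R i₁ i₂ i₁ i₃ * (R i₂ x i₃ y))
        - 2 * (R i₁ i₂ i₁ i₃ * (R i₂ y i₃ x))
        - 2 * (R i₁ i₂ i₂ x * (R i₁ i₃ i₃ y))
        - 2 * (R i₁ i₂ i₂ y * (R i₁ i₃ i₃ x))
        + 2 * (R i₁ i₂ i₂ i₃ * (R i₁ x i₃ y))
        + 2 * (R i₁ i₂ i₂ i₃ * (R i₁ y i₃ x))
        + 2 * (R i₁ i₂ i₃ x * (R i₁ i₂ i₃ y))
        - 2 * (R i₁ i₃ i₁ x * (R i₂ i₃ i₂ y))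
        - 2 * (R i₁ i₃ i₁ y * (R i₂ i₃ i₂ x))
        + 2 * (R i₁ i₃ i₁ i₃ * (R i₂ x i₂ y))
        + 2 * (R i₁ i₃ i₂ x * (R i₁ i₃ i₂ y))
        - 2 * (R i₁ i₃ i₂ i₃ * (R i₁ x i₂ y))
        - 2 * (R i₁ i₃ i₂ i₃ * (R i₁ y i₂ x))) := by
        simp only [cccRsq, Rsq_eq, pointwise R hA hA' hP]
    _ = 2 * (∑ i₁, ∑ i₂, ∑ i₃, R i₁ x i₁ y * (R i₂ i₃ i₂ i₃))
        + 2 * (∑ i₁, ∑ i₂, ∑ i₃, R i₁ x i₂ i₃ * (R i₁ y i₂ i₃))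
        + 2 * (∑ i₁, ∑ i₂, ∑ i₃, R i₁ i₂ i₁ x * (R i₂ i₃ i₃ y))
        + 2 * (∑ i₁, ∑ i₂, ∑ i₃, R i₁ i₂ i₁ y * (R i₂ i₃ i₃ x))
        + 2 * (∑ i₁, ∑ i₂, ∑ i₃, R i₁ i₂ i₁ i₂ * (R i₃ x i₃ y))
        - 2 * (∑ i₁, ∑ i₂, ∑ i₃, R i₁ i₂ i₁ i₃ * (R i₂ x i₃ y))
        - 2 * (∑ i₁, ∑ i₂, ∑ i₃, R i₁ i₂ i₁ i₃ * (R i₂ y i₃ x))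
        - 2 * (∑ i₁, ∑ i₂, ∑ i₃, R i₁ i₂ i₂ x * (R i₁ i₃ i₃ y))
        - 2 * (∑ i₁, ∑ i₂, ∑ i₃, R i₁ i₂ i₂ y * (R i₁ i₃ i₃ x))
        + 2 * (∑ i₁, ∑ i₂, ∑ i₃, R i₁ i₂ i₂ i₃ * (R i₁ x i₃ y))
        + 2 * (∑ i₁, ∑ i₂, ∑ i₃, R i₁ i₂ i₂ i₃ * (R i₁ y i₃ x))
        + 2 * (∑ i₁, ∑ i₂, ∑ i₃, R i₁ i₂ i₃ x * (R i₁ i₂ i₃ y))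
        - 2 * (∑ i₁, ∑ i₂, ∑ i₃, R i₁ i₃ i₁ x * (R i₂ i₃ i₂ y))
        - 2 * (∑ i₁, ∑ i₂, ∑ i₃, R i₁ i₃ i₁ y * (R i₂ i₃ i₂ x))
        + 2 * (∑ i₁, ∑ i₂, ∑ i₃, R i₁ i₃ i₁ i₃ * (R i₂ x i₂ y))
        + 2 * (∑ i₁, ∑ i₂, ∑ i₃, R i₁ i₃ i₂ x * (R i₁ i₃ i₂ y))
        - 2 * (∑ i₁, ∑ i₂, ∑ i₃, R i₁ i₃ i₂ i₃ * (R i₁ x i₂ y))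
        - 2 * (∑ i₁, ∑ i₂, ∑ i₃, R i₁ i₃ i₂ i₃ * (R i₁ y i₂ x)) := by
        simp only [Finset.mul_sum, ← Finset.sum_add_distrib, ← Finset.sum_sub_distrib]
    _ = _ := by
        rw [ev1 R hA hA' hP x y, ev2 R hA hA' hP x y, ev3 R hA hA' hP x y, ev4 R hA hA' hP x y, ev5 R hA hA' hP x y, ev6 R hA hA' hP x y, ev7 R hA hA' hP x y, ev8 R hA hA' hP x y, ev9 R hA hA' hP x y, ev10 R hA hA' hP x y, ev11 R hA hA' hP x y, ev12 R hA hA' hP x y, ev13 R hA hA' hP x y, ev14 R hA hA' hP x y, ev15 R hA hA' hP x y, ev16 R hA hA' hP x y, ev17 R hA hA' hP x y, ev18 R hA hA' hP x y]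
        ring


/-- the second Lovelock tensor T₄ = (c⁴R²/4!)·g − c³R²/3! is obtained
from the four-index tensor R∘D: c³R² = 12·c(R∘D) and hence
T₄ = (1/2)c²(R∘D)·g − 2c(R∘D). -/
theorem second_lovelock_four_index {n : ℕ} (hn : 4 ≤ n)
    (R : Fin n → Fin n → Fin n → Fin n → ℝ)
    (hA : ∀ i j k l, R i j k l = - R j i k l)
    (hA' : ∀ i j k l, R i j k l = - R i j l k)
    (hP : ∀ i j k l, R i j k l = R k l i j)
    (hB : ∀ i j k l, R i j k l + R j k i l + R k i j l = 0) :
    (∀ x y : Fin n, cccRsq R x y = 12 * ∑ i, comp R (dd R) i x i y) ∧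
    (∀ x y : Fin n,
      ((∑ z, cccRsq R z z) / (Nat.factorial 4 : ℝ)) * gE n x y
          - cccRsq R x y / (Nat.factorial 3 : ℝ)
        = (1/2 : ℝ) * (∑ z, ∑ i, comp R (dd R) i z i z) * gE n x y
          - 2 * ∑ i, comp R (dd R) i x i y) := by
  have key : ∀ x y : Fin n, cccRsq R x y = 12 * ∑ i, comp R (dd R) i x i y := by
    intro x y
    rw [lhs_eval R hA hA' hP x y, rhs_eval R hA hA' hP x y]
    ring
  refine ⟨key, fun x y => ?_⟩
  simp only [key]
  rw [← Finset.mul_sum]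
  norm_num [Nat.factorial]
  ring

end
end DD
end
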